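/- arXiv:2010.02797 — 7 statements merged into one kernel-verified Lean document; each statement's English description precedes it below -/
import Mathlib

section
/- Let n ≥ 4, L > 0, let c : ℝ → ℝⁿ be a smooth L-periodic unit-speed curve with unit tangent e₁ := c', and let e₂ : ℝ → ℝⁿ be a smooth L-periodic map with ‖e₂(σ)‖ = 1 and ⟨e₂(σ), e₁(σ)⟩ = 0 for all σ. Then there exists a smooth L-periodic map e₃ : ℝ → ℝⁿ with ‖e₃(σ)‖ = 1, ⟨e₃(σ), e₁(σ)⟩ = 0 and ⟨e₃(σ), e₂(σ)⟩ = 0 for all σ. -/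
open scoped RealInnerProductSpace
open MeasureTheory Set

set_option maxHeartbeats 1000000 in
/-- Existence of a third orthonormal frame field along a closed curve in `ℝⁿ`, `n ≥ 4`. -/
theorem stmt_2 (n : ℕ) (hn : 4 ≤ n) (L : ℝ) (hL : 0 < L)
    (c : ℝ → EuclideanSpace ℝ (Fin n)) (hc : ContDiff ℝ (⊤ : ℕ∞) c)
    (hcper : ∀ σ : ℝ, c (σ + L) = c σ)
    (hcunit : ∀ σ : ℝ, ‖deriv c σ‖ = 1)
    (e₂ : ℝ → EuclideanSpace ℝ (Fin n)) (he₂ : ContDiff ℝ (⊤ : ℕ∞) e₂)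
    (he₂per : ∀ σ : ℝ, e₂ (σ + L) = e₂ σ)
    (he₂unit : ∀ σ : ℝ, ‖e₂ σ‖ = 1)
    (he₂orth : ∀ σ : ℝ, ⟪e₂ σ, deriv c σ⟫ = 0) :
    ∃ e₃ : ℝ → EuclideanSpace ℝ (Fin n),
      ContDiff ℝ (⊤ : ℕ∞) e₃ ∧ (∀ σ : ℝ, e₃ (σ + L) = e₃ σ) ∧
      (∀ σ : ℝ, ‖e₃ σ‖ = 1) ∧ (∀ σ : ℝ, ⟪e₃ σ, deriv c σ⟫ = 0) ∧
      (∀ σ : ℝ, ⟪e₃ σ, e₂ σ⟫ = 0) := by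
  classical
  set e₁ : ℝ → EuclideanSpace ℝ (Fin n) := deriv c with he₁def
  have hc' : ContDiff ℝ (((⊤ : ℕ∞) : WithTop ℕ∞) + 1) c :=
    hc.of_le (le_of_eq (by rw [← WithTop.coe_one, ← WithTop.coe_add, top_add]))
  have he₁ : ContDiff ℝ (⊤ : ℕ∞) e₁ := (contDiff_succ_iff_deriv.mp hc').2.2
  have he₁per : ∀ σ, e₁ (σ + L) = e₁ σ := by
    intro σ
    have h1 : (fun t => c (t + L)) = c := funext hcper
    calc e₁ (σ + L) = deriv (fun t => c (t + L)) σ := (deriv_comp_add_const c L σ).symm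
      _ = e₁ σ := by rw [h1]
  -- indices
  have h0n : (0 : ℕ) < n := by omega
  have h1n : (1 : ℕ) < n := by omega
  have h2n : (2 : ℕ) < n := by omega
  have h3n : (3 : ℕ) < n := by omega
  set i₀ : Fin n := ⟨0, h0n⟩
  set i₁ : Fin n := ⟨1, h1n⟩
  set i₂ : Fin n := ⟨2, h2n⟩
  set i₃ : Fin n := ⟨3, h3n⟩
  -- the map whose range contains all planes span{e₁ σ, e₂ σ}
  set q : EuclideanSpace ℝ (Fin n) →L[ℝ] ℝ × ℝ × ℝ :=
    (EuclideanSpace.proj i₀).prod ((EuclideanSpace.proj i₁).prod (EuclideanSpace.proj i₂)) with hqdef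
  set h : ℝ × ℝ × ℝ → EuclideanSpace ℝ (Fin n) :=
    fun p => p.2.1 • e₁ p.1 + p.2.2 • e₂ p.1 with hhdef
  have hh : ContDiff ℝ (⊤ : ℕ∞) h := by
    apply ContDiff.add
    · exact contDiff_snd.fst.smul (he₁.comp contDiff_fst)
    · exact contDiff_snd.snd.smul (he₂.comp contDiff_fst)
  set g : EuclideanSpace ℝ (Fin n) → EuclideanSpace ℝ (Fin n) := h ∘ q with hgdef
  have hg : ContDiff ℝ (⊤ : ℕ∞) g := hh.comp q.contDiff
  have hgdiff : Differentiable ℝ g := hg.differentiable (by simp)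
  have hfd : ∀ x, fderiv ℝ g x =
      (fderiv ℝ h (q x)).comp (q : EuclideanSpace ℝ (Fin n) →L[ℝ] ℝ × ℝ × ℝ) := by
    intro x
    have := fderiv_comp x (hh.differentiable (by simp) (q x))
      q.differentiableAt
    rw [hgdef, this, q.fderiv]
  have hdet : ∀ x, (fderiv ℝ g x).det = 0 := by
    intro x
    by_contra hd
    have hinj := (LinearMap.equivOfDetNeZero
      ((fderiv ℝ g x) : EuclideanSpace ℝ (Fin n) →ₗ[ℝ] EuclideanSpace ℝ (Fin n)) hd).injective
    set v : EuclideanSpace ℝ (Fin n) := EuclideanSpace.single i₃ 1 with hvdef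
    have hqv : q v = 0 := by
      have h03 : i₀ ≠ i₃ := by simp [i₀, i₃, Fin.ext_iff]
      have h13 : i₁ ≠ i₃ := by simp [i₁, i₃, Fin.ext_iff]
      have h23 : i₂ ≠ i₃ := by simp [i₂, i₃, Fin.ext_iff]
      simp [hqdef, hvdef, EuclideanSpace.single_apply, Prod.ext_iff, h03, h13, h23]
    have hDv : (fderiv ℝ g x) v = 0 := by
      rw [hfd x]
      simp [ContinuousLinearMap.comp_apply, hqv]
    have hv0 : v = 0 := by
      apply hinj
      simpa using hDv -- 
    have : (1 : ℝ) = 0 := by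
      have := congrArg (fun y : EuclideanSpace ℝ (Fin n) => y i₃) hv0
      simpa [hvdef, EuclideanSpace.single_apply] using this
    norm_num at this
  have himg : volume (g '' (univ : Set (EuclideanSpace ℝ (Fin n)))) = 0 :=
    addHaar_image_eq_zero_of_det_fderivWithin_eq_zero volume
      (fun x _ => ((hgdiff x).hasFDerivAt).hasFDerivWithinAt)
      (fun x _ => hdet x)
  have hrange : range g ≠ univ := by
    intro hR
    rw [image_univ, hR] at himg
    exact isOpen_univ.measure_ne_zero volume ⟨0, trivial⟩ himg
  obtain ⟨u, hu⟩ := (ne_univ_iff_exists_notMem _).mp hrange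
  -- `u` is not in any of the planes
  have hu' : ∀ (σ a b : ℝ), u ≠ a • e₁ σ + b • e₂ σ := by
    intro σ a b huab
    apply hu
    refine ⟨EuclideanSpace.single i₀ σ + EuclideanSpace.single i₁ a
      + EuclideanSpace.single i₂ b, ?_⟩
    have h01 : i₀ ≠ i₁ := by simp [i₀, i₁, Fin.ext_iff]
    have h02 : i₀ ≠ i₂ := by simp [i₀, i₂, Fin.ext_iff]
    have h12 : i₁ ≠ i₂ := by simp [i₁, i₂, Fin.ext_iff]
    simp only [hgdef, hqdef, Function.comp_apply, ContinuousLinearMap.prod_apply,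
      PiLp.proj_apply, hhdef]
    simp [EuclideanSpace.single_apply, h01, h02, h12, h01.symm, h02.symm, h12.symm, huab]
  -- orthonormality facts
  have he₁unit : ∀ σ, ⟪e₁ σ, e₁ σ⟫ = 1 := by
    intro σ
    rw [real_inner_self_eq_norm_mul_norm]
    rw [he₁def]
    rw [hcunit σ]; norm_num
  have he₂unit' : ∀ σ, ⟪e₂ σ, e₂ σ⟫ = 1 := by
    intro σ
    rw [real_inner_self_eq_norm_mul_norm, he₂unit σ]; norm_num
  have he₁₂ : ∀ σ, ⟪e₁ σ, e₂ σ⟫ = 0 := by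
    intro σ
    rw [real_inner_comm]
    exact he₂orth σ
  -- the projected vector
  set w : ℝ → EuclideanSpace ℝ (Fin n) :=
    fun σ => u - ⟪u, e₁ σ⟫ • e₁ σ - ⟪u, e₂ σ⟫ • e₂ σ with hwdef
  have hw0 : ∀ σ, w σ ≠ 0 := by
    intro σ hzero
    apply hu' σ ⟪u, e₁ σ⟫ ⟪u, e₂ σ⟫
    rw [hwdef] at hzero
    simp only at hzero
    rw [sub_sub, sub_eq_zero] at hzero
    exact hzero
  have hwsmooth : ContDiff ℝ (⊤ : ℕ∞) w :=
    ((contDiff_const.sub ((ContDiff.inner ℝ contDiff_const he₁).smul he₁)).sub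
      ((ContDiff.inner ℝ contDiff_const he₂).smul he₂))
  have hwper : ∀ σ, w (σ + L) = w σ := by
    intro σ
    rw [hwdef]
    simp only [he₁per σ, he₂per σ]
  have hw1 : ∀ σ, ⟪w σ, e₁ σ⟫ = 0 := by
    intro σ
    rw [hwdef]
    simp only [inner_sub_left, real_inner_smul_left]
    rw [he₁unit σ, he₂orth σ]
    ring
  have hw2 : ∀ σ, ⟪w σ, e₂ σ⟫ = 0 := by
    intro σ
    rw [hwdef]
    simp only [inner_sub_left, real_inner_smul_left]
    rw [he₂unit' σ, he₁₂ σ]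
    ring
  have hwnorm : ∀ σ, ‖w σ‖ ≠ 0 := fun σ => norm_ne_zero_iff.mpr (hw0 σ)
  refine ⟨fun σ => (‖w σ‖)⁻¹ • w σ, ?_, ?_, ?_, ?_, ?_⟩
  · exact ((hwsmooth.norm ℝ hw0).inv hwnorm).smul hwsmooth
  · intro σ
    show ‖w (σ + L)‖⁻¹ • w (σ + L) = ‖w σ‖⁻¹ • w σ
    rw [hwper σ]
  · intro σ
    rw [norm_smul, norm_inv, norm_norm, inv_mul_cancel₀ (hwnorm σ)]
  · intro σ
    rw [real_inner_smul_left]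
    have : ⟪w σ, deriv c σ⟫ = 0 := hw1 σ
    rw [this, mul_zero]
  · intro σ
    rw [real_inner_smul_left, hw2 σ, mul_zero]
end

section
/- Let n ≥ 3, L > 0, let c : ℝ → ℝⁿ be a smooth L-periodic unit-speed curve with e₁ := c', let e₂, e₃ : ℝ → ℝⁿ be smooth L-periodic maps such that e₁(σ), e₂(σ), e₃(σ) are orthonormal for every σ, and let γ = (x, y) : [0, Λ] → ℝ² be a smooth unit-speed curve with |γ(s)| ≤ 2 for all s. Then there exist ε̄ > 0 and C > 0 such that for every ε ∈ (0, ε̄) and every (σ, s), the area element of the patch S_ε satisfies |√(g₁₁ g₂₂ − g₁₂²) − ε| ≤ C ε². -/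
open scoped RealInnerProductSpace

/-- A continuous periodic function is globally bounded in norm. -/
lemma stmt_5_aux_bound {E : Type*} [NormedAddCommGroup E] {f : ℝ → E} {L : ℝ}
    (hL : 0 < L) (hf : Continuous f) (hper : ∀ σ : ℝ, f (σ + L) = f σ) :
    ∃ M : ℝ, 0 ≤ M ∧ ∀ σ : ℝ, ‖f σ‖ ≤ M := by
  have hper' : Function.Periodic f L := hper
  obtain ⟨σ₀, -, hσ₀⟩ := isCompact_Icc.exists_isMaxOn (Set.nonempty_Icc.2 hL.le)
    (hf.norm.continuousOn : ContinuousOn (fun σ => ‖f σ‖) (Set.Icc 0 L))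
  refine ⟨‖f σ₀‖, norm_nonneg _, fun σ => ?_⟩
  obtain ⟨τ, hτ, hfτ⟩ := hper'.exists_mem_Ico₀ hL σ
  rw [hfτ]
  exact hσ₀ (Set.mem_Icc.2 ⟨hτ.1, hτ.2.le⟩)

/-- The derivative of a periodic function is periodic. -/
lemma stmt_5_aux_deriv_periodic {E : Type*} [NormedAddCommGroup E] [NormedSpace ℝ E]
    {f : ℝ → E} {L : ℝ} (hper : ∀ σ : ℝ, f (σ + L) = f σ) :
    ∀ σ : ℝ, deriv f (σ + L) = deriv f σ := by
  intro σ
  have h : (fun t : ℝ => f (t + L)) = f := funext hper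
  rw [← deriv_comp_add_const f L σ, h]

/-- Square-root estimate: if `D` is within `C ε³` of `ε²`, then `√D` is within `C ε²` of `ε`. -/
lemma stmt_5_aux_sqrt {ε C D : ℝ} (hε : 0 < ε) (hεC : C * ε < 1) (hC0 : 0 < C)
    (hlow : ε ^ 2 - C * ε ^ 3 ≤ D) (hup : D ≤ ε ^ 2 + C * ε ^ 3) :
    |Real.sqrt D - ε| ≤ C * ε ^ 2 := by
  rw [abs_le]
  constructor
  · rcases le_or_gt (ε - C * ε ^ 2) 0 with h | h
    · linarith [Real.sqrt_nonneg D]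
    · have h2' : (ε - C * ε ^ 2) ^ 2 ≤ D := by
        nlinarith [mul_nonneg (sub_nonneg.2 hεC.le)
          (mul_nonneg hC0.le (pow_nonneg hε.le 3))]
      have h3 := Real.sqrt_le_sqrt h2'
      rw [Real.sqrt_sq h.le] at h3
      linarith
  · have h1' : D ≤ (ε + C * ε ^ 2) ^ 2 := by
      nlinarith [mul_nonneg hC0.le (pow_nonneg hε.le 3),
        mul_nonneg (mul_nonneg hC0.le hC0.le) (pow_nonneg hε.le 4)]
    have h3 := Real.sqrt_le_sqrt h1'
    rw [Real.sqrt_sq (by positivity)] at h3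
    linarith

set_option maxHeartbeats 4000000 in
/-- Area element asymptotics of the tube patch:
`|√(g₁₁ g₂₂ - g₁₂²) - ε| ≤ C ε²` for all small `ε`. -/
theorem stmt_5 (n : ℕ) (hn : 3 ≤ n) (L : ℝ) (hL : 0 < L)
    (c e₂ e₃ : ℝ → EuclideanSpace ℝ (Fin n))
    (hc : ContDiff ℝ (⊤ : ℕ∞) c) (he₂ : ContDiff ℝ (⊤ : ℕ∞) e₂) (he₃ : ContDiff ℝ (⊤ : ℕ∞) e₃)
    (hcper : ∀ σ : ℝ, c (σ + L) = c σ) (he₂per : ∀ σ : ℝ, e₂ (σ + L) = e₂ σ)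
    (he₃per : ∀ σ : ℝ, e₃ (σ + L) = e₃ σ)
    (hcunit : ∀ σ : ℝ, ‖deriv c σ‖ = 1)
    (he₂unit : ∀ σ : ℝ, ‖e₂ σ‖ = 1) (he₃unit : ∀ σ : ℝ, ‖e₃ σ‖ = 1)
    (h12 : ∀ σ : ℝ, ⟪deriv c σ, e₂ σ⟫ = 0)
    (h13 : ∀ σ : ℝ, ⟪deriv c σ, e₃ σ⟫ = 0)
    (h23 : ∀ σ : ℝ, ⟪e₂ σ, e₃ σ⟫ = 0)
    (Λ : ℝ) (hΛ : 0 < Λ) (x y : ℝ → ℝ)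
    (hx : ContDiff ℝ (⊤ : ℕ∞) x) (hy : ContDiff ℝ (⊤ : ℕ∞) y)
    (hunit : ∀ s ∈ Set.Icc (0:ℝ) Λ, (deriv x s) ^ 2 + (deriv y s) ^ 2 = 1)
    (hbd : ∀ s ∈ Set.Icc (0:ℝ) Λ, Real.sqrt ((x s) ^ 2 + (y s) ^ 2) ≤ 2) :
    ∃ εbar : ℝ, 0 < εbar ∧ ∃ C : ℝ, 0 < C ∧
      ∀ ε : ℝ, 0 < ε → ε < εbar →
      ∀ σ : ℝ, ∀ s ∈ Set.Icc (0:ℝ) Λ,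
        (let S₁ := deriv (fun s' : ℝ => c σ + (ε * x s') • e₂ σ + (ε * y s') • e₃ σ) s
         let S₂ := deriv (fun σ' : ℝ => c σ' + (ε * x s) • e₂ σ' + (ε * y s) • e₃ σ') σ
         |Real.sqrt (‖S₁‖ ^ 2 * ‖S₂‖ ^ 2 - ⟪S₁, S₂⟫ ^ 2) - ε| ≤ C * ε ^ 2) := by
  have hdx : Differentiable ℝ x := hx.differentiable (by simp)
  have hdy : Differentiable ℝ y := hy.differentiable (by simp)
  have hdc : Differentiable ℝ c := hc.differentiable (by simp)
  have hde₂ : Differentiable ℝ e₂ := he₂.differentiable (by simp)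
  have hde₃ : Differentiable ℝ e₃ := he₃.differentiable (by simp)
  obtain ⟨M₂, hM₂0, hM₂⟩ := stmt_5_aux_bound hL (he₂.continuous_deriv (by simp))
    (stmt_5_aux_deriv_periodic he₂per)
  obtain ⟨M₃, hM₃0, hM₃⟩ := stmt_5_aux_bound hL (he₃.continuous_deriv (by simp))
    (stmt_5_aux_deriv_periodic he₃per)
  set B : ℝ := 2 * M₂ + 2 * M₃ with hBdef
  have hB0 : 0 ≤ B := by positivity
  set C : ℝ := 2 * B + 2 * B ^ 2 + 1 with hCdef
  have hC0 : (0:ℝ) < C := by positivity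
  refine ⟨min 1 (1 / C), lt_min one_pos (by positivity), C, hC0, ?_⟩
  intro ε hε hεlt σ s hs
  have hε1 : ε ≤ 1 := le_of_lt (lt_of_lt_of_le hεlt (min_le_left _ _))
  have hεC : C * ε < 1 := by
    have h := lt_of_lt_of_le hεlt (min_le_right _ _)
    rw [lt_div_iff₀ hC0] at h
    linarith
  have hεB : ε * B ≤ 1 := by nlinarith
  -- bounds on x s, y s, deriv x s, deriv y s
  have huv : (x s) ^ 2 + (y s) ^ 2 ≤ 4 := by
    have h := hbd s hs
    have h0 : (0:ℝ) ≤ (x s) ^ 2 + (y s) ^ 2 := by positivity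
    nlinarith [Real.sq_sqrt h0, Real.sqrt_nonneg ((x s) ^ 2 + (y s) ^ 2)]
  have hu : |x s| ≤ 2 := by
    rw [abs_le]; constructor <;> nlinarith [sq_nonneg (y s)]
  have hv : |y s| ≤ 2 := by
    rw [abs_le]; constructor <;> nlinarith [sq_nonneg (x s)]
  have hab := hunit s hs
  -- derivative computations
  have h1 : HasDerivAt (fun s' : ℝ => c σ + (ε * x s') • e₂ σ + (ε * y s') • e₃ σ)
      ((ε * deriv x s) • e₂ σ + (ε * deriv y s) • e₃ σ) s := by
    have hx' := HasDerivAt.const_mul ε (hdx s).hasDerivAt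
    have hy' := HasDerivAt.const_mul ε (hdy s).hasDerivAt
    have h := ((hasDerivAt_const s (c σ)).add (hx'.smul_const (e₂ σ))).add
      (hy'.smul_const (e₃ σ))
    rw [zero_add] at h
    exact h
  have h2 : HasDerivAt (fun σ' : ℝ => c σ' + (ε * x s) • e₂ σ' + (ε * y s) • e₃ σ')
      (deriv c σ + ((ε * x s) • deriv e₂ σ + (ε * y s) • deriv e₃ σ)) σ := by
    have h := ((hdc σ).hasDerivAt.add
      (HasDerivAt.const_smul (ε * x s) (hde₂ σ).hasDerivAt)).add
      (HasDerivAt.const_smul (ε * y s) (hde₃ σ).hasDerivAt)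
    rw [← add_assoc]
    exact h
  show |Real.sqrt (‖deriv (fun s' : ℝ =>
        c σ + (ε * x s') • e₂ σ + (ε * y s') • e₃ σ) s‖ ^ 2 *
      ‖deriv (fun σ' : ℝ => c σ' + (ε * x s) • e₂ σ' + (ε * y s) • e₃ σ') σ‖ ^ 2 -
      ⟪deriv (fun s' : ℝ => c σ + (ε * x s') • e₂ σ + (ε * y s') • e₃ σ) s,
        deriv (fun σ' : ℝ => c σ' + (ε * x s) • e₂ σ' + (ε * y s) • e₃ σ') σ⟫ ^ 2) - ε|
      ≤ C * ε ^ 2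
  rw [h1.deriv, h2.deriv]
  set a : ℝ := deriv x s with hadef
  set b : ℝ := deriv y s with hbdef
  set T : EuclideanSpace ℝ (Fin n) := deriv c σ with hTdef
  set w : EuclideanSpace ℝ (Fin n) := (ε * x s) • deriv e₂ σ + (ε * y s) • deriv e₃ σ
    with hwdef
  set S₁v : EuclideanSpace ℝ (Fin n) := (ε * a) • e₂ σ + (ε * b) • e₃ σ with hS₁def
  clear_value a b T w S₁v
  clear h1 h2 hc he₂ he₃ hx hy hcper he₂per he₃per hdx hdy hdc hde₂ hde₃
  clear hunit hbd hn hΛ hL hs huv hεlt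
  have ha : |a| ≤ 1 := by rw [abs_le]; constructor <;> nlinarith [sq_nonneg b]
  have hb : |b| ≤ 1 := by rw [abs_le]; constructor <;> nlinarith [sq_nonneg a]
  -- norm of w
  have hwnorm : ‖w‖ ≤ ε * B := by
    have e1 : ‖(ε * x s) • deriv e₂ σ‖ ≤ ε * 2 * M₂ := by
      rw [norm_smul, Real.norm_eq_abs, abs_mul, abs_of_pos hε]
      have h1' : |x s| * ‖deriv e₂ σ‖ ≤ 2 * M₂ :=
        mul_le_mul hu (hM₂ σ) (norm_nonneg _) (by norm_num)
      calc ε * |x s| * ‖deriv e₂ σ‖ = ε * (|x s| * ‖deriv e₂ σ‖) := by ring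
        _ ≤ ε * (2 * M₂) := mul_le_mul_of_nonneg_left h1' hε.le
        _ = ε * 2 * M₂ := by ring
    have e2 : ‖(ε * y s) • deriv e₃ σ‖ ≤ ε * 2 * M₃ := by
      rw [norm_smul, Real.norm_eq_abs, abs_mul, abs_of_pos hε]
      have h1' : |y s| * ‖deriv e₃ σ‖ ≤ 2 * M₃ :=
        mul_le_mul hv (hM₃ σ) (norm_nonneg _) (by norm_num)
      calc ε * |y s| * ‖deriv e₃ σ‖ = ε * (|y s| * ‖deriv e₃ σ‖) := by ring
        _ ≤ ε * (2 * M₃) := mul_le_mul_of_nonneg_left h1' hε.le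
        _ = ε * 2 * M₃ := by ring
    calc ‖w‖ = ‖(ε * x s) • deriv e₂ σ + (ε * y s) • deriv e₃ σ‖ := by rw [hwdef]
      _ ≤ ‖(ε * x s) • deriv e₂ σ‖ + ‖(ε * y s) • deriv e₃ σ‖ := norm_add_le _ _
      _ ≤ ε * 2 * M₂ + ε * 2 * M₃ := add_le_add e1 e2
      _ = ε * B := by rw [hBdef]; ring
  -- bounds on ‖T + w‖
  have hT1 : ‖T‖ = 1 := by rw [hTdef]; exact hcunit σ
  have hupn : ‖T + w‖ ≤ 1 + ε * B := by
    calc ‖T + w‖ ≤ ‖T‖ + ‖w‖ := norm_add_le _ _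
      _ ≤ 1 + ε * B := by rw [hT1]; linarith
  have hlown : 1 - ε * B ≤ ‖T + w‖ := by
    have h : ‖(T + w) - w‖ ≤ ‖T + w‖ + ‖w‖ := norm_sub_le _ _
    have h2' : (T + w) - w = T := by abel
    rw [h2', hT1] at h
    linarith
  have hg22up : ‖T + w‖ ^ 2 ≤ 1 + ε * (2 * B + B ^ 2) := by
    nlinarith [mul_self_le_mul_self (norm_nonneg (T + w)) hupn,
      mul_nonneg (sub_nonneg.2 hε1) (mul_nonneg (mul_nonneg hε.le hB0) hB0)]
  have hg22low : 1 - ε * (2 * B + B ^ 2) ≤ ‖T + w‖ ^ 2 := by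
    nlinarith [mul_self_le_mul_self (by linarith : (0:ℝ) ≤ 1 - ε * B) hlown,
      mul_nonneg (mul_nonneg (mul_nonneg hε.le hε.le) hB0) hB0,
      mul_nonneg (mul_nonneg hε.le hB0) hB0]
  -- inner products with the frame
  have h22 : ⟪e₂ σ, e₂ σ⟫ = (1:ℝ) := by
    rw [real_inner_self_eq_norm_sq, he₂unit]; norm_num
  have h33 : ⟪e₃ σ, e₃ σ⟫ = (1:ℝ) := by
    rw [real_inner_self_eq_norm_sq, he₃unit]; norm_num
  have h32 : ⟪e₃ σ, e₂ σ⟫ = (0:ℝ) := by rw [real_inner_comm]; exact h23 σ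
  have h21 : ⟪e₂ σ, T⟫ = (0:ℝ) := by rw [hTdef, real_inner_comm]; exact h12 σ
  have h31 : ⟪e₃ σ, T⟫ = (0:ℝ) := by rw [hTdef, real_inner_comm]; exact h13 σ
  -- ‖S₁‖² = ε²
  have nS₁ : ‖S₁v‖ ^ 2 = ε ^ 2 := by
    rw [← real_inner_self_eq_norm_sq, hS₁def]
    simp only [inner_add_left, inner_add_right, real_inner_smul_left,
      real_inner_smul_right, h22, h33, h23 σ, h32]
    nlinarith [hab]
  have hnS₁le : ‖S₁v‖ ≤ ε := by nlinarith [norm_nonneg S₁v]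
  -- inner product g₁₂
  have hST : ⟪S₁v, T⟫ = (0:ℝ) := by
    rw [hS₁def]
    simp only [inner_add_left, real_inner_smul_left, h21, h31]
    ring
  have hg12 : |⟪S₁v, T + w⟫| ≤ ε * (ε * B) := by
    rw [inner_add_right, hST, zero_add]
    calc |⟪S₁v, w⟫| ≤ ‖S₁v‖ * ‖w‖ := abs_real_inner_le_norm _ _
      _ ≤ ε * (ε * B) := mul_le_mul hnS₁le hwnorm (norm_nonneg _) hε.le
  have einner : ⟪S₁v, T + w⟫ ^ 2 ≤ ε ^ 3 * B ^ 2 := by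
    have h := mul_self_le_mul_self (abs_nonneg ⟪S₁v, T + w⟫) hg12
    nlinarith [sq_abs ⟪S₁v, T + w⟫,
      mul_nonneg (sub_nonneg.2 hε1)
        (mul_nonneg (pow_nonneg hε.le 3) (sq_nonneg B))]
  have hCe : C * ε ^ 3 = (2 * B + 2 * B ^ 2 + 1) * ε ^ 3 := by rw [hCdef]
  refine stmt_5_aux_sqrt hε (by linarith) hC0 ?_ ?_
  · -- lower bound on the discriminant
    rw [nS₁]
    have e2b : ε ^ 2 * (1 - ε * (2 * B + B ^ 2)) ≤ ε ^ 2 * ‖T + w‖ ^ 2 :=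
      mul_le_mul_of_nonneg_left hg22low (sq_nonneg ε)
    nlinarith [pow_nonneg hε.le 3]
  · -- upper bound on the discriminant
    rw [nS₁]
    have e2b : ε ^ 2 * ‖T + w‖ ^ 2 ≤ ε ^ 2 * (1 + ε * (2 * B + B ^ 2)) :=
      mul_le_mul_of_nonneg_left hg22up (sq_nonneg ε)
    nlinarith [sq_nonneg ⟪S₁v, T + w⟫, pow_nonneg hε.le 3,
      mul_nonneg (pow_nonneg hε.le 3) (sq_nonneg B)]
end

section
/- Let n ≥ 3, L > 0, c : ℝ → ℝⁿ a smooth L-periodic unit-speed curve with e₁ := c', e₂, e₃ : ℝ → ℝⁿ smooth L-periodic maps with e₁(σ), e₂(σ), e₃(σ) orthonormal for every σ, and γ = (x, y) : [0, Λ] → ℝ² smooth unit-speed with |γ(s)| ≤ 2. Let P_{ε,(σ,s)} denote the orthogonal projection of ℝⁿ onto the orthogonal complement of span{∂S_ε/∂s, ∂S_ε/∂σ} at (σ, s). Then there exist ε̄ > 0 and C > 0 such that for all ε ∈ (0, ε̄) and all (σ, s): ‖P_{ε,(σ,s)} e₂(σ) − ((1 − x'(s)²) e₂(σ) − x'(s)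 y'(s) e₃(σ))‖ ≤ C ε and ‖P_{ε,(σ,s)} e₃(σ) − ((1 − y'(s)²) e₃(σ) − x'(s) y'(s) e₂(σ))‖ ≤ C ε. -/
open scoped RealInnerProductSpace

set_option maxHeartbeats 1000000

lemma per_bound {n : ℕ} (L : ℝ) (hL : 0 < L) (g : ℝ → EuclideanSpace ℝ (Fin n))
    (hg : Continuous g) (hper : ∀ σ : ℝ, g (σ + L) = g σ) :
    ∃ M : ℝ, 0 ≤ M ∧ ∀ σ : ℝ, ‖g σ‖ ≤ M := by
  obtain ⟨M, hM⟩ := (isCompact_Icc (a := (0:ℝ)) (b := L)).exists_bound_of_continuousOn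
    hg.continuousOn
  refine ⟨max M 0, le_max_right _ _, fun σ => ?_⟩
  have hperiodic : Function.Periodic g L := hper
  obtain ⟨y, hy, hgy⟩ := hperiodic.exists_mem_Ico₀ hL σ
  rw [hgy]
  exact le_trans (hM y ⟨hy.1, hy.2.le⟩) (le_max_left _ _)

lemma aux_proj {n : ℕ} (S₁ S₂ u f w v : EuclideanSpace ℝ (Fin n)) (ε t W : ℝ)
    (hε : 0 < ε) (hW : 0 < W)
    (hS₁ : S₁ = ε • u) (hS₂ : S₂ = f + ε • w)
    (hu : ‖u‖ = 1) (hf : ‖f‖ = 1) (hv : ‖v‖ = 1)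
    (hfu : ⟪u, f⟫ = 0) (hfv : ⟪f, v⟫ = 0)
    (hw : ‖w‖ ≤ W) (ht : ⟪u, v⟫ = t) (ht1 : |t| ≤ 1)
    (hεW : ε * W ≤ 1/4) :
    ‖((Submodule.orthogonalProjectionOnto (Submodule.span ℝ {S₁, S₂})ᗮ v : EuclideanSpace ℝ (Fin n)))
      - (v - t • u)‖ ≤ 8 * W * ε := by
  have huu : ⟪u, u⟫ = 1 := by
    rw [real_inner_self_eq_norm_sq, hu]; norm_num
  have hεw : ε * ‖w‖ ≤ ε * W := mul_le_mul_of_nonneg_left hw hε.le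
  set a : ℝ := ε * ⟪u, w⟫ with ha_def
  have huS₂ : ⟪u, S₂⟫ = a := by
    rw [hS₂, inner_add_right, real_inner_smul_right, hfu]; ring
  have hwu : |⟪u, w⟫| ≤ W := by
    calc |⟪u, w⟫| ≤ ‖u‖ * ‖w‖ := abs_real_inner_le_norm u w
    _ ≤ W := by rw [hu, one_mul]; exact hw
  have ha : |a| ≤ ε * W := by
    rw [ha_def, abs_mul, abs_of_pos hε]
    exact mul_le_mul_of_nonneg_left hwu hε.le
  set b' : EuclideanSpace ℝ (Fin n) := S₂ - a • u with hb'_def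
  have hub' : ⟪u, b'⟫ = 0 := by
    rw [hb'_def, inner_sub_right, huS₂, real_inner_smul_right, huu]; ring
  have hS₂norm : (3:ℝ)/4 ≤ ‖S₂‖ := by
    have h1 : ‖f‖ ≤ ‖S₂‖ + ‖ε • w‖ := by
      calc ‖f‖ = ‖S₂ - ε • w‖ := by rw [hS₂]; congr 1; abel
      _ ≤ ‖S₂‖ + ‖ε • w‖ := norm_sub_le _ _
    have h2 : ‖ε • w‖ = ε * ‖w‖ := by rw [norm_smul, Real.norm_eq_abs, abs_of_pos hε]
    rw [hf] at h1; linarith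
  have hb'sq : ‖b'‖ ^ 2 = ‖S₂‖ ^ 2 - a ^ 2 := by
    have h1 : ⟪S₂, a • u⟫ = a ^ 2 := by
      rw [real_inner_smul_right, real_inner_comm u S₂, huS₂]; ring
    have h2 : ‖a • u‖ ^ 2 = a ^ 2 := by
      rw [norm_smul, mul_pow, hu, Real.norm_eq_abs, sq_abs]; ring
    rw [hb'_def, norm_sub_sq_real, h1, h2]; ring
  have hεW' : |a| ≤ 1/4 := le_trans ha hεW
  have hb'norm : (1:ℝ)/2 ≤ ‖b'‖ := by
    nlinarith [norm_nonneg b', abs_nonneg a, sq_abs a]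
  have hb'ne : ‖b'‖ ≠ 0 := by positivity
  set nb : ℝ := ‖b'‖ with hnb_def
  set ut : EuclideanSpace ℝ (Fin n) := nb⁻¹ • b' with hut_def
  have hutnorm : ‖ut‖ = 1 := by
    rw [hut_def, norm_smul, Real.norm_eq_abs, abs_inv, abs_of_pos (by linarith : (0:ℝ) < nb)]
    exact inv_mul_cancel₀ hb'ne
  have hutut : ⟪ut, ut⟫ = 1 := by rw [real_inner_self_eq_norm_sq, hutnorm]; norm_num
  have huut : ⟪u, ut⟫ = 0 := by rw [hut_def, real_inner_smul_right, hub']; ring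
  have hutu : ⟪ut, u⟫ = 0 := by rw [real_inner_comm u ut]; exact huut
  have hb'v : ⟪b', v⟫ = ε * ⟪w, v⟫ - a * t := by
    rw [hb'_def, inner_sub_left, hS₂, inner_add_left, real_inner_smul_left,
      real_inner_smul_left, hfv, ht]; ring
  have hwv : |⟪w, v⟫| ≤ W := by
    calc |⟪w, v⟫| ≤ ‖w‖ * ‖v‖ := abs_real_inner_le_norm w v
    _ ≤ W := by rw [hv, mul_one]; exact hw
  have hb'vbound : |⟪b', v⟫| ≤ 2 * (ε * W) := by
    have h1 : |ε * ⟪w, v⟫| ≤ ε * W := by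
      rw [abs_mul, abs_of_pos hε]; exact mul_le_mul_of_nonneg_left hwv hε.le
    have h2 : |a * t| ≤ ε * W := by
      rw [abs_mul]
      calc |a| * |t| ≤ (ε * W) * 1 := mul_le_mul ha ht1 (abs_nonneg t) (by positivity)
      _ = ε * W := by ring
    calc |⟪b', v⟫| ≤ |ε * ⟪w, v⟫| + |a * t| := by rw [hb'v]; exact abs_sub _ _
    _ ≤ 2 * (ε * W) := by linarith
  set r : ℝ := ⟪ut, v⟫ with hr_def
  have hr : |r| ≤ 4 * (ε * W) := by
    have hre : r = nb⁻¹ * ⟪b', v⟫ := by rw [hr_def, hut_def, real_inner_smul_left]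
    rw [hre, abs_mul, abs_inv, abs_of_pos (by linarith : (0:ℝ) < nb)]
    have hnbinv : nb⁻¹ ≤ 2 := by
      rw [inv_le_comm₀ (by linarith) (by norm_num)]
      linarith
    calc nb⁻¹ * |⟪b', v⟫| ≤ 2 * (2 * (ε * W)) :=
          mul_le_mul hnbinv hb'vbound (abs_nonneg _) (by norm_num)
    _ = 4 * (ε * W) := by ring
  set p : EuclideanSpace ℝ (Fin n) := t • u + r • ut with hp_def
  have hS₂' : S₂ = b' + a • u := by rw [hb'_def]; abel
  have hpmem : p ∈ Submodule.span ℝ {S₁, S₂} := by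
    rw [Submodule.mem_span_pair]
    refine ⟨ε⁻¹ * (t - r * nb⁻¹ * a), r * nb⁻¹, ?_⟩
    rw [hS₁, hS₂', hp_def, hut_def]
    match_scalars <;> (field_simp; try ring)
  have hup : ⟪u, p⟫ = t := by
    rw [hp_def, inner_add_right, real_inner_smul_right, real_inner_smul_right, huu, huut]; ring
  have hutp : ⟪ut, p⟫ = r := by
    rw [hp_def, inner_add_right, real_inner_smul_right, real_inner_smul_right, hutu, hutut]; ring
  have huvp : ⟪u, v - p⟫ = 0 := by rw [inner_sub_right, hup, ht]; ring
  have hutvp : ⟪ut, v - p⟫ = 0 := by rw [inner_sub_right, hutp, hr_def]; ring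
  have hb'vp : ⟪b', v - p⟫ = 0 := by
    have hb'eq : b' = nb • ut := by
      rw [hut_def, smul_smul, mul_inv_cancel₀ hb'ne, one_smul]
    rw [hb'eq, real_inner_smul_left, hutvp]; ring
  have hS₁vp : ⟪S₁, v - p⟫ = 0 := by rw [hS₁, real_inner_smul_left, huvp]; ring
  have hS₂vp : ⟪S₂, v - p⟫ = 0 := by
    rw [hS₂', inner_add_left, real_inner_smul_left, hb'vp, huvp]; ring
  have hvpmem : v - p ∈ (Submodule.span ℝ {S₁, S₂})ᗮ := by
    rw [Submodule.mem_orthogonal]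
    intro z hz
    obtain ⟨m, k, rfl⟩ := Submodule.mem_span_pair.mp hz
    rw [inner_add_left, real_inner_smul_left, real_inner_smul_left, hS₁vp, hS₂vp]; ring
  have hproj : ((Submodule.orthogonalProjectionOnto (Submodule.span ℝ {S₁, S₂})ᗮ v :
      EuclideanSpace ℝ (Fin n))) = v - p := by
    rw [← Submodule.starProjection_apply]
    apply Submodule.eq_starProjection_of_mem_of_inner_eq_zero hvpmem
    intro z hz
    have hvv : v - (v - p) = p := by abel
    rw [hvv, Submodule.mem_orthogonal] at *
    exact hz p hpmem
  rw [hproj]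
  have hdiff : v - p - (v - t • u) = (-r) • ut := by rw [hp_def]; module
  rw [hdiff, norm_smul, Real.norm_eq_abs, abs_neg, hutnorm, mul_one]
  calc |r| ≤ 4 * (ε * W) := hr
  _ ≤ 8 * W * ε := by nlinarith


/-- Asymptotics of the normal projections of the frame vectors `e₂, e₃` for the tube patch:
up to `O(ε)`, `P e₂ = (1 - x'²) e₂ - x' y' e₃` and `P e₃ = (1 - y'²) e₃ - x' y' e₂`. -/
theorem stmt_6 (n : ℕ) (hn : 3 ≤ n) (L : ℝ) (hL : 0 < L)
    (c e₂ e₃ : ℝ → EuclideanSpace ℝ (Fin n))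
    (hc : ContDiff ℝ (⊤ : ℕ∞) c) (he₂ : ContDiff ℝ (⊤ : ℕ∞) e₂) (he₃ : ContDiff ℝ (⊤ : ℕ∞) e₃)
    (hcper : ∀ σ : ℝ, c (σ + L) = c σ) (he₂per : ∀ σ : ℝ, e₂ (σ + L) = e₂ σ)
    (he₃per : ∀ σ : ℝ, e₃ (σ + L) = e₃ σ)
    (hcunit : ∀ σ : ℝ, ‖deriv c σ‖ = 1)
    (he₂unit : ∀ σ : ℝ, ‖e₂ σ‖ = 1) (he₃unit : ∀ σ : ℝ, ‖e₃ σ‖ = 1)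
    (h12 : ∀ σ : ℝ, ⟪deriv c σ, e₂ σ⟫ = 0)
    (h13 : ∀ σ : ℝ, ⟪deriv c σ, e₃ σ⟫ = 0)
    (h23 : ∀ σ : ℝ, ⟪e₂ σ, e₃ σ⟫ = 0)
    (Λ : ℝ) (hΛ : 0 < Λ) (x y : ℝ → ℝ)
    (hx : ContDiff ℝ (⊤ : ℕ∞) x) (hy : ContDiff ℝ (⊤ : ℕ∞) y)
    (hunit : ∀ s ∈ Set.Icc (0:ℝ) Λ, (deriv x s) ^ 2 + (deriv y s) ^ 2 = 1)
    (hbd : ∀ s ∈ Set.Icc (0:ℝ) Λ, Real.sqrt ((x s) ^ 2 + (y s) ^ 2) ≤ 2) :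
    ∃ εbar : ℝ, 0 < εbar ∧ ∃ C : ℝ, 0 < C ∧
      ∀ ε : ℝ, 0 < ε → ε < εbar →
      ∀ σ : ℝ, ∀ s ∈ Set.Icc (0:ℝ) Λ,
        (let S₁ := deriv (fun s' : ℝ => c σ + (ε * x s') • e₂ σ + (ε * y s') • e₃ σ) s
         let S₂ := deriv (fun σ' : ℝ => c σ' + (ε * x s) • e₂ σ' + (ε * y s) • e₃ σ') σ
         let P : EuclideanSpace ℝ (Fin n) → EuclideanSpace ℝ (Fin n) :=
           fun v => (Submodule.orthogonalProjectionOnto (Submodule.span ℝ {S₁, S₂})ᗮ v :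
             EuclideanSpace ℝ (Fin n))
         ‖P (e₂ σ) - ((1 - (deriv x s) ^ 2) • e₂ σ - (deriv x s * deriv y s) • e₃ σ)‖
             ≤ C * ε ∧
         ‖P (e₃ σ) - ((1 - (deriv y s) ^ 2) • e₃ σ - (deriv x s * deriv y s) • e₂ σ)‖
             ≤ C * ε) := by
  -- boundedness of derivatives of the frame
  have hd₂cont : Continuous (deriv e₂) := (contDiff_infty_iff_deriv.mp (he₂.of_le (by simp))).2.continuous
  have hd₃cont : Continuous (deriv e₃) := (contDiff_infty_iff_deriv.mp (he₃.of_le (by simp))).2.continuous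
  have hd₂per : ∀ σ : ℝ, deriv e₂ (σ + L) = deriv e₂ σ := by
    intro σ
    calc deriv e₂ (σ + L) = deriv (fun t => e₂ (t + L)) σ := (deriv_comp_add_const e₂ L σ).symm
    _ = deriv e₂ σ := by rw [show (fun t => e₂ (t + L)) = e₂ from funext he₂per]
  have hd₃per : ∀ σ : ℝ, deriv e₃ (σ + L) = deriv e₃ σ := by
    intro σ
    calc deriv e₃ (σ + L) = deriv (fun t => e₃ (t + L)) σ := (deriv_comp_add_const e₃ L σ).symm
    _ = deriv e₃ σ := by rw [show (fun t => e₃ (t + L)) = e₃ from funext he₃per]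
  obtain ⟨M₂, hM₂0, hM₂⟩ := per_bound L hL (deriv e₂) hd₂cont hd₂per
  obtain ⟨M₃, hM₃0, hM₃⟩ := per_bound L hL (deriv e₃) hd₃cont hd₃per
  set W : ℝ := 2 * M₂ + 2 * M₃ + 1 with hW_def
  have hW : 0 < W := by positivity
  refine ⟨1 / (4 * W), by positivity, 8 * W, by positivity, ?_⟩
  intro ε hε hεlt σ s hs
  intro S₁ S₂ P
  -- basic scalar facts
  have hxy1 : (deriv x s) ^ 2 + (deriv y s) ^ 2 = 1 := hunit s hs
  have hx1 : |deriv x s| ≤ 1 := by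
    rw [abs_le]; constructor <;> nlinarith [sq_nonneg (deriv y s)]
  have hy1 : |deriv y s| ≤ 1 := by
    rw [abs_le]; constructor <;> nlinarith [sq_nonneg (deriv x s)]
  have hsum : (x s) ^ 2 + (y s) ^ 2 ≤ 4 := by
    nlinarith [Real.sq_sqrt (show (0:ℝ) ≤ (x s)^2 + (y s)^2 by positivity),
      Real.sqrt_nonneg ((x s)^2 + (y s)^2), hbd s hs]
  have hxs : |x s| ≤ 2 := by
    rw [abs_le]; constructor <;> nlinarith [sq_nonneg (y s)]
  have hys : |y s| ≤ 2 := by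
    rw [abs_le]; constructor <;> nlinarith [sq_nonneg (x s)]
  have hεW : ε * W ≤ 1 / 4 := by
    have hcan : (1 / (4 * W)) * (4 * W) = 1 := by field_simp
    have h5 := mul_lt_mul_of_pos_right hεlt (show (0:ℝ) < 4 * W by positivity)
    rw [hcan] at h5
    nlinarith
  -- the main geometric vectors
  set u : EuclideanSpace ℝ (Fin n) := (deriv x s) • e₂ σ + (deriv y s) • e₃ σ with hu_def
  set w : EuclideanSpace ℝ (Fin n) := (x s) • deriv e₂ σ + (y s) • deriv e₃ σ with hw_def
  set f : EuclideanSpace ℝ (Fin n) := deriv c σ with hf_def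
  -- derivative computations
  have hxd : HasDerivAt x (deriv x s) s := (hx.differentiable (by simp) s).hasDerivAt
  have hyd : HasDerivAt y (deriv y s) s := (hy.differentiable (by simp) s).hasDerivAt
  have hDS₁ : HasDerivAt (fun s' : ℝ => c σ + (ε * x s') • e₂ σ + (ε * y s') • e₃ σ)
      (0 + (ε * deriv x s) • e₂ σ + (ε * deriv y s) • e₃ σ) s :=
    ((hasDerivAt_const s (c σ)).add ((hxd.const_mul ε).smul_const (e₂ σ))).add
      ((hyd.const_mul ε).smul_const (e₃ σ))
  have hS₁ : S₁ = ε • u := by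
    show deriv _ s = ε • u
    rw [hDS₁.deriv, hu_def]
    module
  have hcd : HasDerivAt c (deriv c σ) σ := (hc.differentiable (by simp) σ).hasDerivAt
  have he₂d : HasDerivAt e₂ (deriv e₂ σ) σ := (he₂.differentiable (by simp) σ).hasDerivAt
  have he₃d : HasDerivAt e₃ (deriv e₃ σ) σ := (he₃.differentiable (by simp) σ).hasDerivAt
  have hDS₂ : HasDerivAt (fun σ' : ℝ => c σ' + (ε * x s) • e₂ σ' + (ε * y s) • e₃ σ')
      (deriv c σ + (ε * x s) • deriv e₂ σ + (ε * y s) • deriv e₃ σ) σ :=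
    (hcd.add (he₂d.const_smul (ε * x s))).add (he₃d.const_smul (ε * y s))
  have hS₂ : S₂ = f + ε • w := by
    show deriv _ σ = f + ε • w
    rw [hDS₂.deriv, hw_def, hf_def]
    module
  -- norms and inner products
  have he₂e₂ : ⟪e₂ σ, e₂ σ⟫ = 1 := by
    rw [real_inner_self_eq_norm_sq, he₂unit σ]; norm_num
  have he₃e₃ : ⟪e₃ σ, e₃ σ⟫ = 1 := by
    rw [real_inner_self_eq_norm_sq, he₃unit σ]; norm_num
  have he₃e₂ : ⟪e₃ σ, e₂ σ⟫ = 0 := by rw [real_inner_comm]; exact h23 σ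
  have he₂f : ⟪e₂ σ, f⟫ = 0 := by rw [hf_def, real_inner_comm]; exact h12 σ
  have he₃f : ⟪e₃ σ, f⟫ = 0 := by rw [hf_def, real_inner_comm]; exact h13 σ
  have hunorm : ‖u‖ = 1 := by
    have husq : ‖u‖ ^ 2 = 1 := by
      rw [← real_inner_self_eq_norm_sq, hu_def, inner_add_add_self]
      simp only [real_inner_smul_left, real_inner_smul_right, he₂e₂, he₃e₃, he₃e₂, h23 σ]
      nlinarith
    rw [← Real.sqrt_sq (norm_nonneg u), husq, Real.sqrt_one]
  have hfnorm : ‖f‖ = 1 := hcunit σ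
  have hfu : ⟪u, f⟫ = 0 := by
    rw [hu_def, inner_add_left, real_inner_smul_left, real_inner_smul_left,
      he₂f, he₃f]; ring
  have hwnorm : ‖w‖ ≤ W := by
    rw [hw_def]
    calc ‖(x s) • deriv e₂ σ + (y s) • deriv e₃ σ‖
        ≤ ‖(x s) • deriv e₂ σ‖ + ‖(y s) • deriv e₃ σ‖ := norm_add_le _ _
    _ = |x s| * ‖deriv e₂ σ‖ + |y s| * ‖deriv e₃ σ‖ := by
        rw [norm_smul, norm_smul, Real.norm_eq_abs, Real.norm_eq_abs]
    _ ≤ 2 * M₂ + 2 * M₃ := by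
        gcongr
        · exact hM₂ σ
        · exact hM₃ σ
    _ ≤ W := by rw [hW_def]; linarith
  have hue₂ : ⟪u, e₂ σ⟫ = deriv x s := by
    rw [hu_def, inner_add_left, real_inner_smul_left, real_inner_smul_left,
      he₂e₂, he₃e₂]; ring
  have hue₃ : ⟪u, e₃ σ⟫ = deriv y s := by
    rw [hu_def, inner_add_left, real_inner_smul_left, real_inner_smul_left,
      he₃e₃, h23 σ]; ring
  constructor
  · have hcl : (1 - (deriv x s) ^ 2) • e₂ σ - (deriv x s * deriv y s) • e₃ σ
        = e₂ σ - (deriv x s) • u := by rw [hu_def]; module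
    have hP2 : P (e₂ σ) = ((Submodule.orthogonalProjectionOnto (Submodule.span ℝ {S₁, S₂})ᗮ (e₂ σ) :
        EuclideanSpace ℝ (Fin n))) := rfl
    rw [hP2, hcl]
    exact aux_proj S₁ S₂ u f w (e₂ σ) ε (deriv x s) W hε hW hS₁ hS₂ hunorm hfnorm
      (he₂unit σ) hfu (by rw [hf_def]; exact h12 σ) hwnorm hue₂ hx1 hεW
  · have hcl : (1 - (deriv y s) ^ 2) • e₃ σ - (deriv x s * deriv y s) • e₂ σ
        = e₃ σ - (deriv y s) • u := by rw [hu_def]; module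
    have hP3 : P (e₃ σ) = ((Submodule.orthogonalProjectionOnto (Submodule.span ℝ {S₁, S₂})ᗮ (e₃ σ) :
        EuclideanSpace ℝ (Fin n))) := rfl
    rw [hP3, hcl]
    exact aux_proj S₁ S₂ u f w (e₃ σ) ε (deriv y s) W hε hW hS₁ hS₂ hunorm hfnorm
      (he₃unit σ) hfu (by rw [hf_def]; exact h13 σ) hwnorm hue₃ hy1 hεW
end

section
/- Let n ≥ 3, L > 0, c : ℝ → ℝⁿ a smooth L-periodic unit-speed curve with e₁ := c', e₂, e₃ : ℝ → ℝⁿ smooth L-periodic maps with e₁(σ), e₂(σ), e₃(σ) orthonormal for every σ, and γ = (x, y) : [0, Λ] → ℝ² smooth unit-speed with |γ(s)| ≤ 2. For small ε > 0 and (σ, s) define the mean-curvature density h_ε(σ, s) := ‖g¹¹A₁₁ + 2g¹²A₁₂ + g²²A₂₂‖ · √(det g), where g is the first fundamental form of the patch S_ε, (g^{jl}) is its inverse matrix, and A_{jl} is the normal projection of the second partial derivatives of S_ε. Then sup_{(σ,s) ∈ ℝ × [0,Λ]} | h_ε(σ, s) − |κ(s)| | → 0 as ε → 0⁺, where κ is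 the signed curvature of γ. -/
open scoped RealInnerProductSpace
open scoped ContDiff

section Aux

variable {E : Type*} [NormedAddCommGroup E] [InnerProductSpace ℝ E] [FiniteDimensional ℝ E]

/-- Explicit formula for the projection onto the orthogonal complement of a plane. -/
noncomputable def Qform (a b v : E) : E :=
  v - ((‖b‖ ^ 2 * ⟪v, a⟫ - ⟪a, b⟫ * ⟪v, b⟫) / (‖a‖ ^ 2 * ‖b‖ ^ 2 - ⟪a, b⟫ ^ 2)) • a
    - ((‖a‖ ^ 2 * ⟪v, b⟫ - ⟪a, b⟫ * ⟪v, a⟫) / (‖a‖ ^ 2 * ‖b‖ ^ 2 - ⟪a, b⟫ ^ 2)) • b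

omit [FiniteDimensional ℝ E] in
lemma Qform_smul (a b : E) (r : ℝ) (v : E) :
    Qform a b (r • v) = r • Qform a b v := by
  simp only [Qform, inner_smul_left, starRingEnd_apply, star_trivial, smul_sub, smul_smul]
  congr 2
  · congr 1
    ring
  · congr 1
    ring

omit [FiniteDimensional ℝ E] in
lemma span_pair_smul_left' (r : ℝ) (hr : r ≠ 0) (a b : E) :
    Submodule.span ℝ ({r • a, b} : Set E) = Submodule.span ℝ ({a, b} : Set E) := by
  have hb : b ∈ Submodule.span ℝ ({a, b} : Set E) :=
    Submodule.subset_span (Set.mem_insert_iff.2 (Or.inr rfl))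
  have ha : a ∈ Submodule.span ℝ ({a, b} : Set E) :=
    Submodule.subset_span (Set.mem_insert _ _)
  have hra : r • a ∈ Submodule.span ℝ ({r • a, b} : Set E) :=
    Submodule.subset_span (Set.mem_insert _ _)
  have hb' : b ∈ Submodule.span ℝ ({r • a, b} : Set E) :=
    Submodule.subset_span (Set.mem_insert_iff.2 (Or.inr rfl))
  apply le_antisymm
  · rw [Submodule.span_le]
    rintro v hv
    rcases Set.mem_insert_iff.1 hv with h | h
    · rw [h]; exact Submodule.smul_mem _ _ ha
    · rw [Set.mem_singleton_iff.1 h]; exact hb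
  · rw [Submodule.span_le]
    rintro v hv
    rcases Set.mem_insert_iff.1 hv with h | h
    · have : v = r⁻¹ • (r • a) := by rw [smul_smul, inv_mul_cancel₀ hr, one_smul, h]
      rw [this]
      exact Submodule.smul_mem _ _ hra
    · rw [Set.mem_singleton_iff.1 h]; exact hb'

lemma proj_formula' (a b v : E) (hD : ‖a‖ ^ 2 * ‖b‖ ^ 2 - ⟪a, b⟫ ^ 2 ≠ 0) :
    (Submodule.orthogonalProjectionOnto (Submodule.span ℝ ({a, b} : Set E))ᗮ v : E) = Qform a b v := by
  set D := ‖a‖ ^ 2 * ‖b‖ ^ 2 - ⟪a, b⟫ ^ 2 with hDdef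
  set α := (‖b‖ ^ 2 * ⟪v, a⟫ - ⟪a, b⟫ * ⟪v, b⟫) / D with hα
  set β := (‖a‖ ^ 2 * ⟪v, b⟫ - ⟪a, b⟫ * ⟪v, a⟫) / D with hβ
  set K := Submodule.span ℝ ({a, b} : Set E) with hK
  have ha : a ∈ K := Submodule.subset_span (by simp)
  have hb : b ∈ K := Submodule.subset_span (by simp)
  have hwK : α • a + β • b ∈ K := K.add_mem (K.smul_mem _ ha) (K.smul_mem _ hb)
  have haa : ⟪a, a⟫ = ‖a‖ ^ 2 := real_inner_self_eq_norm_sq a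
  have hbb : ⟪b, b⟫ = ‖b‖ ^ 2 := real_inner_self_eq_norm_sq b
  have hba : (inner ℝ b a : ℝ) = inner ℝ a b := real_inner_comm a b
  have hUa : ⟪v - (α • a + β • b), a⟫ = 0 := by
    rw [inner_sub_left, inner_add_left, inner_smul_left, inner_smul_left]
    simp only [starRingEnd_apply, star_trivial, haa, hbb, hba]
    rw [hα, hβ, div_mul_eq_mul_div, div_mul_eq_mul_div, sub_eq_zero,
      ← add_div, eq_div_iff hD, hDdef]
    ring
  have hUb : ⟪v - (α • a + β • b), b⟫ = 0 := by
    rw [inner_sub_left, inner_add_left, inner_smul_left, inner_smul_left]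
    simp only [starRingEnd_apply, star_trivial, haa, hbb, hba]
    rw [hα, hβ, div_mul_eq_mul_div, div_mul_eq_mul_div, sub_eq_zero,
      ← add_div, eq_div_iff hD, hDdef]
    ring
  have hmem : v - (α • a + β • b) ∈ Kᗮ := by
    rw [Submodule.mem_orthogonal']
    intro u hu
    rcases Submodule.mem_span_pair.1 (by rwa [hK] at hu) with ⟨p, q, rfl⟩
    rw [inner_add_right, inner_smul_right, inner_smul_right, hUa, hUb]
    ring
  have hout : (Submodule.orthogonalProjectionOnto Kᗮ v : E) = v - (α • a + β • b) := by
    rw [Submodule.coe_orthogonalProjectionOnto_apply]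
    refine Submodule.eq_starProjection_of_mem_of_inner_eq_zero hmem ?_
    intro w hw
    have h2 : v - (v - (α • a + β • b)) = α • a + β • b := by abel
    rw [h2]
    exact hw _ hwK
  rw [hout, Qform]
  rw [← hDdef, ← hα, ← hβ]
  abel

lemma claimA (a b N M W : E) (ε : ℝ) (hε : 0 < ε)
    (hD : 0 < ‖a‖ ^ 2 * ‖b‖ ^ 2 - ⟪a, b⟫ ^ 2) :
    ‖(‖b‖ ^ 2 / (‖ε • a‖ ^ 2 * ‖b‖ ^ 2 - ⟪ε • a, b⟫ ^ 2)) •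
        (Submodule.orthogonalProjectionOnto (Submodule.span ℝ ({ε • a, b} : Set E))ᗮ (ε • N) : E)
      + (2 * (-(⟪ε • a, b⟫ / (‖ε • a‖ ^ 2 * ‖b‖ ^ 2 - ⟪ε • a, b⟫ ^ 2)))) •
        (Submodule.orthogonalProjectionOnto (Submodule.span ℝ ({ε • a, b} : Set E))ᗮ (ε • M) : E)
      + (‖ε • a‖ ^ 2 / (‖ε • a‖ ^ 2 * ‖b‖ ^ 2 - ⟪ε • a, b⟫ ^ 2)) •
        (Submodule.orthogonalProjectionOnto (Submodule.span ℝ ({ε • a, b} : Set E))ᗮ W : E)‖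
      * Real.sqrt (‖ε • a‖ ^ 2 * ‖b‖ ^ 2 - ⟪ε • a, b⟫ ^ 2)
    = ‖(‖b‖ ^ 2 / (‖a‖ ^ 2 * ‖b‖ ^ 2 - ⟪a, b⟫ ^ 2)) • Qform a b N
      + (ε * (-(2 * ⟪a, b⟫ / (‖a‖ ^ 2 * ‖b‖ ^ 2 - ⟪a, b⟫ ^ 2)))) • Qform a b M
      + (ε * ‖a‖ ^ 2 / (‖a‖ ^ 2 * ‖b‖ ^ 2 - ⟪a, b⟫ ^ 2)) • Qform a b W‖
      * Real.sqrt (‖a‖ ^ 2 * ‖b‖ ^ 2 - ⟪a, b⟫ ^ 2) := by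
  have hεne : ε ≠ 0 := ne_of_gt hε
  have hDne : ‖a‖ ^ 2 * ‖b‖ ^ 2 - ⟪a, b⟫ ^ 2 ≠ 0 := ne_of_gt hD
  have ha2 : ‖ε • a‖ ^ 2 = ε ^ 2 * ‖a‖ ^ 2 := by
    rw [norm_smul, mul_pow, Real.norm_eq_abs, sq_abs]
  have hab : ⟪ε • a, b⟫ = ε * ⟪a, b⟫ := real_inner_smul_left a b ε
  have hdet : ‖ε • a‖ ^ 2 * ‖b‖ ^ 2 - ⟪ε • a, b⟫ ^ 2
      = ε ^ 2 * (‖a‖ ^ 2 * ‖b‖ ^ 2 - ⟪a, b⟫ ^ 2) := by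
    rw [ha2, hab]; ring
  rw [span_pair_smul_left' ε hεne a b]
  rw [proj_formula' a b (ε • N) hDne, proj_formula' a b (ε • M) hDne,
    proj_formula' a b W hDne, Qform_smul, Qform_smul, hdet]
  have hsqrt : Real.sqrt (ε ^ 2 * (‖a‖ ^ 2 * ‖b‖ ^ 2 - ⟪a, b⟫ ^ 2))
      = ε * Real.sqrt (‖a‖ ^ 2 * ‖b‖ ^ 2 - ⟪a, b⟫ ^ 2) := by
    rw [Real.sqrt_mul (sq_nonneg ε), Real.sqrt_sq hε.le]
  rw [hsqrt, hab, ha2]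
  set D := ‖a‖ ^ 2 * ‖b‖ ^ 2 - ⟪a, b⟫ ^ 2 with hDdef
  set PN := Qform a b N
  set PM := Qform a b M
  set PW := Qform a b W
  have hvec : (‖b‖ ^ 2 / (ε ^ 2 * D)) • ε • PN
      + (2 * (-(ε * ⟪a, b⟫ / (ε ^ 2 * D)))) • ε • PM
      + (ε ^ 2 * ‖a‖ ^ 2 / (ε ^ 2 * D)) • PW
      = ε⁻¹ • ((‖b‖ ^ 2 / D) • PN + (ε * (-(2 * ⟪a, b⟫ / D))) • PM
        + (ε * ‖a‖ ^ 2 / D) • PW) := by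
    match_scalars <;> field_simp <;> ring
  rw [hvec, norm_smul, Real.norm_eq_abs, abs_of_pos (inv_pos.2 hε)]
  field_simp

omit [FiniteDimensional ℝ E] in
lemma periodic_deriv_aux (f : ℝ → E) (L t : ℝ) (hf : ∀ u, f (u + L) = f u) :
    deriv f (t + L) = deriv f t := by
  have h := deriv_comp_add_const (f := f) (a := L) (x := t)
  rw [show (fun u => f (u + L)) = f from funext hf] at h
  exact h.symm

end Aux

lemma periodic_int_aux {α : Type*} (f : ℝ → α) (L : ℝ) (hf : ∀ u, f (u + L) = f u) :
    ∀ (k : ℤ) (t : ℝ), f (t + k * L) = f t := by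
  intro k
  induction k using Int.induction_on with
  | zero => intro t; simp
  | succ m ih =>
      intro t
      have h1 : t + ((m : ℤ) + 1 : ℤ) * L = (t + L) + (m : ℤ) * L := by push_cast; ring
      rw [h1, ih (t + L), hf t]
  | pred m ih =>
      intro t
      have h1 : t + ((-(m : ℤ) - 1 : ℤ) : ℝ) * L = (t - L) + ((-(m : ℤ) : ℤ) : ℝ) * L := by
        push_cast; ring
      rw [h1, ih (t - L)]
      have := hf (t - L)
      rw [sub_add_cancel] at this
      exact this.symm

section Tube

variable {n : ℕ} (c e₂ e₃ : ℝ → EuclideanSpace ℝ (Fin n)) (x y : ℝ → ℝ)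

noncomputable def T1v (p : ℝ × ℝ × ℝ) : EuclideanSpace ℝ (Fin n) :=
  deriv x p.2.2 • e₂ p.2.1 + deriv y p.2.2 • e₃ p.2.1

noncomputable def N1v (p : ℝ × ℝ × ℝ) : EuclideanSpace ℝ (Fin n) :=
  deriv (deriv x) p.2.2 • e₂ p.2.1 + deriv (deriv y) p.2.2 • e₃ p.2.1

noncomputable def S2v (p : ℝ × ℝ × ℝ) : EuclideanSpace ℝ (Fin n) :=
  deriv c p.2.1 + (p.1 * x p.2.2) • deriv e₂ p.2.1 + (p.1 * y p.2.2) • deriv e₃ p.2.1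

noncomputable def Mvv (p : ℝ × ℝ × ℝ) : EuclideanSpace ℝ (Fin n) :=
  deriv x p.2.2 • deriv e₂ p.2.1 + deriv y p.2.2 • deriv e₃ p.2.1

noncomputable def Wvv (p : ℝ × ℝ × ℝ) : EuclideanSpace ℝ (Fin n) :=
  deriv (deriv c) p.2.1 + (p.1 * x p.2.2) • deriv (deriv e₂) p.2.1
    + (p.1 * y p.2.2) • deriv (deriv e₃) p.2.1

noncomputable def Dfv (p : ℝ × ℝ × ℝ) : ℝ :=
  ‖T1v e₂ e₃ x y p‖ ^ 2 * ‖S2v c e₂ e₃ x y p‖ ^ 2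
    - (⟪T1v e₂ e₃ x y p, S2v c e₂ e₃ x y p⟫ : ℝ) ^ 2

noncomputable def Phif (p : ℝ × ℝ × ℝ) : ℝ :=
  ‖(‖S2v c e₂ e₃ x y p‖ ^ 2 / Dfv c e₂ e₃ x y p) •
      Qform (T1v e₂ e₃ x y p) (S2v c e₂ e₃ x y p) (N1v e₂ e₃ x y p)
    + (p.1 * (-(2 * ⟪T1v e₂ e₃ x y p, S2v c e₂ e₃ x y p⟫ / Dfv c e₂ e₃ x y p))) •
      Qform (T1v e₂ e₃ x y p) (S2v c e₂ e₃ x y p) (Mvv e₂ e₃ x y p)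
    + (p.1 * ‖T1v e₂ e₃ x y p‖ ^ 2 / Dfv c e₂ e₃ x y p) •
      Qform (T1v e₂ e₃ x y p) (S2v c e₂ e₃ x y p) (Wvv c e₂ e₃ x y p)‖
    * Real.sqrt (Dfv c e₂ e₃ x y p)

end Tube

section Frame

variable {E : Type*} [NormedAddCommGroup E] [InnerProductSpace ℝ E]

lemma norm_comb_sq (a b : E) (ha : ‖a‖ = 1) (hb : ‖b‖ = 1) (hab : ⟪a, b⟫ = 0)
    (u v : ℝ) : ‖u • a + v • b‖ ^ 2 = u ^ 2 + v ^ 2 := by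
  rw [norm_add_sq_real, inner_smul_left, inner_smul_right, hab, norm_smul, norm_smul,
    ha, hb, Real.norm_eq_abs, Real.norm_eq_abs]
  simp [mul_pow, sq_abs]

lemma inner_comb_comb (a b : E) (ha : ‖a‖ = 1) (hb : ‖b‖ = 1) (hab : ⟪a, b⟫ = 0)
    (u v u' v' : ℝ) : ⟪u • a + v • b, u' • a + v' • b⟫ = u * u' + v * v' := by
  have haa : ⟪a, a⟫ = 1 := by rw [real_inner_self_eq_norm_sq, ha]; norm_num
  have hbb : ⟪b, b⟫ = 1 := by rw [real_inner_self_eq_norm_sq, hb]; norm_num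
  have hba : (⟪b, a⟫ : ℝ) = 0 := by rw [real_inner_comm a b, hab]
  rw [inner_add_left, inner_add_right, inner_add_right, inner_smul_left, inner_smul_left,
    inner_smul_left, inner_smul_left, inner_smul_right, inner_smul_right, inner_smul_right,
    inner_smul_right, haa, hbb, hab, hba]
  simp

lemma inner_comb_single (a b w : E) (hwa : ⟪w, a⟫ = 0) (hwb : ⟪w, b⟫ = 0)
    (u v : ℝ) : ⟪u • a + v • b, w⟫ = 0 := by
  rw [inner_add_left, inner_smul_left, inner_smul_left, real_inner_comm w a,
    real_inner_comm w b, hwa, hwb]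
  simp

end Frame

section DerivComp
variable {n : ℕ} (c e₂ e₃ : ℝ → EuclideanSpace ℝ (Fin n)) (x y : ℝ → ℝ)

lemma deriv_s_eq (hx : Differentiable ℝ x) (hy : Differentiable ℝ y) (ε σ s : ℝ) :
    deriv (fun s' : ℝ => c σ + (ε * x s') • e₂ σ + (ε * y s') • e₃ σ) s
      = (ε * deriv x s) • e₂ σ + (ε * deriv y s) • e₃ σ := by
  have h1 : HasDerivAt (fun s' => ε * x s') (ε * deriv x s) s := ((hx s).hasDerivAt).const_mul ε
  have h2 : HasDerivAt (fun s' => ε * y s') (ε * deriv y s) s := ((hy s).hasDerivAt).const_mul ε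
  exact (((h1.smul_const (e₂ σ)).const_add (c σ)).add (h2.smul_const (e₃ σ))).deriv

lemma deriv_sigma_eq (hc : Differentiable ℝ c) (he₂ : Differentiable ℝ e₂)
    (he₃ : Differentiable ℝ e₃) (a b σ : ℝ) :
    deriv (fun σ' : ℝ => c σ' + a • e₂ σ' + b • e₃ σ') σ
      = deriv c σ + a • deriv e₂ σ + b • deriv e₃ σ :=
  ((((hc σ).hasDerivAt).add (((he₂ σ).hasDerivAt).const_smul a)).add
    (((he₃ σ).hasDerivAt).const_smul b)).deriv

lemma deriv_ss_eq (hx : Differentiable ℝ x) (hy : Differentiable ℝ y)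
    (hx' : Differentiable ℝ (deriv x)) (hy' : Differentiable ℝ (deriv y)) (ε σ s : ℝ) :
    deriv (deriv (fun s' : ℝ => c σ + (ε * x s') • e₂ σ + (ε * y s') • e₃ σ)) s
      = (ε * deriv (deriv x) s) • e₂ σ + (ε * deriv (deriv y) s) • e₃ σ := by
  rw [show deriv (fun s' : ℝ => c σ + (ε * x s') • e₂ σ + (ε * y s') • e₃ σ)
      = fun s'' : ℝ => (ε * deriv x s'') • e₂ σ + (ε * deriv y s'') • e₃ σ from
    funext fun s'' => deriv_s_eq c e₂ e₃ x y hx hy ε σ s'']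
  have h1 : HasDerivAt (fun s'' => ε * deriv x s'') (ε * deriv (deriv x) s) s :=
    ((hx' s).hasDerivAt).const_mul ε
  have h2 : HasDerivAt (fun s'' => ε * deriv y s'') (ε * deriv (deriv y) s) s :=
    ((hy' s).hasDerivAt).const_mul ε
  exact ((h1.smul_const (e₂ σ)).add (h2.smul_const (e₃ σ))).deriv

lemma deriv_pair_eq (he₂ : Differentiable ℝ e₂) (he₃ : Differentiable ℝ e₃) (a b σ : ℝ) :
    deriv (fun σ' : ℝ => a • e₂ σ' + b • e₃ σ') σ
      = a • deriv e₂ σ + b • deriv e₃ σ :=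
  ((((he₂ σ).hasDerivAt).const_smul a)).add (((he₃ σ).hasDerivAt).const_smul b) |>.deriv

lemma deriv_mixed_eq (he₂ : Differentiable ℝ e₂) (he₃ : Differentiable ℝ e₃)
    (hx : Differentiable ℝ x) (hy : Differentiable ℝ y) (ε σ s : ℝ) :
    deriv (fun σ' : ℝ =>
        deriv (fun s' : ℝ => c σ' + (ε * x s') • e₂ σ' + (ε * y s') • e₃ σ') s) σ
      = (ε * deriv x s) • deriv e₂ σ + (ε * deriv y s) • deriv e₃ σ := by
  rw [show (fun σ' : ℝ =>
        deriv (fun s' : ℝ => c σ' + (ε * x s') • e₂ σ' + (ε * y s') • e₃ σ') s)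
      = fun σ' : ℝ => (ε * deriv x s) • e₂ σ' + (ε * deriv y s) • e₃ σ' from
    funext fun σ' => deriv_s_eq c e₂ e₃ x y hx hy ε σ' s]
  exact deriv_pair_eq e₂ e₃ he₂ he₃ _ _ σ

lemma deriv_sigmasigma_eq (hc : Differentiable ℝ c) (he₂ : Differentiable ℝ e₂)
    (he₃ : Differentiable ℝ e₃) (hc' : Differentiable ℝ (deriv c))
    (he₂' : Differentiable ℝ (deriv e₂)) (he₃' : Differentiable ℝ (deriv e₃)) (a b σ : ℝ) :
    deriv (deriv (fun σ' : ℝ => c σ' + a • e₂ σ' + b • e₃ σ')) σ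
      = deriv (deriv c) σ + a • deriv (deriv e₂) σ + b • deriv (deriv e₃) σ := by
  rw [show deriv (fun σ' : ℝ => c σ' + a • e₂ σ' + b • e₃ σ')
      = fun σ'' : ℝ => deriv c σ'' + a • deriv e₂ σ'' + b • deriv e₃ σ'' from
    funext fun σ'' => deriv_sigma_eq c e₂ e₃ hc he₂ he₃ a b σ'']
  exact ((((hc' σ).hasDerivAt).add (((he₂' σ).hasDerivAt).const_smul a)).add
    (((he₃' σ).hasDerivAt).const_smul b)).deriv

end DerivComp

lemma perp_of_unit (x y : ℝ → ℝ) (hx : Differentiable ℝ (deriv x))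
    (hy : Differentiable ℝ (deriv y)) (Λ : ℝ) (hΛ : 0 < Λ)
    (hunit : ∀ s ∈ Set.Icc (0:ℝ) Λ, (deriv x s) ^ 2 + (deriv y s) ^ 2 = 1)
    (s : ℝ) (hs : s ∈ Set.Icc (0:ℝ) Λ) :
    deriv x s * deriv (deriv x) s + deriv y s * deriv (deriv y) s = 0 := by
  have hf : HasDerivAt (fun u => deriv x u ^ 2 + deriv y u ^ 2)
      (2 * deriv x s * deriv (deriv x) s + 2 * deriv y s * deriv (deriv y) s) s := by
    have h1 : HasDerivAt (fun u => deriv x u ^ 2) (2 * deriv x s * deriv (deriv x) s) s := by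
      simpa using ((hx s).hasDerivAt).fun_pow 2
    have h2 : HasDerivAt (fun u => deriv y u ^ 2) (2 * deriv y s * deriv (deriv y) s) s := by
      simpa using ((hy s).hasDerivAt).fun_pow 2
    exact h1.add h2
  have hud : UniqueDiffWithinAt ℝ (Set.Icc (0:ℝ) Λ) s := uniqueDiffOn_Icc hΛ s hs
  have hw : HasDerivWithinAt (fun u => deriv x u ^ 2 + deriv y u ^ 2)
      (2 * deriv x s * deriv (deriv x) s + 2 * deriv y s * deriv (deriv y) s)
      (Set.Icc (0:ℝ) Λ) s := hf.hasDerivWithinAt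
  have hconst : HasDerivWithinAt (fun u => deriv x u ^ 2 + deriv y u ^ 2) 0
      (Set.Icc (0:ℝ) Λ) s := by
    have : HasDerivWithinAt (fun _ : ℝ => (1:ℝ)) 0 (Set.Icc (0:ℝ) Λ) s :=
      (hasDerivWithinAt_const _ _ _)
    exact this.congr (fun u hu => (hunit u hu)) (hunit s hs)
  have := hw.derivWithin hud
  rw [hconst.derivWithin hud] at this
  linarith

section ZeroVal
variable {n : ℕ} (c e₂ e₃ : ℝ → EuclideanSpace ℝ (Fin n)) (x y : ℝ → ℝ)

lemma S2v_zero (σ s : ℝ) : S2v c e₂ e₃ x y (0, σ, s) = deriv c σ := by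
  simp [S2v]

lemma T1v_norm_sq (σ s : ℝ) (he₂unit : ‖e₂ σ‖ = 1) (he₃unit : ‖e₃ σ‖ = 1)
    (h23 : ⟪e₂ σ, e₃ σ⟫ = 0) (hu : deriv x s ^ 2 + deriv y s ^ 2 = 1) (ε : ℝ) :
    ‖T1v e₂ e₃ x y (ε, σ, s)‖ ^ 2 = 1 := by
  have : T1v e₂ e₃ x y (ε, σ, s) = deriv x s • e₂ σ + deriv y s • e₃ σ := rfl
  rw [this, norm_comb_sq (e₂ σ) (e₃ σ) he₂unit he₃unit h23, hu]

lemma Gf_zero (σ s : ℝ)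
    (h12 : ⟪deriv c σ, e₂ σ⟫ = 0) (h13 : ⟪deriv c σ, e₃ σ⟫ = 0) :
    (⟪T1v e₂ e₃ x y (0, σ, s), S2v c e₂ e₃ x y (0, σ, s)⟫ : ℝ) = 0 := by
  rw [S2v_zero]
  exact inner_comb_single (e₂ σ) (e₃ σ) (deriv c σ) h12 h13 _ _

lemma Dfv_zero (σ s : ℝ)
    (he₂unit : ‖e₂ σ‖ = 1) (he₃unit : ‖e₃ σ‖ = 1) (hcunit : ‖deriv c σ‖ = 1)
    (h12 : ⟪deriv c σ, e₂ σ⟫ = 0) (h13 : ⟪deriv c σ, e₃ σ⟫ = 0) (h23 : ⟪e₂ σ, e₃ σ⟫ = 0)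
    (hu : deriv x s ^ 2 + deriv y s ^ 2 = 1) :
    Dfv c e₂ e₃ x y (0, σ, s) = 1 := by
  rw [Dfv, T1v_norm_sq e₂ e₃ x y σ s he₂unit he₃unit h23 hu,
    Gf_zero c e₂ e₃ x y σ s h12 h13, S2v_zero, hcunit]
  norm_num

lemma Phif_zero (σ s : ℝ)
    (he₂unit : ‖e₂ σ‖ = 1) (he₃unit : ‖e₃ σ‖ = 1) (hcunit : ‖deriv c σ‖ = 1)
    (h12 : ⟪deriv c σ, e₂ σ⟫ = 0) (h13 : ⟪deriv c σ, e₃ σ⟫ = 0) (h23 : ⟪e₂ σ, e₃ σ⟫ = 0)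
    (hu : deriv x s ^ 2 + deriv y s ^ 2 = 1)
    (hperp : deriv x s * deriv (deriv x) s + deriv y s * deriv (deriv y) s = 0) :
    Phif c e₂ e₃ x y (0, σ, s)
      = |deriv x s * deriv (deriv y) s - deriv y s * deriv (deriv x) s| := by
  have hT1 : T1v e₂ e₃ x y (0, σ, s) = deriv x s • e₂ σ + deriv y s • e₃ σ := rfl
  have hN1 : N1v e₂ e₃ x y (0, σ, s)
      = deriv (deriv x) s • e₂ σ + deriv (deriv y) s • e₃ σ := rfl
  have hS2 : S2v c e₂ e₃ x y (0, σ, s) = deriv c σ := S2v_zero c e₂ e₃ x y σ s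
  have hnT : ‖T1v e₂ e₃ x y (0, σ, s)‖ ^ 2 = 1 :=
    T1v_norm_sq e₂ e₃ x y σ s he₂unit he₃unit h23 hu 0
  have hG : (⟪T1v e₂ e₃ x y (0, σ, s), S2v c e₂ e₃ x y (0, σ, s)⟫ : ℝ) = 0 :=
    Gf_zero c e₂ e₃ x y σ s h12 h13
  have hD1 : Dfv c e₂ e₃ x y (0, σ, s) = 1 :=
    Dfv_zero c e₂ e₃ x y σ s he₂unit he₃unit hcunit h12 h13 h23 hu
  have hNT : (⟪N1v e₂ e₃ x y (0, σ, s), T1v e₂ e₃ x y (0, σ, s)⟫ : ℝ) = 0 := by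
    rw [hN1, hT1, inner_comb_comb (e₂ σ) (e₃ σ) he₂unit he₃unit h23]
    linarith
  have hNS : (⟪N1v e₂ e₃ x y (0, σ, s), S2v c e₂ e₃ x y (0, σ, s)⟫ : ℝ) = 0 := by
    rw [hN1, hS2]
    exact inner_comb_single (e₂ σ) (e₃ σ) (deriv c σ) h12 h13 _ _
  have hQ : Qform (T1v e₂ e₃ x y (0, σ, s)) (S2v c e₂ e₃ x y (0, σ, s))
      (N1v e₂ e₃ x y (0, σ, s)) = N1v e₂ e₃ x y (0, σ, s) := by
    rw [Qform]
    have hcn : ‖S2v c e₂ e₃ x y (0, σ, s)‖ = 1 := by rw [hS2, hcunit]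
    rw [hNT, hNS, hG, hnT, hcn]
    norm_num
  have hzero : (0:ℝ) * x s = 0 := zero_mul _
  rw [Phif]
  have hfst : ((0:ℝ), σ, s).1 = 0 := rfl
  rw [hfst, hD1, hQ]
  have hcn : ‖S2v c e₂ e₃ x y (0, σ, s)‖ = 1 := by rw [hS2, hcunit]
  rw [hcn]
  simp only [zero_mul, zero_smul, add_zero, zero_div, one_pow, div_one, one_smul,
    Real.sqrt_one, mul_one]
  have hns : ‖N1v e₂ e₃ x y (0, σ, s)‖ ^ 2
      = (deriv x s * deriv (deriv y) s - deriv y s * deriv (deriv x) s) ^ 2 := by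
    rw [hN1, norm_comb_sq (e₂ σ) (e₃ σ) he₂unit he₃unit h23]
    nlinarith [hu, hperp]
  calc ‖N1v e₂ e₃ x y (0, σ, s)‖
      = Real.sqrt (‖N1v e₂ e₃ x y (0, σ, s)‖ ^ 2) := (Real.sqrt_sq (norm_nonneg _)).symm
    _ = Real.sqrt ((deriv x s * deriv (deriv y) s - deriv y s * deriv (deriv x) s) ^ 2) := by
        rw [hns]
    _ = |deriv x s * deriv (deriv y) s - deriv y s * deriv (deriv x) s| :=
        Real.sqrt_sq_eq_abs _

end ZeroVal

section Cont
variable {n : ℕ} (c e₂ e₃ : ℝ → EuclideanSpace ℝ (Fin n)) (x y : ℝ → ℝ)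

lemma cont_all (hc : ContDiff ℝ (⊤ : ℕ∞) c) (he₂ : ContDiff ℝ (⊤ : ℕ∞) e₂) (he₃ : ContDiff ℝ (⊤ : ℕ∞) e₃)
    (hx : ContDiff ℝ (⊤ : ℕ∞) x) (hy : ContDiff ℝ (⊤ : ℕ∞) y) :
    Continuous (Dfv c e₂ e₃ x y) ∧
      ContinuousOn (Phif c e₂ e₃ x y) {p | Dfv c e₂ e₃ x y p ≠ 0} := by
  have hσ : Continuous fun p : ℝ × ℝ × ℝ => p.2.1 := continuous_fst.comp continuous_snd
  have hs : Continuous fun p : ℝ × ℝ × ℝ => p.2.2 := continuous_snd.comp continuous_snd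
  have hε : Continuous fun p : ℝ × ℝ × ℝ => p.1 := continuous_fst
  have hx1 : Continuous (deriv x) := hx.continuous_deriv (by simp)
  have hy1 : Continuous (deriv y) := hy.continuous_deriv (by simp)
  have hx2 : Continuous (deriv (deriv x)) :=
    ((contDiff_infty_iff_deriv.mp (hx.of_le (by simp))).2).continuous_deriv (by exact_mod_cast le_top)
  have hy2 : Continuous (deriv (deriv y)) :=
    ((contDiff_infty_iff_deriv.mp (hy.of_le (by simp))).2).continuous_deriv (by exact_mod_cast le_top)
  have hc1 : Continuous (deriv c) := hc.continuous_deriv (by simp)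
  have hc2 : Continuous (deriv (deriv c)) :=
    ((contDiff_infty_iff_deriv.mp (hc.of_le (by simp))).2).continuous_deriv (by exact_mod_cast le_top)
  have he₂1 : Continuous (deriv e₂) := he₂.continuous_deriv (by simp)
  have he₂2 : Continuous (deriv (deriv e₂)) :=
    ((contDiff_infty_iff_deriv.mp (he₂.of_le (by simp))).2).continuous_deriv (by exact_mod_cast le_top)
  have he₃1 : Continuous (deriv e₃) := he₃.continuous_deriv (by simp)
  have he₃2 : Continuous (deriv (deriv e₃)) :=
    ((contDiff_infty_iff_deriv.mp (he₃.of_le (by simp))).2).continuous_deriv (by exact_mod_cast le_top)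
  have hT1 : Continuous (T1v e₂ e₃ x y (n := n)) := by
    unfold T1v
    exact ((hx1.comp hs).smul (he₂.continuous.comp hσ)).add
      ((hy1.comp hs).smul (he₃.continuous.comp hσ))
  have hN1 : Continuous (N1v e₂ e₃ x y (n := n)) := by
    unfold N1v
    exact ((hx2.comp hs).smul (he₂.continuous.comp hσ)).add
      ((hy2.comp hs).smul (he₃.continuous.comp hσ))
  have hS2 : Continuous (S2v c e₂ e₃ x y (n := n)) := by
    unfold S2v
    exact (((hc1.comp hσ).add ((hε.mul (hx.continuous.comp hs)).smul (he₂1.comp hσ)))).add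
      ((hε.mul (hy.continuous.comp hs)).smul (he₃1.comp hσ))
  have hMv : Continuous (Mvv e₂ e₃ x y (n := n)) := by
    unfold Mvv
    exact ((hx1.comp hs).smul (he₂1.comp hσ)).add ((hy1.comp hs).smul (he₃1.comp hσ))
  have hWv : Continuous (Wvv c e₂ e₃ x y (n := n)) := by
    unfold Wvv
    exact (((hc2.comp hσ).add ((hε.mul (hx.continuous.comp hs)).smul (he₂2.comp hσ)))).add
      ((hε.mul (hy.continuous.comp hs)).smul (he₃2.comp hσ))
  have hGf : Continuous fun p => (⟪T1v e₂ e₃ x y p, S2v c e₂ e₃ x y p⟫ : ℝ) :=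
    hT1.inner hS2
  have hDf : Continuous (Dfv c e₂ e₃ x y) := by
    unfold Dfv
    exact (((hT1.norm.pow 2).mul (hS2.norm.pow 2)).sub (hGf.pow 2))
  refine ⟨hDf, ?_⟩
  set S : Set (ℝ × ℝ × ℝ) := {p | Dfv c e₂ e₃ x y p ≠ 0} with hS
  have hid : ∀ p ∈ S, Dfv c e₂ e₃ x y p ≠ 0 := fun p hp => hp
  have hDS : ContinuousOn (Dfv c e₂ e₃ x y) S := hDf.continuousOn
  have hQcont : ∀ (V : (ℝ × ℝ × ℝ) → EuclideanSpace ℝ (Fin n)), Continuous V →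
      ContinuousOn (fun p => Qform (T1v e₂ e₃ x y p) (S2v c e₂ e₃ x y p) (V p)) S := by
    intro V hV
    unfold Qform
    apply ContinuousOn.sub
    apply ContinuousOn.sub
    · exact hV.continuousOn
    · refine ContinuousOn.smul (ContinuousOn.div ?_ ?_ hid) hT1.continuousOn
      · exact (((hS2.norm.pow 2).mul (hV.inner hT1)).sub (hGf.mul (hV.inner hS2))).continuousOn
      · exact hDS
    · refine ContinuousOn.smul (ContinuousOn.div ?_ ?_ hid) hS2.continuousOn
      · exact (((hT1.norm.pow 2).mul (hV.inner hS2)).sub (hGf.mul (hV.inner hT1))).continuousOn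
      · exact hDS
  unfold Phif
  apply ContinuousOn.mul
  · apply ContinuousOn.norm
    apply ContinuousOn.add
    apply ContinuousOn.add
    · exact ContinuousOn.smul (ContinuousOn.div (hS2.norm.pow 2).continuousOn hDS hid)
        (hQcont _ hN1)
    · refine ContinuousOn.smul (hε.continuousOn.mul ?_) (hQcont _ hMv)
      exact (ContinuousOn.div ((continuous_const.mul hGf).continuousOn) hDS hid).neg
    · exact ContinuousOn.smul
        (ContinuousOn.div (hε.mul (hT1.norm.pow 2)).continuousOn hDS hid) (hQcont _ hWv)
  · exact (Real.continuous_sqrt.comp hDf).continuousOn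

end Cont

/-- The mean-curvature density of the tube patch converges uniformly to `|κ(s)|` as
`ε → 0⁺`: `sup_{(σ,s)} | ‖g¹¹A₁₁ + 2g¹²A₁₂ + g²²A₂₂‖ √(det g) - |κ(s)| | → 0`. -/
theorem stmt_8 (n : ℕ) (hn : 3 ≤ n) (L : ℝ) (hL : 0 < L)
    (c e₂ e₃ : ℝ → EuclideanSpace ℝ (Fin n))
    (hc : ContDiff ℝ (⊤ : ℕ∞) c) (he₂ : ContDiff ℝ (⊤ : ℕ∞) e₂) (he₃ : ContDiff ℝ (⊤ : ℕ∞) e₃)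
    (hcper : ∀ σ : ℝ, c (σ + L) = c σ) (he₂per : ∀ σ : ℝ, e₂ (σ + L) = e₂ σ)
    (he₃per : ∀ σ : ℝ, e₃ (σ + L) = e₃ σ)
    (hcunit : ∀ σ : ℝ, ‖deriv c σ‖ = 1)
    (he₂unit : ∀ σ : ℝ, ‖e₂ σ‖ = 1) (he₃unit : ∀ σ : ℝ, ‖e₃ σ‖ = 1)
    (h12 : ∀ σ : ℝ, ⟪deriv c σ, e₂ σ⟫ = 0)
    (h13 : ∀ σ : ℝ, ⟪deriv c σ, e₃ σ⟫ = 0)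
    (h23 : ∀ σ : ℝ, ⟪e₂ σ, e₃ σ⟫ = 0)
    (Λ : ℝ) (hΛ : 0 < Λ) (x y : ℝ → ℝ)
    (hx : ContDiff ℝ (⊤ : ℕ∞) x) (hy : ContDiff ℝ (⊤ : ℕ∞) y)
    (hunit : ∀ s ∈ Set.Icc (0:ℝ) Λ, (deriv x s) ^ 2 + (deriv y s) ^ 2 = 1)
    (hbd : ∀ s ∈ Set.Icc (0:ℝ) Λ, Real.sqrt ((x s) ^ 2 + (y s) ^ 2) ≤ 2) :
    ∀ δ : ℝ, 0 < δ → ∃ εbar : ℝ, 0 < εbar ∧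
      ∀ ε : ℝ, 0 < ε → ε < εbar →
      ∀ σ : ℝ, ∀ s ∈ Set.Icc (0:ℝ) Λ,
        (let S₁ := deriv (fun s' : ℝ => c σ + (ε * x s') • e₂ σ + (ε * y s') • e₃ σ) s
         let S₂ := deriv (fun σ' : ℝ => c σ' + (ε * x s) • e₂ σ' + (ε * y s) • e₃ σ') σ
         let P : EuclideanSpace ℝ (Fin n) → EuclideanSpace ℝ (Fin n) :=
           fun v => (Submodule.orthogonalProjectionOnto (Submodule.span ℝ {S₁, S₂})ᗮ v :
             EuclideanSpace ℝ (Fin n))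
         let A₁₁ := P (deriv
           (deriv (fun s' : ℝ => c σ + (ε * x s') • e₂ σ + (ε * y s') • e₃ σ)) s)
         let A₁₂ := P (deriv (fun σ' : ℝ =>
           deriv (fun s' : ℝ => c σ' + (ε * x s') • e₂ σ' + (ε * y s') • e₃ σ') s) σ)
         let A₂₂ := P (deriv
           (deriv (fun σ' : ℝ => c σ' + (ε * x s) • e₂ σ' + (ε * y s) • e₃ σ')) σ)
         let g₁₁ := ‖S₁‖ ^ 2
         let g₁₂ := ⟪S₁, S₂⟫
         let g₂₂ := ‖S₂‖ ^ 2
         let detg := g₁₁ * g₂₂ - g₁₂ ^ 2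
         let h := ‖(g₂₂ / detg) • A₁₁ + (2 * (-(g₁₂ / detg))) • A₁₂
             + (g₁₁ / detg) • A₂₂‖ * Real.sqrt detg
         abs (h - |deriv x s * deriv (deriv y) s - deriv y s * deriv (deriv x) s|) < δ) := by
  intro δ hδ
  -- differentiability facts
  have hxd : Differentiable ℝ x := hx.differentiable (by simp)
  have hyd : Differentiable ℝ y := hy.differentiable (by simp)
  have hcd : Differentiable ℝ c := hc.differentiable (by simp)
  have he₂d : Differentiable ℝ e₂ := he₂.differentiable (by simp)
  have he₃d : Differentiable ℝ e₃ := he₃.differentiable (by simp)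
  have hx1d : Differentiable ℝ (deriv x) :=
    ((contDiff_infty_iff_deriv.mp (hx.of_le (by simp))).2).differentiable (by simp)
  have hy1d : Differentiable ℝ (deriv y) :=
    ((contDiff_infty_iff_deriv.mp (hy.of_le (by simp))).2).differentiable (by simp)
  have hc1d : Differentiable ℝ (deriv c) :=
    ((contDiff_infty_iff_deriv.mp (hc.of_le (by simp))).2).differentiable (by simp)
  have he₂1d : Differentiable ℝ (deriv e₂) :=
    ((contDiff_infty_iff_deriv.mp (he₂.of_le (by simp))).2).differentiable (by simp)
  have he₃1d : Differentiable ℝ (deriv e₃) :=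
    ((contDiff_infty_iff_deriv.mp (he₃.of_le (by simp))).2).differentiable (by simp)
  -- periodicity of derived maps
  have pc1 : ∀ t, deriv c (t + L) = deriv c t := fun t => periodic_deriv_aux c L t hcper
  have pc2 : ∀ t, deriv (deriv c) (t + L) = deriv (deriv c) t :=
    fun t => periodic_deriv_aux _ L t pc1
  have pe₂1 : ∀ t, deriv e₂ (t + L) = deriv e₂ t := fun t => periodic_deriv_aux e₂ L t he₂per
  have pe₂2 : ∀ t, deriv (deriv e₂) (t + L) = deriv (deriv e₂) t :=
    fun t => periodic_deriv_aux _ L t pe₂1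
  have pe₃1 : ∀ t, deriv e₃ (t + L) = deriv e₃ t := fun t => periodic_deriv_aux e₃ L t he₃per
  have pe₃2 : ∀ t, deriv (deriv e₃) (t + L) = deriv (deriv e₃) t :=
    fun t => periodic_deriv_aux _ L t pe₃1
  -- continuity
  obtain ⟨hDcont, hΦcont⟩ := cont_all c e₂ e₃ x y hc he₂ he₃ hx hy
  -- the open set where D > 1/2
  have hVopen : IsOpen {p : ℝ × ℝ × ℝ | 1/2 < Dfv c e₂ e₃ x y p} :=
    isOpen_lt continuous_const hDcont
  have hK₀c : IsCompact (({(0:ℝ)} : Set ℝ) ×ˢ Set.Icc (0:ℝ) L ×ˢ Set.Icc (0:ℝ) Λ) :=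
    isCompact_singleton.prod (isCompact_Icc.prod isCompact_Icc)
  have hK₀V : (({(0:ℝ)} : Set ℝ) ×ˢ Set.Icc (0:ℝ) L ×ˢ Set.Icc (0:ℝ) Λ)
      ⊆ {p : ℝ × ℝ × ℝ | 1/2 < Dfv c e₂ e₃ x y p} := by
    rintro ⟨ε', σ', s'⟩ ⟨hε', hσ', hs'⟩
    have hε'0 : ε' = 0 := hε'
    subst hε'0
    have : Dfv c e₂ e₃ x y (0, σ', s') = 1 :=
      Dfv_zero c e₂ e₃ x y σ' s' (he₂unit σ') (he₃unit σ') (hcunit σ') (h12 σ') (h13 σ')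
        (h23 σ') (hunit s' hs')
    simp only [Set.mem_setOf_eq, this]
    norm_num
  obtain ⟨r, hr, hthick⟩ := hK₀c.exists_thickening_subset_open hVopen hK₀V
  have hKc : IsCompact (Set.Icc (0:ℝ) (r/2) ×ˢ Set.Icc (0:ℝ) L ×ˢ Set.Icc (0:ℝ) Λ) :=
    isCompact_Icc.prod (isCompact_Icc.prod isCompact_Icc)
  have hKV : (Set.Icc (0:ℝ) (r/2) ×ˢ Set.Icc (0:ℝ) L ×ˢ Set.Icc (0:ℝ) Λ)
      ⊆ {p : ℝ × ℝ × ℝ | 1/2 < Dfv c e₂ e₃ x y p} := by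
    intro p hp
    apply hthick
    rw [Metric.mem_thickening_iff]
    refine ⟨(0, p.2), ⟨rfl, hp.2⟩, ?_⟩
    have h1 : dist p ((0:ℝ), p.2) = max (dist p.1 (0:ℝ)) (dist p.2 p.2) := Prod.dist_eq
    rw [h1, dist_self, Real.dist_eq, sub_zero]
    have hp1 : p.1 ∈ Set.Icc (0:ℝ) (r/2) := hp.1
    have : |p.1| ≤ r/2 := by
      rw [abs_of_nonneg hp1.1]; exact hp1.2
    have hlt : |p.1| < r := lt_of_le_of_lt this (by linarith)
    exact max_lt hlt hr
  have hKne : (Set.Icc (0:ℝ) (r/2) ×ˢ Set.Icc (0:ℝ) L ×ˢ Set.Icc (0:ℝ) Λ)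
      ⊆ {p : ℝ × ℝ × ℝ | Dfv c e₂ e₃ x y p ≠ 0} := by
    intro p hp
    have := hKV hp
    simp only [Set.mem_setOf_eq] at this ⊢
    linarith
  have hUC : UniformContinuousOn (Phif c e₂ e₃ x y)
      (Set.Icc (0:ℝ) (r/2) ×ˢ Set.Icc (0:ℝ) L ×ˢ Set.Icc (0:ℝ) Λ) :=
    hKc.uniformContinuousOn_of_continuous (hΦcont.mono hKne)
  obtain ⟨η, hη, hUC'⟩ := Metric.uniformContinuousOn_iff.mp hUC δ hδ
  refine ⟨min (r/2) η, lt_min (by linarith) hη, ?_⟩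
  intro ε hε0 hεb σ s hs
  -- reduce σ modulo L
  set k : ℤ := ⌊σ / L⌋ with hk
  set σ₀ : ℝ := σ - k * L with hσ₀def
  have hσ₀0 : 0 ≤ σ₀ := Int.sub_floor_div_mul_nonneg σ hL
  have hσ₀L : σ₀ ≤ L := le_of_lt (Int.sub_floor_div_mul_lt σ hL)
  have hσeq : σ = σ₀ + k * L := by rw [hσ₀def]; ring
  have pe₂σ : e₂ σ = e₂ σ₀ := by rw [hσeq]; exact periodic_int_aux e₂ L he₂per k σ₀
  have pe₃σ : e₃ σ = e₃ σ₀ := by rw [hσeq]; exact periodic_int_aux e₃ L he₃per k σ₀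
  have pc1σ : deriv c σ = deriv c σ₀ := by rw [hσeq]; exact periodic_int_aux _ L pc1 k σ₀
  have pc2σ : deriv (deriv c) σ = deriv (deriv c) σ₀ := by
    rw [hσeq]; exact periodic_int_aux _ L pc2 k σ₀
  have pe₂1σ : deriv e₂ σ = deriv e₂ σ₀ := by rw [hσeq]; exact periodic_int_aux _ L pe₂1 k σ₀
  have pe₂2σ : deriv (deriv e₂) σ = deriv (deriv e₂) σ₀ := by
    rw [hσeq]; exact periodic_int_aux _ L pe₂2 k σ₀
  have pe₃1σ : deriv e₃ σ = deriv e₃ σ₀ := by rw [hσeq]; exact periodic_int_aux _ L pe₃1 k σ₀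
  have pe₃2σ : deriv (deriv e₃) σ = deriv (deriv e₃) σ₀ := by
    rw [hσeq]; exact periodic_int_aux _ L pe₃2 k σ₀
  -- membership facts
  have hεr : ε ≤ r/2 := le_of_lt (lt_of_lt_of_le hεb (min_le_left _ _))
  have hp₀K : (ε, σ₀, s) ∈ Set.Icc (0:ℝ) (r/2) ×ˢ Set.Icc (0:ℝ) L ×ˢ Set.Icc (0:ℝ) Λ :=
    ⟨⟨hε0.le, hεr⟩, ⟨hσ₀0, hσ₀L⟩, hs⟩
  have hq₀K : ((0:ℝ), σ₀, s) ∈ Set.Icc (0:ℝ) (r/2) ×ˢ Set.Icc (0:ℝ) L ×ˢ Set.Icc (0:ℝ) Λ :=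
    ⟨⟨le_refl 0, by linarith⟩, ⟨hσ₀0, hσ₀L⟩, hs⟩
  -- transfer of the quantities between σ and σ₀
  have hTper : T1v e₂ e₃ x y (ε, σ, s) = T1v e₂ e₃ x y (ε, σ₀, s) := by
    simp only [T1v, pe₂σ, pe₃σ]
  have hS2per : S2v c e₂ e₃ x y (ε, σ, s) = S2v c e₂ e₃ x y (ε, σ₀, s) := by
    simp only [S2v, pc1σ, pe₂1σ, pe₃1σ]
  have hN1per : N1v e₂ e₃ x y (ε, σ, s) = N1v e₂ e₃ x y (ε, σ₀, s) := by
    simp only [N1v, pe₂σ, pe₃σ]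
  have hMper : Mvv e₂ e₃ x y (ε, σ, s) = Mvv e₂ e₃ x y (ε, σ₀, s) := by
    simp only [Mvv, pe₂1σ, pe₃1σ]
  have hWper : Wvv c e₂ e₃ x y (ε, σ, s) = Wvv c e₂ e₃ x y (ε, σ₀, s) := by
    simp only [Wvv, pc2σ, pe₂2σ, pe₃2σ]
  have hDper : Dfv c e₂ e₃ x y (ε, σ, s) = Dfv c e₂ e₃ x y (ε, σ₀, s) := by
    simp only [Dfv, hTper, hS2per]
  have hΦper : Phif c e₂ e₃ x y (ε, σ, s) = Phif c e₂ e₃ x y (ε, σ₀, s) := by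
    simp only [Phif, hTper, hS2per, hN1per, hMper, hWper, hDper]
  have hDp₀ : 1/2 < Dfv c e₂ e₃ x y (ε, σ₀, s) := hKV hp₀K
  have hDp : 0 < Dfv c e₂ e₃ x y (ε, σ, s) := by rw [hDper]; linarith
  -- the value at ε = 0
  have hperp : deriv x s * deriv (deriv x) s + deriv y s * deriv (deriv y) s = 0 :=
    perp_of_unit x y hx1d hy1d Λ hΛ hunit s hs
  have hκ : Phif c e₂ e₃ x y (0, σ₀, s)
      = |deriv x s * deriv (deriv y) s - deriv y s * deriv (deriv x) s| :=
    Phif_zero c e₂ e₃ x y σ₀ s (he₂unit σ₀) (he₃unit σ₀) (hcunit σ₀) (h12 σ₀) (h13 σ₀)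
      (h23 σ₀) (hunit s hs) hperp
  -- uniform continuity application
  have hdist : dist ((ε, σ₀, s) : ℝ × ℝ × ℝ) (((0:ℝ), σ₀, s) : ℝ × ℝ × ℝ) < η := by
    have h1 : dist ((ε, σ₀, s) : ℝ × ℝ × ℝ) (((0:ℝ), σ₀, s) : ℝ × ℝ × ℝ)
        = max (dist ε (0:ℝ)) (dist ((σ₀, s) : ℝ × ℝ) ((σ₀, s) : ℝ × ℝ)) := Prod.dist_eq
    rw [h1, dist_self, Real.dist_eq, sub_zero, abs_of_pos hε0]
    exact max_lt (lt_of_lt_of_le hεb (min_le_right _ _)) hη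
  have hclose : |Phif c e₂ e₃ x y (ε, σ₀, s) - Phif c e₂ e₃ x y (0, σ₀, s)| < δ := by
    have := hUC' _ hp₀K _ hq₀K hdist
    rwa [Real.dist_eq] at this
  -- final computation
  dsimp only []
  rw [deriv_s_eq c e₂ e₃ x y hxd hyd ε σ s,
    deriv_sigma_eq c e₂ e₃ hcd he₂d he₃d (ε * x s) (ε * y s) σ]
  simp only [deriv_s_eq c e₂ e₃ x y hxd hyd, deriv_ss_eq c e₂ e₃ x y hxd hyd hx1d hy1d,
    deriv_sigma_eq c e₂ e₃ hcd he₂d he₃d,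
    deriv_sigmasigma_eq c e₂ e₃ hcd he₂d he₃d hc1d he₂1d he₃1d,
    deriv_pair_eq e₂ e₃ he₂d he₃d]
  rw [show (ε * deriv x s) • e₂ σ + (ε * deriv y s) • e₃ σ
      = ε • (deriv x s • e₂ σ + deriv y s • e₃ σ) from by module]
  rw [show (ε * deriv (deriv x) s) • e₂ σ + (ε * deriv (deriv y) s) • e₃ σ
      = ε • (deriv (deriv x) s • e₂ σ + deriv (deriv y) s • e₃ σ) from by module]
  rw [show (ε * deriv x s) • deriv e₂ σ + (ε * deriv y s) • deriv e₃ σ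
      = ε • (deriv x s • deriv e₂ σ + deriv y s • deriv e₃ σ) from by module]
  rw [claimA (deriv x s • e₂ σ + deriv y s • e₃ σ)
    (deriv c σ + (ε * x s) • deriv e₂ σ + (ε * y s) • deriv e₃ σ)
    (deriv (deriv x) s • e₂ σ + deriv (deriv y) s • e₃ σ)
    (deriv x s • deriv e₂ σ + deriv y s • deriv e₃ σ)
    (deriv (deriv c) σ + (ε * x s) • deriv (deriv e₂) σ + (ε * y s) • deriv (deriv e₃) σ)
    ε hε0 hDp]
  show abs (Phif c e₂ e₃ x y (ε, σ, s)
      - abs (deriv x s * deriv (deriv y) s - deriv y s * deriv (deriv x) s)) < δ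
  rw [hΦper, ← hκ]
  exact hclose
end

section
/- Let n ≥ 3, L > 0, c : ℝ → ℝⁿ a smooth L-periodic unit-speed curve with e₁ := c', e₂, e₃ : ℝ → ℝⁿ smooth L-periodic maps with e₁(σ), e₂(σ), e₃(σ) orthonormal for every σ, and γ = (x, y) : [0, Λ] → ℝ² smooth unit-speed with |γ(s)| ≤ 2. Then the total mean curvature of the tube patch S_ε converges as ε → 0⁺: lim_{ε→0⁺} (1/2) ∫₀^L ∫₀^Λ ‖g¹¹A₁₁ + 2g¹²A₁₂ + g²²A₂₂‖ √(det g) ds dσ = (L/2) ∫₀^Λ |κ(s)| ds, where κ is the signed curvature of γ. -/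
open scoped RealInnerProductSpace Topology


section est
variable {E : Type*} [NormedAddCommGroup E] [InnerProductSpace ℝ E] [FiniteDimensional ℝ E]

lemma norm_projP_le (K : Submodule ℝ E) (v : E) :
    ‖(Submodule.orthogonalProjectionOnto K v : E)‖ ≤ ‖v‖ := by
  calc ‖(Submodule.orthogonalProjectionOnto K v : E)‖ = ‖Submodule.orthogonalProjectionOnto K v‖ := rfl
    _ ≤ ‖Submodule.orthogonalProjectionOnto K‖ * ‖v‖ := (Submodule.orthogonalProjectionOnto K).le_opNorm v
    _ ≤ 1 * ‖v‖ :=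
        mul_le_mul_of_nonneg_right (Submodule.orthogonalProjectionOnto_norm_le K) (norm_nonneg v)
    _ = ‖v‖ := one_mul _

lemma proj_span_pair_orth (u₁ u₂ v : E)
    (h : ⟪u₁,u₁⟫ * ⟪u₂,u₂⟫ - ⟪u₁,u₂⟫^2 ≠ 0) :
    (Submodule.orthogonalProjectionOnto (Submodule.span ℝ {u₁, u₂})ᗮ v : E)
      = v - (((⟪u₂,u₂⟫*⟪v,u₁⟫ - ⟪u₁,u₂⟫*⟪v,u₂⟫)/(⟪u₁,u₁⟫ * ⟪u₂,u₂⟫ - ⟪u₁,u₂⟫^2)) • u₁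
           + ((⟪u₁,u₁⟫*⟪v,u₂⟫ - ⟪u₁,u₂⟫*⟪v,u₁⟫)/(⟪u₁,u₁⟫ * ⟪u₂,u₂⟫ - ⟪u₁,u₂⟫^2)) • u₂) := by
  set D := ⟪u₁,u₁⟫ * ⟪u₂,u₂⟫ - ⟪u₁,u₂⟫^2 with hD
  set c₁ := (⟪u₂,u₂⟫*⟪v,u₁⟫ - ⟪u₁,u₂⟫*⟪v,u₂⟫)/D with hc₁
  set c₂ := (⟪u₁,u₁⟫*⟪v,u₂⟫ - ⟪u₁,u₂⟫*⟪v,u₁⟫)/D with hc₂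
  set q : E := c₁ • u₁ + c₂ • u₂ with hq
  have hqmem : q ∈ Submodule.span ℝ {u₁, u₂} := Submodule.mem_span_pair.mpr ⟨c₁, c₂, rfl⟩
  have key1 : ⟪u₁, v - q⟫ = 0 := by
    rw [inner_sub_right, hq, inner_add_right, real_inner_smul_right, real_inner_smul_right, hc₁, hc₂]
    field_simp
    simp only [real_inner_comm v u₁, real_inner_comm v u₂, real_inner_comm u₂ u₁]
    ring_nf
    rw [hD, real_inner_comm u₂ u₁]
    ring
  have key2 : ⟪u₂, v - q⟫ = 0 := by
    rw [inner_sub_right, hq, inner_add_right, real_inner_smul_right, real_inner_smul_right, hc₁, hc₂]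
    field_simp
    simp only [real_inner_comm v u₁, real_inner_comm v u₂, real_inner_comm u₂ u₁]
    ring_nf
    rw [hD, real_inner_comm u₂ u₁]
    ring
  have horth : v - q ∈ (Submodule.span ℝ {u₁, u₂})ᗮ := by
    rw [Submodule.mem_orthogonal]
    intro z hz
    obtain ⟨a, b, rfl⟩ := Submodule.mem_span_pair.mp hz
    rw [inner_add_left, real_inner_smul_left, real_inner_smul_left, key1, key2]
    ring
  have : (Submodule.orthogonalProjectionOnto (Submodule.span ℝ {u₁, u₂})ᗮ v : E) = v - q := by
    apply Submodule.eq_starProjection_of_mem_orthogonal' horth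
    · exact Submodule.le_orthogonal_orthogonal _ hqmem
    · abel
  simpa [hq] using this

set_option maxHeartbeats 2000000 in
lemma main_est (T T' U U' U'' V V' V'' : E) (X X' X'' Y Y' Y'' M ε : ℝ)
    (hM : 1 ≤ M)
    (hT : ‖T‖ = 1) (hU : ‖U‖ = 1) (hV : ‖V‖ = 1)
    (hTU : ⟪T,U⟫ = 0) (hTV : ⟪T,V⟫ = 0) (hUV : ⟪U,V⟫ = 0)
    (hT' : ‖T'‖ ≤ M) (hU' : ‖U'‖ ≤ M) (hV' : ‖V'‖ ≤ M)
    (hU'' : ‖U''‖ ≤ M) (hV'' : ‖V''‖ ≤ M)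
    (hX : |X| ≤ 2) (hY : |Y| ≤ 2) (hX'' : |X''| ≤ M) (hY'' : |Y''| ≤ M)
    (hus : X'^2 + Y'^2 = 1) (hpp : X'*X'' + Y'*Y'' = 0)
    (hε : 0 < ε) (hε₀ : ε ≤ 1/(64*M^2))
    (S₁ S₂ W₁₁ W₁₂ W₂₂ : E)
    (hS₁ : S₁ = (ε*X') • U + (ε*Y') • V)
    (hS₂ : S₂ = T + (ε*X) • U' + (ε*Y) • V')
    (hW₁₁ : W₁₁ = (ε*X'') • U + (ε*Y'') • V)
    (hW₁₂ : W₁₂ = (ε*X') • U' + (ε*Y') • V')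
    (hW₂₂ : W₂₂ = T' + (ε*X) • U'' + (ε*Y) • V'')
    (g₁₁ g₁₂ g₂₂ D : ℝ)
    (hg₁₁ : g₁₁ = ‖S₁‖^2) (hg₁₂ : g₁₂ = ⟪S₁,S₂⟫) (hg₂₂ : g₂₂ = ‖S₂‖^2)
    (hDdef : D = g₁₁*g₂₂ - g₁₂^2)
    (PW₁₁ PW₁₂ PW₂₂ : E)
    (hPW₁₁ : PW₁₁ = W₁₁ - (((g₂₂*⟪W₁₁,S₁⟫ - g₁₂*⟪W₁₁,S₂⟫)/D) • S₁
        + ((g₁₁*⟪W₁₁,S₂⟫ - g₁₂*⟪W₁₁,S₁⟫)/D) • S₂))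
    (hPW₁₂ : PW₁₂ = W₁₂ - (((g₂₂*⟪W₁₂,S₁⟫ - g₁₂*⟪W₁₂,S₂⟫)/D) • S₁
        + ((g₁₁*⟪W₁₂,S₂⟫ - g₁₂*⟪W₁₂,S₁⟫)/D) • S₂))
    (hPW₂₂ : PW₂₂ = W₂₂ - (((g₂₂*⟪W₂₂,S₁⟫ - g₁₂*⟪W₂₂,S₂⟫)/D) • S₁
        + ((g₁₁*⟪W₂₂,S₂⟫ - g₁₂*⟪W₂₂,S₁⟫)/D) • S₂)) :
    ε^2/2 ≤ D ∧
    |‖(g₂₂/D) • PW₁₁ + (2*(-(g₁₂/D))) • PW₁₂ + (g₁₁/D) • PW₂₂‖ * Real.sqrt D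
        - Real.sqrt (X''^2 + Y''^2)| ≤ 1000*M^3*ε := by
  have hM0 : (0:ℝ) < M := lt_of_lt_of_le one_pos hM
  have hε1 : ε ≤ 1 := by
    have h1 : 1/(64*M^2) ≤ 1 := by
      rw [div_le_one (by positivity)]; nlinarith only [hM]
    linarith only [h1, hε₀]
  have hMε : M*ε ≤ 1/64 := by
    have h2 : M*ε ≤ M^2*ε := by nlinarith only [hM, hε, mul_pos hM0 hε]
    have h3 := mul_le_mul_of_nonneg_left hε₀ (sq_nonneg M)
    have h4 : M^2*(1/(64*M^2)) = 1/64 := by field_simp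
    linarith only [h2, h3, h4]
  have hMε0 : (0:ℝ) ≤ M*ε := by positivity
  have hMε2 : M^2*ε^2 ≤ 1/4096 := by nlinarith only [hMε, hMε0]
  -- basic inner product values
  have iUU : ⟪U,U⟫ = (1:ℝ) := by rw [real_inner_self_eq_norm_sq, hU]; norm_num
  have iVV : ⟪V,V⟫ = (1:ℝ) := by rw [real_inner_self_eq_norm_sq, hV]; norm_num
  have iUT : ⟪U,T⟫ = (0:ℝ) := by rw [real_inner_comm]; exact hTU
  have iVT : ⟪V,T⟫ = (0:ℝ) := by rw [real_inner_comm]; exact hTV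
  have iVU : ⟪V,U⟫ = (0:ℝ) := by rw [real_inner_comm]; exact hUV
  -- norm of S₁
  have hS₁sq : ‖S₁‖^2 = ε^2 := by
    rw [← real_inner_self_eq_norm_sq, hS₁]
    simp only [inner_add_left, inner_add_right, real_inner_smul_left, real_inner_smul_right,
      iUU, iVV, hUV, iVU]
    linear_combination ε^2 * hus
  have hnS₁ : ‖S₁‖ = ε := by
    rw [← Real.sqrt_sq (norm_nonneg S₁), hS₁sq, Real.sqrt_sq hε.le]
  have habs : ∀ (a:ℝ) (v:E), ‖a • v‖ = |a| * ‖v‖ := fun a v => by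
    rw [norm_smul, Real.norm_eq_abs]
  have hεX : |ε*X| ≤ 2*ε := by
    rw [abs_mul, abs_of_pos hε]; nlinarith only [hX, hε]
  have hεY : |ε*Y| ≤ 2*ε := by
    rw [abs_mul, abs_of_pos hε]; nlinarith only [hY, hε]
  have hX' : |X'| ≤ 1 := by
    nlinarith only [abs_nonneg X', sq_abs X', sq_nonneg Y', hus]
  have hY' : |Y'| ≤ 1 := by
    nlinarith only [abs_nonneg Y', sq_abs Y', sq_nonneg X', hus]
  have hR₂ : ‖S₂ - T‖ ≤ 4*M*ε := by
    have h1 : S₂ - T = (ε*X) • U' + (ε*Y) • V' := by rw [hS₂]; abel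
    have h2 : |ε*X| * ‖U'‖ ≤ (2*ε)*M :=
      mul_le_mul hεX hU' (norm_nonneg _) (by positivity)
    have h3 : |ε*Y| * ‖V'‖ ≤ (2*ε)*M :=
      mul_le_mul hεY hV' (norm_nonneg _) (by positivity)
    calc ‖S₂ - T‖ = ‖(ε*X) • U' + (ε*Y) • V'‖ := by rw [h1]
      _ ≤ ‖(ε*X) • U'‖ + ‖(ε*Y) • V'‖ := norm_add_le _ _
      _ = |ε*X| * ‖U'‖ + |ε*Y| * ‖V'‖ := by rw [habs, habs]
      _ ≤ 4*M*ε := by linarith only [h2, h3]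
  have hS₂u : ‖S₂‖ ≤ 1 + 4*M*ε := by
    have h1 : T + (S₂ - T) = S₂ := by abel
    calc ‖S₂‖ = ‖T + (S₂ - T)‖ := by rw [h1]
      _ ≤ ‖T‖ + ‖S₂ - T‖ := norm_add_le _ _
      _ ≤ 1 + 4*M*ε := by rw [hT]; linarith only [hR₂]
  have hS₂l : 1 - 4*M*ε ≤ ‖S₂‖ := by
    have h1 : ‖T‖ - ‖S₂‖ ≤ ‖T - S₂‖ := norm_sub_norm_le _ _
    rw [norm_sub_rev] at h1
    rw [hT] at h1; linarith only [h1, hR₂]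
  have hS₂2 : ‖S₂‖ ≤ 2 := by linarith only [hS₂u, hMε]
  have hg₂₂b : |g₂₂ - 1| ≤ 10*M*ε := by
    rw [hg₂₂, abs_le]
    constructor
    · nlinarith only [hS₂l, hS₂u, hMε, hMε0, norm_nonneg S₂]
    · nlinarith only [hS₂l, hS₂u, hMε, hMε0, norm_nonneg S₂]
  have hg₂₂bl := (abs_le.mp hg₂₂b).1
  have hg₂₂bu := (abs_le.mp hg₂₂b).2
  have hg₂₂u : g₂₂ ≤ 2 := by linarith only [hg₂₂bu, hMε]
  have hg₂₂l : (1:ℝ)/2 ≤ g₂₂ := by linarith only [hg₂₂bl, hMε]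
  have hiS₁T : ⟪S₁,T⟫ = (0:ℝ) := by
    rw [hS₁]
    simp [inner_add_left, real_inner_smul_left, iUT, iVT]
  have hg₁₂b : |g₁₂| ≤ 4*M*ε^2 := by
    have h2 : ⟪S₁,S₂⟫ = ⟪S₁,T⟫ + ⟪S₁,S₂ - T⟫ := by
      rw [← inner_add_right]; congr 1; abel
    have h3 : |⟪S₁,S₂ - T⟫| ≤ ‖S₁‖ * ‖S₂ - T‖ := abs_real_inner_le_norm _ _
    rw [hg₁₂, h2, hiS₁T, zero_add]
    calc |⟪S₁,S₂ - T⟫| ≤ ‖S₁‖ * ‖S₂ - T‖ := h3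
      _ ≤ ε * (4*M*ε) := by rw [hnS₁]; exact mul_le_mul_of_nonneg_left hR₂ hε.le
      _ = 4*M*ε^2 := by ring
  have hg₁₂sq : g₁₂^2 ≤ 16*M^2*ε^4 := by
    nlinarith only [hg₁₂b, abs_nonneg g₁₂, sq_abs g₁₂]
  have hDl : ε^2/2 ≤ D := by
    rw [hDdef, hg₁₁, hS₁sq]
    nlinarith only [hg₂₂bl, hg₁₂sq, hMε, hMε2, sq_nonneg ε, mul_pos hε hε, hMε0]
  have hDu : D ≤ 2*ε^2 := by
    rw [hDdef, hg₁₁, hS₁sq]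
    nlinarith only [sq_nonneg g₁₂, hg₂₂u, sq_nonneg ε]
  have hD0 : 0 < D := lt_of_lt_of_le (by positivity) hDl
  set d := Real.sqrt D with hddef
  have hd2 : d^2 = D := Real.sq_sqrt hD0.le
  have hd0 : 0 < d := Real.sqrt_pos.mpr hD0
  have hd_u : d ≤ 2*ε := by
    have h1 : d ≤ Real.sqrt ((2*ε)^2) :=
      Real.sqrt_le_sqrt (by nlinarith only [hDu, sq_nonneg ε])
    rwa [Real.sqrt_sq (by positivity)] at h1
  set κ := Real.sqrt (X''^2 + Y''^2) with hκdef
  have hκ0 : 0 ≤ κ := Real.sqrt_nonneg _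
  have hκ2 : κ^2 = X''^2 + Y''^2 := Real.sq_sqrt (by positivity)
  have hκu : κ ≤ 2*M := by
    have h1 : κ ≤ Real.sqrt ((2*M)^2) := by
      apply Real.sqrt_le_sqrt
      nlinarith only [hX'', hY'', abs_nonneg X'', abs_nonneg Y'', sq_abs X'', sq_abs Y'', hM]
    rwa [Real.sqrt_sq (by positivity)] at h1
  have hW₁₁sq : ‖W₁₁‖^2 = ε^2*(X''^2 + Y''^2) := by
    rw [← real_inner_self_eq_norm_sq, hW₁₁]
    simp only [inner_add_left, inner_add_right, real_inner_smul_left, real_inner_smul_right,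
      iUU, iVV, hUV, iVU]
    ring
  have hnW₁₁ : ‖W₁₁‖ = ε*κ := by
    rw [← Real.sqrt_sq (norm_nonneg W₁₁), hW₁₁sq,
      show ε^2*(X''^2+Y''^2) = (ε*κ)^2 by rw [mul_pow, hκ2],
      Real.sqrt_sq (by positivity)]
  have hWS₁ : ⟪W₁₁,S₁⟫ = (0:ℝ) := by
    rw [hW₁₁, hS₁]
    simp only [inner_add_left, inner_add_right, real_inner_smul_left, real_inner_smul_right,
      iUU, iVV, hUV, iVU]
    linear_combination ε^2 * hpp
  have hWT : ⟪W₁₁,T⟫ = (0:ℝ) := by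
    rw [hW₁₁]
    simp [inner_add_left, real_inner_smul_left, iUT, iVT]
  have hWS₂b : |⟪W₁₁,S₂⟫| ≤ 4*M*ε^2*κ := by
    have h2 : ⟪W₁₁,S₂⟫ = ⟪W₁₁,T⟫ + ⟪W₁₁,S₂ - T⟫ := by
      rw [← inner_add_right]; congr 1; abel
    have h3 : |⟪W₁₁,S₂ - T⟫| ≤ ‖W₁₁‖ * ‖S₂ - T‖ := abs_real_inner_le_norm _ _
    rw [h2, hWT, zero_add]
    calc |⟪W₁₁,S₂ - T⟫| ≤ ‖W₁₁‖ * ‖S₂ - T‖ := h3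
      _ ≤ (ε*κ) * (4*M*ε) := by
          rw [hnW₁₁]
          exact mul_le_mul_of_nonneg_left hR₂ (by positivity)
      _ = 4*M*ε^2*κ := by ring
  -- bound on the projection correction for W₁₁
  have hPd : ‖PW₁₁ - W₁₁‖ ≤ 48*M^2*ε^2*κ := by
    set a₁ := (g₂₂*⟪W₁₁,S₁⟫ - g₁₂*⟪W₁₁,S₂⟫)/D with ha₁def
    set a₂ := (g₁₁*⟪W₁₁,S₂⟫ - g₁₂*⟪W₁₁,S₁⟫)/D with ha₂def
    have ha₁ : |a₁| ≤ 32*M^2*ε^2*κ := by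
      have hnum : |g₂₂*⟪W₁₁,S₁⟫ - g₁₂*⟪W₁₁,S₂⟫| ≤ 16*M^2*ε^4*κ := by
        rw [hWS₁, mul_zero, zero_sub, abs_neg, abs_mul]
        calc |g₁₂| * |⟪W₁₁,S₂⟫| ≤ (4*M*ε^2) * (4*M*ε^2*κ) :=
              mul_le_mul hg₁₂b hWS₂b (abs_nonneg _) (by positivity)
          _ = 16*M^2*ε^4*κ := by ring
      have h4 : |a₁| = |g₂₂*⟪W₁₁,S₁⟫ - g₁₂*⟪W₁₁,S₂⟫|/D := by
        rw [ha₁def, abs_div, abs_of_pos hD0]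
      have h6 : (16*M^2*ε^4*κ)/(ε^2/2) = 32*M^2*ε^2*κ := by
        field_simp
        ring
      rw [h4, ← h6]
      exact div_le_div₀ (by positivity) hnum (by positivity) hDl
    have ha₂ : |a₂| ≤ 8*M*ε^2*κ := by
      have hnum : |g₁₁*⟪W₁₁,S₂⟫ - g₁₂*⟪W₁₁,S₁⟫| ≤ 4*M*ε^4*κ := by
        rw [hWS₁, mul_zero, sub_zero, abs_mul, hg₁₁, hS₁sq,
          abs_of_pos (by positivity : (0:ℝ) < ε^2)]
        calc ε^2 * |⟪W₁₁,S₂⟫| ≤ ε^2 * (4*M*ε^2*κ) :=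
              mul_le_mul_of_nonneg_left hWS₂b (by positivity)
          _ = 4*M*ε^4*κ := by ring
      have h4 : |a₂| = |g₁₁*⟪W₁₁,S₂⟫ - g₁₂*⟪W₁₁,S₁⟫|/D := by
        rw [ha₂def, abs_div, abs_of_pos hD0]
      have h6 : (4*M*ε^4*κ)/(ε^2/2) = 8*M*ε^2*κ := by
        field_simp
        ring
      rw [h4, ← h6]
      exact div_le_div₀ (by positivity) hnum (by positivity) hDl
    have h5 : PW₁₁ - W₁₁ = -(a₁ • S₁ + a₂ • S₂) := by rw [hPW₁₁]; abel
    rw [h5, norm_neg]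
    have h6 : |a₁| * ‖S₁‖ ≤ (32*M^2*ε^2*κ)*ε := by
      rw [hnS₁]; exact mul_le_mul_of_nonneg_right ha₁ hε.le
    have h7 : |a₂| * ‖S₂‖ ≤ (8*M*ε^2*κ)*2 :=
      mul_le_mul ha₂ hS₂2 (norm_nonneg _) (by positivity)
    have hM2εκ : (0:ℝ) ≤ M^2*ε^2*κ := by positivity
    have hMεκ : (0:ℝ) ≤ M*ε^2*κ := by positivity
    calc ‖a₁ • S₁ + a₂ • S₂‖ ≤ ‖a₁ • S₁‖ + ‖a₂ • S₂‖ := norm_add_le _ _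
      _ = |a₁| * ‖S₁‖ + |a₂| * ‖S₂‖ := by rw [habs, habs]
      _ ≤ 48*M^2*ε^2*κ := by
          nlinarith only [h6, h7, hε1, hM, hκ0, hM2εκ, hMεκ, hε.le]
  -- contraction property via the orthogonal projection
  have hproj : ∀ w Pw : E, Pw = w - (((g₂₂*⟪w,S₁⟫ - g₁₂*⟪w,S₂⟫)/D) • S₁
      + ((g₁₁*⟪w,S₂⟫ - g₁₂*⟪w,S₁⟫)/D) • S₂) → ‖Pw‖ ≤ ‖w‖ := by
    intro w Pw hPw
    have e11 : ⟪S₁,S₁⟫ = g₁₁ := by rw [hg₁₁, real_inner_self_eq_norm_sq]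
    have e22 : ⟪S₂,S₂⟫ = g₂₂ := by rw [hg₂₂, real_inner_self_eq_norm_sq]
    have hD' : ⟪S₁,S₁⟫ * ⟪S₂,S₂⟫ - ⟪S₁,S₂⟫^2 ≠ 0 := by
      rw [e11, e22, ← hg₁₂, ← hDdef]; exact ne_of_gt hD0
    have hform := proj_span_pair_orth S₁ S₂ w hD'
    rw [e11, e22, ← hg₁₂, ← hDdef] at hform
    rw [hPw, ← hform]
    exact norm_projP_le _ _
  have hW₁₂n : ‖W₁₂‖ ≤ 2*M*ε := by
    have h2 : |ε*X'| * ‖U'‖ ≤ (ε*1)*M := by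
      apply mul_le_mul _ hU' (norm_nonneg _) (by positivity)
      rw [abs_mul, abs_of_pos hε]
      exact mul_le_mul_of_nonneg_left hX' hε.le
    have h3 : |ε*Y'| * ‖V'‖ ≤ (ε*1)*M := by
      apply mul_le_mul _ hV' (norm_nonneg _) (by positivity)
      rw [abs_mul, abs_of_pos hε]
      exact mul_le_mul_of_nonneg_left hY' hε.le
    calc ‖W₁₂‖ = ‖(ε*X') • U' + (ε*Y') • V'‖ := by rw [hW₁₂]
      _ ≤ ‖(ε*X') • U'‖ + ‖(ε*Y') • V'‖ := norm_add_le _ _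
      _ = |ε*X'| * ‖U'‖ + |ε*Y'| * ‖V'‖ := by rw [habs, habs]
      _ ≤ 2*M*ε := by linarith only [h2, h3]
  have hW₂₂n : ‖W₂₂‖ ≤ 2*M := by
    have h2 : |ε*X| * ‖U''‖ ≤ (2*ε)*M :=
      mul_le_mul hεX hU'' (norm_nonneg _) (by positivity)
    have h3 : |ε*Y| * ‖V''‖ ≤ (2*ε)*M :=
      mul_le_mul hεY hV'' (norm_nonneg _) (by positivity)
    have h8 : 4*(M*ε) ≤ M := by linarith only [hMε, hM]
    calc ‖W₂₂‖ = ‖T' + (ε*X) • U'' + (ε*Y) • V''‖ := by rw [hW₂₂]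
      _ ≤ ‖T' + (ε*X) • U''‖ + ‖(ε*Y) • V''‖ := norm_add_le _ _
      _ ≤ ‖T'‖ + ‖(ε*X) • U''‖ + ‖(ε*Y) • V''‖ := by
          have h9 := norm_add_le T' ((ε*X) • U'')
          linarith only [h9, norm_nonneg ((ε*Y) • V'')]
      _ = ‖T'‖ + |ε*X| * ‖U''‖ + |ε*Y| * ‖V''‖ := by rw [habs, habs]
      _ ≤ 2*M := by linarith only [h2, h3, hT', h8]
  have hPW₁₂n : ‖PW₁₂‖ ≤ 2*M*ε := le_trans (hproj W₁₂ PW₁₂ hPW₁₂) hW₁₂n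
  have hPW₂₂n : ‖PW₂₂‖ ≤ 2*M := le_trans (hproj W₂₂ PW₂₂ hPW₂₂) hW₂₂n
  -- assemble
  set Z := (g₂₂/D) • PW₁₁ + (2*(-(g₁₂/D))) • PW₁₂ + (g₁₁/D) • PW₂₂ with hZdef
  set Z₀ := (g₂₂/D) • W₁₁ with hZ₀def
  have hg₂₂D : g₂₂/D ≤ 4/ε^2 := by
    have h1 : g₂₂/D ≤ 2/(ε^2/2) := div_le_div₀ (by norm_num) hg₂₂u (by positivity) hDl
    have h2 : 2/(ε^2/2) = 4/ε^2 := by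
      field_simp; norm_num
    linarith only [h1, h2]
  have hg₂₂D0 : 0 < g₂₂/D := div_pos (by linarith only [hg₂₂l]) hD0
  have hZd : ‖Z - Z₀‖ ≤ 420*M^3 := by
    have hsplit : Z - Z₀ = (g₂₂/D) • (PW₁₁ - W₁₁) + (2*(-(g₁₂/D))) • PW₁₂
        + (g₁₁/D) • PW₂₂ := by
      rw [hZdef, hZ₀def, smul_sub]; abel
    have t1 : |g₂₂/D| * ‖PW₁₁ - W₁₁‖ ≤ (4/ε^2)*(48*M^2*ε^2*κ) := by
      rw [abs_of_pos hg₂₂D0]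
      exact mul_le_mul hg₂₂D hPd (norm_nonneg _) (by positivity)
    have t1' : (4/ε^2)*(48*M^2*ε^2*κ) = 192*M^2*κ := by
      field_simp
      ring
    have t2 : |2*(-(g₁₂/D))| ≤ 16*M := by
      rw [abs_mul, abs_neg, abs_div, abs_of_pos hD0]
      have h8 : |g₁₂|/D ≤ (4*M*ε^2)/(ε^2/2) :=
        div_le_div₀ (by positivity) hg₁₂b (by positivity) hDl
      have h9 : (4*M*ε^2)/(ε^2/2) = 8*M := by
        field_simp
        ring
      rw [show |(2:ℝ)| = 2 by norm_num]
      rw [h9] at h8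
      linarith only [h8]
    have t2' : |2*(-(g₁₂/D))| * ‖PW₁₂‖ ≤ (16*M)*(2*M*ε) :=
      mul_le_mul t2 hPW₁₂n (norm_nonneg _) (by positivity)
    have t3a : g₁₁/D ≤ 2 := by
      rw [hg₁₁, hS₁sq, div_le_iff₀ hD0]; linarith only [hDl]
    have t3 : |g₁₁/D| * ‖PW₂₂‖ ≤ 2*(2*M) := by
      rw [abs_of_pos (by rw [hg₁₁, hS₁sq]; positivity)]
      exact mul_le_mul t3a hPW₂₂n (norm_nonneg _) (by norm_num)
    have hκM : 192*M^2*κ ≤ 384*M^3 := by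
      nlinarith only [hκu, sq_nonneg M, hκ0, hM0.le]
    have hM2 : (1:ℝ) ≤ M^2 := by nlinarith only [hM]
    have ht2'' : (16*M)*(2*M*ε) ≤ 32*M^3 := by
      nlinarith only [hε1, hM, sq_nonneg M, hε.le, hM0.le, hM2]
    have ht3' : 2*(2*M) ≤ 4*M^3 := by
      nlinarith only [hM2, hM0.le, hM]
    rw [t1'] at t1
    calc ‖Z - Z₀‖ = ‖(g₂₂/D) • (PW₁₁ - W₁₁) + (2*(-(g₁₂/D))) • PW₁₂ + (g₁₁/D) • PW₂₂‖ := by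
          rw [hsplit]
      _ ≤ ‖(g₂₂/D) • (PW₁₁ - W₁₁) + (2*(-(g₁₂/D))) • PW₁₂‖ + ‖(g₁₁/D) • PW₂₂‖ :=
          norm_add_le _ _
      _ ≤ ‖(g₂₂/D) • (PW₁₁ - W₁₁)‖ + ‖(2*(-(g₁₂/D))) • PW₁₂‖ + ‖(g₁₁/D) • PW₂₂‖ := by
          have h10 := norm_add_le ((g₂₂/D) • (PW₁₁ - W₁₁)) ((2*(-(g₁₂/D))) • PW₁₂)
          linarith only [h10]
      _ = |g₂₂/D| * ‖PW₁₁ - W₁₁‖ + |2*(-(g₁₂/D))| * ‖PW₁₂‖ + |g₁₁/D| * ‖PW₂₂‖ := by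
          rw [habs, habs, habs]
      _ ≤ 420*M^3 := by linarith only [t1, t2', t3, hκM, ht2'', ht3']
  -- main term
  have hnZ₀ : ‖Z₀‖ = (g₂₂/D)*(ε*κ) := by
    rw [hZ₀def, habs, abs_of_pos hg₂₂D0, hnW₁₁]
  set r := g₂₂*ε/d with hrdef
  have hr0 : 0 < r := by
    apply div_pos _ hd0
    exact mul_pos (by linarith only [hg₂₂l]) hε
  have hZ₀d : ‖Z₀‖*d = κ*r := by
    rw [hnZ₀, hrdef, ← hd2]
    field_simp
  have hr2eq : r^2 = g₂₂^2*ε^2/D := by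
    rw [hrdef, div_pow, hd2, mul_pow]
  have hr2 : |r^2 - 1| ≤ 42*M*ε := by
    have hA : |ε^2*g₂₂*(g₂₂-1)| ≤ 20*M*ε^3 := by
      rw [abs_mul]
      have h11 : |ε^2*g₂₂| ≤ 2*ε^2 := by
        rw [abs_mul, abs_of_pos (by positivity : (0:ℝ) < ε^2),
          abs_of_pos (by linarith only [hg₂₂l] : (0:ℝ) < g₂₂)]
        nlinarith only [hg₂₂u, sq_nonneg ε]
      calc |ε^2*g₂₂| * |g₂₂-1| ≤ (2*ε^2) * (10*M*ε) :=
            mul_le_mul h11 hg₂₂b (abs_nonneg _) (by positivity)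
        _ = 20*M*ε^3 := by ring
    have hMε3 : (0:ℝ) ≤ M*ε^3 := by positivity
    have hB : g₁₂^2 ≤ M*ε^3 := by
      nlinarith only [hg₁₂sq, hMε, hMε3, hMε0, hε, sq_nonneg ε, hMε2]
    have hnum : |ε^2*g₂₂*(g₂₂-1) + g₁₂^2| ≤ 21*M*ε^3 := by
      calc |ε^2*g₂₂*(g₂₂-1) + g₁₂^2| ≤ |ε^2*g₂₂*(g₂₂-1)| + |g₁₂^2| := abs_add_le _ _
        _ = |ε^2*g₂₂*(g₂₂-1)| + g₁₂^2 := by rw [abs_of_nonneg (sq_nonneg g₁₂)]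
        _ ≤ 21*M*ε^3 := by linarith only [hA, hB]
    have hsub : g₂₂^2*ε^2 - D = ε^2*g₂₂*(g₂₂-1) + g₁₂^2 := by
      rw [hDdef, hg₁₁, hS₁sq]; ring
    have heq : r^2 - 1 = (ε^2*g₂₂*(g₂₂-1) + g₁₂^2)/D := by
      rw [hr2eq, ← hsub]
      field_simp
    have h12 : (21*M*ε^3)/(ε^2/2) = 42*M*ε := by
      field_simp
      ring
    rw [heq, abs_div, abs_of_pos hD0, ← h12]
    exact div_le_div₀ (by positivity) hnum (by positivity) hDl
  have hr1 : |r - 1| ≤ 42*M*ε := by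
    rw [abs_le] at hr2 ⊢
    constructor
    · nlinarith only [hr2.1, hr2.2, hr0.le, hMε, sq_nonneg (r-1), sq_nonneg (1-r), hMε0]
    · nlinarith only [hr2.1, hr2.2, hr0.le, hMε, sq_nonneg (r-1), sq_nonneg (1-r), hMε0]
  refine ⟨hDl, ?_⟩
  have h1 : |‖Z‖ - ‖Z₀‖| ≤ 420*M^3 := le_trans (abs_norm_sub_norm_le Z Z₀) hZd
  have htri : |‖Z‖*d - κ| ≤ |‖Z‖*d - ‖Z₀‖*d| + |‖Z₀‖*d - κ| := abs_sub_le _ _ _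
  have h2 : |‖Z‖*d - ‖Z₀‖*d| ≤ 420*M^3*(2*ε) := by
    rw [show ‖Z‖*d - ‖Z₀‖*d = (‖Z‖ - ‖Z₀‖)*d by ring, abs_mul, abs_of_pos hd0]
    exact mul_le_mul h1 hd_u hd0.le (by positivity)
  have h3 : |‖Z₀‖*d - κ| ≤ 84*M^2*ε := by
    rw [hZ₀d, show κ*r - κ = κ*(r-1) by ring, abs_mul, abs_of_nonneg hκ0]
    calc κ*|r-1| ≤ (2*M)*(42*M*ε) := mul_le_mul hκu hr1 (abs_nonneg _) (by positivity)
      _ = 84*M^2*ε := by ring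
  have hM2ε : (0:ℝ) ≤ M^2*ε := by positivity
  nlinarith only [htri, h2, h3, hM, hM2ε]


noncomputable def PFormula {E : Type*} [NormedAddCommGroup E] [InnerProductSpace ℝ E]
    (S₁ S₂ w : E) : E :=
  w - (((‖S₂‖^2*⟪w,S₁⟫ - ⟪S₁,S₂⟫*⟪w,S₂⟫)/(‖S₁‖^2*‖S₂‖^2 - ⟪S₁,S₂⟫^2)) • S₁
     + ((‖S₁‖^2*⟪w,S₂⟫ - ⟪S₁,S₂⟫*⟪w,S₁⟫)/(‖S₁‖^2*‖S₂‖^2 - ⟪S₁,S₂⟫^2)) • S₂)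

noncomputable def tubeVal {E : Type*} [NormedAddCommGroup E] [InnerProductSpace ℝ E]
    (S₁ S₂ W11 W12 W22 : E) : ℝ :=
  ‖(‖S₂‖^2/(‖S₁‖^2*‖S₂‖^2 - ⟪S₁,S₂⟫^2)) • PFormula S₁ S₂ W11
   + (2*(-(⟪S₁,S₂⟫/(‖S₁‖^2*‖S₂‖^2 - ⟪S₁,S₂⟫^2)))) • PFormula S₁ S₂ W12
   + (‖S₁‖^2/(‖S₁‖^2*‖S₂‖^2 - ⟪S₁,S₂⟫^2)) • PFormula S₁ S₂ W22‖
  * Real.sqrt (‖S₁‖^2*‖S₂‖^2 - ⟪S₁,S₂⟫^2)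

section pack
variable {E : Type*} [NormedAddCommGroup E] [InnerProductSpace ℝ E]

lemma tubeVal_eq_proj [FiniteDimensional ℝ E] (S₁ S₂ W11 W12 W22 : E)
    (hD : ‖S₁‖^2*‖S₂‖^2 - ⟪S₁,S₂⟫^2 ≠ 0) :
    ‖(‖S₂‖^2/(‖S₁‖^2*‖S₂‖^2 - ⟪S₁,S₂⟫^2)) •
        (Submodule.orthogonalProjectionOnto (Submodule.span ℝ {S₁, S₂})ᗮ W11 : E)
      + (2*(-(⟪S₁,S₂⟫/(‖S₁‖^2*‖S₂‖^2 - ⟪S₁,S₂⟫^2)))) •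
        (Submodule.orthogonalProjectionOnto (Submodule.span ℝ {S₁, S₂})ᗮ W12 : E)
      + (‖S₁‖^2/(‖S₁‖^2*‖S₂‖^2 - ⟪S₁,S₂⟫^2)) •
        (Submodule.orthogonalProjectionOnto (Submodule.span ℝ {S₁, S₂})ᗮ W22 : E)‖
      * Real.sqrt (‖S₁‖^2*‖S₂‖^2 - ⟪S₁,S₂⟫^2)
    = tubeVal S₁ S₂ W11 W12 W22 := by
  have hD' : ⟪S₁,S₁⟫ * ⟪S₂,S₂⟫ - ⟪S₁,S₂⟫^2 ≠ 0 := by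
    rwa [real_inner_self_eq_norm_sq, real_inner_self_eq_norm_sq]
  have h1 := proj_span_pair_orth S₁ S₂ W11 hD'
  have h2 := proj_span_pair_orth S₁ S₂ W12 hD'
  have h3 := proj_span_pair_orth S₁ S₂ W22 hD'
  rw [real_inner_self_eq_norm_sq, real_inner_self_eq_norm_sq] at h1 h2 h3
  rw [h1, h2, h3]
  rfl

lemma tubeVal_continuous {X : Type*} [TopologicalSpace X]
    (f₁ f₂ w₁ w₂ w₃ : X → E)
    (h₁ : Continuous f₁) (h₂ : Continuous f₂) (hw₁ : Continuous w₁)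
    (hw₂ : Continuous w₂) (hw₃ : Continuous w₃)
    (hD : ∀ p, ‖f₁ p‖^2*‖f₂ p‖^2 - ⟪f₁ p, f₂ p⟫^2 ≠ 0) :
    Continuous fun p => tubeVal (f₁ p) (f₂ p) (w₁ p) (w₂ p) (w₃ p) := by
  have hDc : Continuous fun p => ‖f₁ p‖^2*‖f₂ p‖^2 - ⟪f₁ p, f₂ p⟫^2 :=
    ((h₁.norm.pow 2).mul (h₂.norm.pow 2)).sub ((h₁.inner h₂).pow 2)
  have hPF : ∀ (w : X → E), Continuous w →
      Continuous fun p => PFormula (f₁ p) (f₂ p) (w p) := by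
    intro w hw
    unfold PFormula
    apply hw.sub
    apply Continuous.add
    · exact (Continuous.div (((h₂.norm.pow 2).mul (hw.inner h₁)).sub
        ((h₁.inner h₂).mul (hw.inner h₂))) hDc hD).smul h₁
    · exact (Continuous.div (((h₁.norm.pow 2).mul (hw.inner h₂)).sub
        ((h₁.inner h₂).mul (hw.inner h₁))) hDc hD).smul h₂
  unfold tubeVal
  apply Continuous.mul
  · apply Continuous.norm
    apply Continuous.add
    apply Continuous.add
    · exact ((h₂.norm.pow 2).div hDc hD).smul (hPF w₁ hw₁)
    · exact (continuous_const.mul ((h₁.inner h₂).div hDc hD).neg).smul (hPF w₂ hw₂)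
    · exact ((h₁.norm.pow 2).div hDc hD).smul (hPF w₃ hw₃)
  · exact Real.continuous_sqrt.comp hDc

lemma tubeVal_est [FiniteDimensional ℝ E]
    (T T' U U' U'' V V' V'' : E) (X X' X'' Y Y' Y'' M ε : ℝ)
    (hM : 1 ≤ M)
    (hT : ‖T‖ = 1) (hU : ‖U‖ = 1) (hV : ‖V‖ = 1)
    (hTU : ⟪T,U⟫ = 0) (hTV : ⟪T,V⟫ = 0) (hUV : ⟪U,V⟫ = 0)
    (hT' : ‖T'‖ ≤ M) (hU' : ‖U'‖ ≤ M) (hV' : ‖V'‖ ≤ M)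
    (hU'' : ‖U''‖ ≤ M) (hV'' : ‖V''‖ ≤ M)
    (hX : |X| ≤ 2) (hY : |Y| ≤ 2) (hX'' : |X''| ≤ M) (hY'' : |Y''| ≤ M)
    (hus : X'^2 + Y'^2 = 1) (hpp : X'*X'' + Y'*Y'' = 0)
    (hε : 0 < ε) (hε₀ : ε ≤ 1/(64*M^2)) :
    ε^2/2 ≤ ‖(ε*X') • U + (ε*Y') • V‖^2 * ‖T + (ε*X) • U' + (ε*Y) • V'‖^2
        - ⟪(ε*X') • U + (ε*Y') • V, T + (ε*X) • U' + (ε*Y) • V'⟫^2 ∧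
    |tubeVal ((ε*X') • U + (ε*Y') • V) (T + (ε*X) • U' + (ε*Y) • V')
        ((ε*X'') • U + (ε*Y'') • V) ((ε*X') • U' + (ε*Y') • V')
        (T' + (ε*X) • U'' + (ε*Y) • V'')
      - Real.sqrt (X''^2 + Y''^2)| ≤ 1000*M^3*ε := by
  exact main_est T T' U U' U'' V V' V'' X X' X'' Y Y' Y'' M ε hM hT hU hV hTU hTV hUV
    hT' hU' hV' hU'' hV'' hX hY hX'' hY'' hus hpp hε hε₀
    _ _ _ _ _ rfl rfl rfl rfl rfl _ _ _ _ rfl rfl rfl rfl _ _ _ rfl rfl rfl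

lemma integrand_eq {E : Type*} [NormedAddCommGroup E] [InnerProductSpace ℝ E]
    [FiniteDimensional ℝ E]
    (S₁ S₂ W11 W12 W22 : E) (hD : ‖S₁‖^2*‖S₂‖^2 - ⟪S₁,S₂⟫^2 ≠ 0)
    (D1 D2 W1 W2 W3 : E) (h1 : S₁ = D1) (h2 : S₂ = D2) (h3 : W11 = W1)
    (h4 : W12 = W2) (h5 : W22 = W3) :
    (let S₁' := D1
     let S₂' := D2
     let P : E → E := fun v => (Submodule.orthogonalProjectionOnto (Submodule.span ℝ {S₁', S₂'})ᗮ v : E)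
     let A₁₁ := P W1
     let A₁₂ := P W2
     let A₂₂ := P W3
     let g₁₁ := ‖S₁'‖ ^ 2
     let g₁₂ := ⟪S₁', S₂'⟫
     let g₂₂ := ‖S₂'‖ ^ 2
     let detg := g₁₁ * g₂₂ - g₁₂ ^ 2
     ‖(g₂₂ / detg) • A₁₁ + (2 * (-(g₁₂ / detg))) • A₁₂
         + (g₁₁ / detg) • A₂₂‖ * Real.sqrt detg)
    = tubeVal S₁ S₂ W11 W12 W22 := by
  subst h1 h2 h3 h4 h5
  show ‖(‖S₂‖^2/(‖S₁‖^2*‖S₂‖^2 - ⟪S₁,S₂⟫^2)) •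
        (Submodule.orthogonalProjectionOnto (Submodule.span ℝ {S₁, S₂})ᗮ W11 : E)
      + (2*(-(⟪S₁,S₂⟫/(‖S₁‖^2*‖S₂‖^2 - ⟪S₁,S₂⟫^2)))) •
        (Submodule.orthogonalProjectionOnto (Submodule.span ℝ {S₁, S₂})ᗮ W12 : E)
      + (‖S₁‖^2/(‖S₁‖^2*‖S₂‖^2 - ⟪S₁,S₂⟫^2)) •
        (Submodule.orthogonalProjectionOnto (Submodule.span ℝ {S₁, S₂})ᗮ W22 : E)‖
      * Real.sqrt (‖S₁‖^2*‖S₂‖^2 - ⟪S₁,S₂⟫^2)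
    = tubeVal S₁ S₂ W11 W12 W22
  exact tubeVal_eq_proj S₁ S₂ W11 W12 W22 hD
end pack


section derivs
variable {F : Type*} [NormedAddCommGroup F] [NormedSpace ℝ F]

lemma deriv_aux1 (u v w : F) (a b : ℝ → ℝ) (ha : Differentiable ℝ a)
    (hb : Differentiable ℝ b) (t : ℝ) :
    deriv (fun t' => u + a t' • v + b t' • w) t = deriv a t • v + deriv b t • w := by
  have h1 : HasDerivAt (fun t' => u + a t' • v + b t' • w)
      (deriv a t • v + deriv b t • w) t := by
    have := (((ha t).hasDerivAt.smul_const v).const_add u).add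
      ((hb t).hasDerivAt.smul_const w)
    exact this
  exact h1.deriv

lemma deriv_aux2 (f g h : ℝ → F) (a b : ℝ) (hf : Differentiable ℝ f)
    (hg : Differentiable ℝ g) (hh : Differentiable ℝ h) (t : ℝ) :
    deriv (fun t' => f t' + a • g t' + b • h t') t
      = deriv f t + a • deriv g t + b • deriv h t := by
  have h1 : HasDerivAt (fun t' => f t' + a • g t' + b • h t')
      (deriv f t + a • deriv g t + b • deriv h t) t := by
    exact ((hf t).hasDerivAt.add ((hg t).hasDerivAt.const_smul a)).add
      ((hh t).hasDerivAt.const_smul b)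
  exact h1.deriv

lemma contDiff_deriv {f : ℝ → F} (hf : ContDiff ℝ (⊤ : ℕ∞) f) :
    ContDiff ℝ (⊤ : ℕ∞) (deriv f) :=
  (contDiff_infty_iff_deriv.mp hf).2

lemma smooth_of_top {f : ℝ → F} (hf : ContDiff ℝ (⊤ : ℕ∞) f) : ContDiff ℝ (⊤ : ℕ∞) f :=
  hf.of_le (by simp)

lemma diff_of_contDiff {f : ℝ → F} (hf : ContDiff ℝ (⊤ : ℕ∞) f) : Differentiable ℝ f :=
  hf.differentiable (by simp)

end derivs


section aux2
variable {F : Type*} [NormedAddCommGroup F] [NormedSpace ℝ F]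

lemma deriv_aux0 (v w : F) (a b : ℝ → ℝ) (ha : Differentiable ℝ a)
    (hb : Differentiable ℝ b) (t : ℝ) :
    deriv (fun t' => a t' • v + b t' • w) t = deriv a t • v + deriv b t • w := by
  have h1 : HasDerivAt (fun t' => a t' • v + b t' • w)
      (deriv a t • v + deriv b t • w) t :=
    ((ha t).hasDerivAt.smul_const v).add ((hb t).hasDerivAt.smul_const w)
  exact h1.deriv

lemma deriv_aux2b (g h : ℝ → F) (a b : ℝ)
    (hg : Differentiable ℝ g) (hh : Differentiable ℝ h) (t : ℝ) :
    deriv (fun t' => a • g t' + b • h t') t = a • deriv g t + b • deriv h t := by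
  have h1 : HasDerivAt (fun t' => a • g t' + b • h t')
      (a • deriv g t + b • deriv h t) t :=
    ((hg t).hasDerivAt.const_smul a).add ((hh t).hasDerivAt.const_smul b)
  exact h1.deriv

lemma deriv_periodic (f : ℝ → F) (L : ℝ) (hf : ∀ σ, f (σ + L) = f σ) (σ : ℝ) :
    deriv f (σ + L) = deriv f σ := by
  have h1 : f = fun t => f (t + L) := funext fun t => (hf t).symm
  conv_rhs => rw [h1]
  rw [deriv_comp_add_const]

lemma curv_eq (X' X'' Y' Y'' : ℝ) (hus : X'^2 + Y'^2 = 1)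
    (hpp : X'*X'' + Y'*Y'' = 0) :
    Real.sqrt (X''^2 + Y''^2) = |X'*Y'' - Y'*X''| := by
  rw [← Real.sqrt_sq_eq_abs]
  congr 1
  nlinarith only [hus, hpp, sq_nonneg X', sq_nonneg Y']

lemma unit_speed_perp (x y : ℝ → ℝ) (hx : ContDiff ℝ (⊤:ℕ∞) x) (hy : ContDiff ℝ (⊤:ℕ∞) y)
    (Λ : ℝ) (hΛ : 0 < Λ)
    (hunit : ∀ s ∈ Set.Icc (0:ℝ) Λ, (deriv x s)^2 + (deriv y s)^2 = 1) :
    ∀ s ∈ Set.Icc (0:ℝ) Λ,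
      deriv x s * deriv (deriv x) s + deriv y s * deriv (deriv y) s = 0 := by
  have hx1 : ContDiff ℝ (⊤:ℕ∞) (deriv x) := (contDiff_infty_iff_deriv.mp hx).2
  have hy1 : ContDiff ℝ (⊤:ℕ∞) (deriv y) := (contDiff_infty_iff_deriv.mp hy).2
  have hx2 : ContDiff ℝ (⊤:ℕ∞) (deriv (deriv x)) := (contDiff_infty_iff_deriv.mp hx1).2
  have hy2 : ContDiff ℝ (⊤:ℕ∞) (deriv (deriv y)) := (contDiff_infty_iff_deriv.mp hy1).2
  set ψ : ℝ → ℝ := fun s => deriv x s * deriv (deriv x) s + deriv y s * deriv (deriv y) s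
    with hψ
  have hψc : Continuous ψ := by
    apply Continuous.add
    · exact (hx1.continuous).mul (hx2.continuous)
    · exact (hy1.continuous).mul (hy2.continuous)
  have hIoo : ∀ s ∈ Set.Ioo (0:ℝ) Λ, ψ s = 0 := by
    intro s hs
    have hder : HasDerivAt (fun t => (deriv x t)^2 + (deriv y t)^2) (2 * ψ s) s := by
      have h1 : HasDerivAt (fun t => (deriv x t)^2)
          (2 * deriv x s * deriv (deriv x) s) s := by
        have := ((hx1.differentiable (by simp) s).hasDerivAt).pow 2
        exact this.congr_deriv (by simp [mul_comm, mul_assoc, mul_left_comm])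
      have h2 : HasDerivAt (fun t => (deriv y t)^2)
          (2 * deriv y s * deriv (deriv y) s) s := by
        have := ((hy1.differentiable (by simp) s).hasDerivAt).pow 2
        exact this.congr_deriv (by simp [mul_comm, mul_assoc, mul_left_comm])
      have h3 := h1.add h2
      exact h3.congr_deriv (by rw [hψ]; ring)
    have hev : (fun t => (deriv x t)^2 + (deriv y t)^2) =ᶠ[𝓝 s] (fun _ => (1:ℝ)) := by
      filter_upwards [Icc_mem_nhds hs.1 hs.2] with t ht
      exact hunit t ht
    have hder2 : HasDerivAt (fun t => (deriv x t)^2 + (deriv y t)^2) 0 s := by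
      have hc : HasDerivAt (fun _ : ℝ => (1:ℝ)) 0 s := hasDerivAt_const s 1
      exact hc.congr_of_eventuallyEq hev
    have := hder.unique hder2
    linarith only [this]
  have hclosure : Set.EqOn ψ (fun _ => (0:ℝ)) (closure (Set.Ioo (0:ℝ) Λ)) :=
    Set.EqOn.closure (fun s hs => hIoo s hs) hψc continuous_const
  intro s hs
  have h4 : s ∈ closure (Set.Ioo (0:ℝ) Λ) := by
    rw [closure_Ioo (show (0:ℝ) ≠ Λ from hΛ.ne)]; exact hs
  exact hclosure h4

lemma abs_le_two_of_sqrt (a b : ℝ) (h : Real.sqrt (a^2 + b^2) ≤ 2) : |a| ≤ 2 := by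
  have h1 : Real.sqrt (a^2) ≤ Real.sqrt (a^2 + b^2) :=
    Real.sqrt_le_sqrt (by nlinarith only [sq_nonneg b])
  rw [Real.sqrt_sq_eq_abs] at h1
  linarith only [h1, h]
end aux2


set_option maxHeartbeats 2000000 in
/-- Convergence of the total mean curvature of the tube patch:
`(1/2) ∫₀^L ∫₀^Λ ‖g¹¹A₁₁ + 2g¹²A₁₂ + g²²A₂₂‖ √(det g) ds dσ → (L/2) ∫₀^Λ |κ(s)| ds`
as `ε → 0⁺`. -/
theorem stmt_9 (n : ℕ) (hn : 3 ≤ n) (L : ℝ) (hL : 0 < L)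
    (c e₂ e₃ : ℝ → EuclideanSpace ℝ (Fin n))
    (hc : ContDiff ℝ (⊤ : ℕ∞) c) (he₂ : ContDiff ℝ (⊤ : ℕ∞) e₂) (he₃ : ContDiff ℝ (⊤ : ℕ∞) e₃)
    (hcper : ∀ σ : ℝ, c (σ + L) = c σ) (he₂per : ∀ σ : ℝ, e₂ (σ + L) = e₂ σ)
    (he₃per : ∀ σ : ℝ, e₃ (σ + L) = e₃ σ)
    (hcunit : ∀ σ : ℝ, ‖deriv c σ‖ = 1)
    (he₂unit : ∀ σ : ℝ, ‖e₂ σ‖ = 1) (he₃unit : ∀ σ : ℝ, ‖e₃ σ‖ = 1)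
    (h12 : ∀ σ : ℝ, ⟪deriv c σ, e₂ σ⟫ = 0)
    (h13 : ∀ σ : ℝ, ⟪deriv c σ, e₃ σ⟫ = 0)
    (h23 : ∀ σ : ℝ, ⟪e₂ σ, e₃ σ⟫ = 0)
    (Λ : ℝ) (hΛ : 0 < Λ) (x y : ℝ → ℝ)
    (hx : ContDiff ℝ (⊤ : ℕ∞) x) (hy : ContDiff ℝ (⊤ : ℕ∞) y)
    (hunit : ∀ s ∈ Set.Icc (0:ℝ) Λ, (deriv x s) ^ 2 + (deriv y s) ^ 2 = 1)
    (hbd : ∀ s ∈ Set.Icc (0:ℝ) Λ, Real.sqrt ((x s) ^ 2 + (y s) ^ 2) ≤ 2) :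
    Filter.Tendsto
      (fun ε : ℝ =>
        (1/2) * ∫ σ in (0:ℝ)..L, ∫ s in (0:ℝ)..Λ,
          (let S₁ := deriv (fun s' : ℝ => c σ + (ε * x s') • e₂ σ + (ε * y s') • e₃ σ) s
           let S₂ := deriv (fun σ' : ℝ => c σ' + (ε * x s) • e₂ σ' + (ε * y s) • e₃ σ') σ
           let P : EuclideanSpace ℝ (Fin n) → EuclideanSpace ℝ (Fin n) :=
             fun v => (Submodule.orthogonalProjectionOnto (Submodule.span ℝ {S₁, S₂})ᗮ v :
               EuclideanSpace ℝ (Fin n))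
           let A₁₁ := P (deriv
             (deriv (fun s' : ℝ => c σ + (ε * x s') • e₂ σ + (ε * y s') • e₃ σ)) s)
           let A₁₂ := P (deriv (fun σ' : ℝ =>
             deriv (fun s' : ℝ => c σ' + (ε * x s') • e₂ σ' + (ε * y s') • e₃ σ') s) σ)
           let A₂₂ := P (deriv
             (deriv (fun σ' : ℝ => c σ' + (ε * x s) • e₂ σ' + (ε * y s) • e₃ σ')) σ)
           let g₁₁ := ‖S₁‖ ^ 2
           let g₁₂ := ⟪S₁, S₂⟫
           let g₂₂ := ‖S₂‖ ^ 2
           let detg := g₁₁ * g₂₂ - g₁₂ ^ 2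
           ‖(g₂₂ / detg) • A₁₁ + (2 * (-(g₁₂ / detg))) • A₁₂
               + (g₁₁ / detg) • A₂₂‖ * Real.sqrt detg))
      (𝓝[>] 0)
      (𝓝 ((L/2) * ∫ s in (0:ℝ)..Λ,
        |deriv x s * deriv (deriv y) s - deriv y s * deriv (deriv x) s|)) := by
  have hc0 : ContDiff ℝ (⊤:ℕ∞) c := hc.of_le (by simp)
  have he₂0 : ContDiff ℝ (⊤:ℕ∞) e₂ := he₂.of_le (by simp)
  have he₃0 : ContDiff ℝ (⊤:ℕ∞) e₃ := he₃.of_le (by simp)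
  have hx0 : ContDiff ℝ (⊤:ℕ∞) x := hx.of_le (by simp)
  have hy0 : ContDiff ℝ (⊤:ℕ∞) y := hy.of_le (by simp)
  set x1 := deriv x with hx1def
  set y1 := deriv y with hy1def
  set x2 := deriv x1 with hx2def
  set y2 := deriv y1 with hy2def
  set c1 := deriv c with hc1def
  set c2 := deriv c1 with hc2def
  set e₂1 := deriv e₂ with he₂1def
  set e₂2 := deriv e₂1 with he₂2def
  set e₃1 := deriv e₃ with he₃1def
  set e₃2 := deriv e₃1 with he₃2def
  -- smoothness of derivatives
  have hx1s : ContDiff ℝ (⊤:ℕ∞) x1 := by rw [hx1def]; exact contDiff_deriv hx0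
  have hy1s : ContDiff ℝ (⊤:ℕ∞) y1 := by rw [hy1def]; exact contDiff_deriv hy0
  have hx2s : ContDiff ℝ (⊤:ℕ∞) x2 := by rw [hx2def]; exact contDiff_deriv hx1s
  have hy2s : ContDiff ℝ (⊤:ℕ∞) y2 := by rw [hy2def]; exact contDiff_deriv hy1s
  have hc1s : ContDiff ℝ (⊤:ℕ∞) c1 := by rw [hc1def]; exact contDiff_deriv hc0
  have hc2s : ContDiff ℝ (⊤:ℕ∞) c2 := by rw [hc2def]; exact contDiff_deriv hc1s
  have he₂1s : ContDiff ℝ (⊤:ℕ∞) e₂1 := by rw [he₂1def]; exact contDiff_deriv he₂0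
  have he₂2s : ContDiff ℝ (⊤:ℕ∞) e₂2 := by rw [he₂2def]; exact contDiff_deriv he₂1s
  have he₃1s : ContDiff ℝ (⊤:ℕ∞) e₃1 := by rw [he₃1def]; exact contDiff_deriv he₃0
  have he₃2s : ContDiff ℝ (⊤:ℕ∞) e₃2 := by rw [he₃2def]; exact contDiff_deriv he₃1s
  have hxd : Differentiable ℝ x := diff_of_contDiff hx0
  have hyd : Differentiable ℝ y := diff_of_contDiff hy0
  have hx1d : Differentiable ℝ x1 := diff_of_contDiff hx1s
  have hy1d : Differentiable ℝ y1 := diff_of_contDiff hy1s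
  have hcd : Differentiable ℝ c := diff_of_contDiff hc0
  have he₂d : Differentiable ℝ e₂ := diff_of_contDiff he₂0
  have he₃d : Differentiable ℝ e₃ := diff_of_contDiff he₃0
  have hc1d : Differentiable ℝ c1 := diff_of_contDiff hc1s
  have he₂1d : Differentiable ℝ e₂1 := diff_of_contDiff he₂1s
  have he₃1d : Differentiable ℝ e₃1 := diff_of_contDiff he₃1s
  -- periodicity of derivatives
  have hc1per : ∀ σ, c1 (σ + L) = c1 σ := by
    intro σ; rw [hc1def]; exact deriv_periodic c L hcper σ
  have hc2per : ∀ σ, c2 (σ + L) = c2 σ := by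
    intro σ; rw [hc2def]; exact deriv_periodic c1 L hc1per σ
  have he₂1per : ∀ σ, e₂1 (σ + L) = e₂1 σ := by
    intro σ; rw [he₂1def]; exact deriv_periodic e₂ L he₂per σ
  have he₂2per : ∀ σ, e₂2 (σ + L) = e₂2 σ := by
    intro σ; rw [he₂2def]; exact deriv_periodic e₂1 L he₂1per σ
  have he₃1per : ∀ σ, e₃1 (σ + L) = e₃1 σ := by
    intro σ; rw [he₃1def]; exact deriv_periodic e₃ L he₃per σ
  have he₃2per : ∀ σ, e₃2 (σ + L) = e₃2 σ := by
    intro σ; rw [he₃2def]; exact deriv_periodic e₃1 L he₃1per σ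
  -- compactness bounds
  obtain ⟨C₁, hC₁⟩ := (isCompact_Icc : IsCompact (Set.Icc (0:ℝ) L)).exists_bound_of_continuousOn
    (hc2s.continuous.continuousOn)
  obtain ⟨C₂, hC₂⟩ := (isCompact_Icc : IsCompact (Set.Icc (0:ℝ) L)).exists_bound_of_continuousOn
    (he₂1s.continuous.continuousOn)
  obtain ⟨C₃, hC₃⟩ := (isCompact_Icc : IsCompact (Set.Icc (0:ℝ) L)).exists_bound_of_continuousOn
    (he₂2s.continuous.continuousOn)
  obtain ⟨C₄, hC₄⟩ := (isCompact_Icc : IsCompact (Set.Icc (0:ℝ) L)).exists_bound_of_continuousOn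
    (he₃1s.continuous.continuousOn)
  obtain ⟨C₅, hC₅⟩ := (isCompact_Icc : IsCompact (Set.Icc (0:ℝ) L)).exists_bound_of_continuousOn
    (he₃2s.continuous.continuousOn)
  obtain ⟨B₁, hB₁⟩ := (isCompact_Icc : IsCompact (Set.Icc (0:ℝ) Λ)).exists_bound_of_continuousOn
    (hx2s.continuous.continuousOn)
  obtain ⟨B₂, hB₂⟩ := (isCompact_Icc : IsCompact (Set.Icc (0:ℝ) Λ)).exists_bound_of_continuousOn
    (hy2s.continuous.continuousOn)
  set M := 1 + |C₁| + |C₂| + |C₃| + |C₄| + |C₅| + |B₁| + |B₂| with hMdef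
  have habs0 : (0:ℝ) ≤ |C₁| + |C₂| + |C₃| + |C₄| + |C₅| + |B₁| + |B₂| := by positivity
  have hM1 : 1 ≤ M := by rw [hMdef]; linarith only [habs0]
  have hMc2 : ∀ σ, ‖c2 σ‖ ≤ M := by
    intro σ
    obtain ⟨τ, hτ, heq⟩ := Function.Periodic.exists_mem_Ico₀ hc2per hL σ
    rw [heq]
    refine le_trans (hC₁ τ (Set.Ico_subset_Icc_self hτ)) ?_
    rw [hMdef]
    have := le_abs_self C₁
    have h2 : (0:ℝ) ≤ |C₂| + |C₃| + |C₄| + |C₅| + |B₁| + |B₂| := by positivity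
    linarith
  have hMe₂1 : ∀ σ, ‖e₂1 σ‖ ≤ M := by
    intro σ
    obtain ⟨τ, hτ, heq⟩ := Function.Periodic.exists_mem_Ico₀ he₂1per hL σ
    rw [heq]
    refine le_trans (hC₂ τ (Set.Ico_subset_Icc_self hτ)) ?_
    rw [hMdef]
    have := le_abs_self C₂
    have h2 : (0:ℝ) ≤ |C₁| + |C₃| + |C₄| + |C₅| + |B₁| + |B₂| := by positivity
    linarith
  have hMe₂2 : ∀ σ, ‖e₂2 σ‖ ≤ M := by
    intro σ
    obtain ⟨τ, hτ, heq⟩ := Function.Periodic.exists_mem_Ico₀ he₂2per hL σ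
    rw [heq]
    refine le_trans (hC₃ τ (Set.Ico_subset_Icc_self hτ)) ?_
    rw [hMdef]
    have := le_abs_self C₃
    have h2 : (0:ℝ) ≤ |C₁| + |C₂| + |C₄| + |C₅| + |B₁| + |B₂| := by positivity
    linarith
  have hMe₃1 : ∀ σ, ‖e₃1 σ‖ ≤ M := by
    intro σ
    obtain ⟨τ, hτ, heq⟩ := Function.Periodic.exists_mem_Ico₀ he₃1per hL σ
    rw [heq]
    refine le_trans (hC₄ τ (Set.Ico_subset_Icc_self hτ)) ?_
    rw [hMdef]
    have := le_abs_self C₄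
    have h2 : (0:ℝ) ≤ |C₁| + |C₂| + |C₃| + |C₅| + |B₁| + |B₂| := by positivity
    linarith
  have hMe₃2 : ∀ σ, ‖e₃2 σ‖ ≤ M := by
    intro σ
    obtain ⟨τ, hτ, heq⟩ := Function.Periodic.exists_mem_Ico₀ he₃2per hL σ
    rw [heq]
    refine le_trans (hC₅ τ (Set.Ico_subset_Icc_self hτ)) ?_
    rw [hMdef]
    have := le_abs_self C₅
    have h2 : (0:ℝ) ≤ |C₁| + |C₂| + |C₃| + |C₄| + |B₁| + |B₂| := by positivity
    linarith
  have hMx2 : ∀ s ∈ Set.Icc (0:ℝ) Λ, |x2 s| ≤ M := by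
    intro s hs
    have h1 := hB₁ s hs
    rw [Real.norm_eq_abs] at h1
    refine le_trans h1 ?_
    rw [hMdef]
    have := le_abs_self B₁
    have h2 : (0:ℝ) ≤ |C₁| + |C₂| + |C₃| + |C₄| + |C₅| + |B₂| := by positivity
    linarith
  have hMy2 : ∀ s ∈ Set.Icc (0:ℝ) Λ, |y2 s| ≤ M := by
    intro s hs
    have h1 := hB₂ s hs
    rw [Real.norm_eq_abs] at h1
    refine le_trans h1 ?_
    rw [hMdef]
    have := le_abs_self B₂
    have h2 : (0:ℝ) ≤ |C₁| + |C₂| + |C₃| + |C₄| + |C₅| + |B₁| := by positivity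
    linarith
  have hXb : ∀ s ∈ Set.Icc (0:ℝ) Λ, |x s| ≤ 2 := fun s hs =>
    abs_le_two_of_sqrt (x s) (y s) (hbd s hs)
  have hYb : ∀ s ∈ Set.Icc (0:ℝ) Λ, |y s| ≤ 2 := fun s hs =>
    abs_le_two_of_sqrt (y s) (x s) (by rw [add_comm]; exact hbd s hs)
  have hppIcc : ∀ s ∈ Set.Icc (0:ℝ) Λ, x1 s * x2 s + y1 s * y2 s = 0 := by
    intro s hs
    rw [hx2def, hy2def, hx1def, hy1def]
    exact unit_speed_perp x y hx0 hy0 Λ hΛ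
      (fun t ht => by rw [← hx1def, ← hy1def]; exact hunit t ht) s hs
  -- clamping
  set clamp : ℝ → ℝ := fun s => max 0 (min s Λ) with hclampdef
  have hclampc : Continuous clamp := by
    rw [hclampdef]
    exact Continuous.max continuous_const (continuous_id.min continuous_const)
  have hclampmem : ∀ s, clamp s ∈ Set.Icc (0:ℝ) Λ := by
    intro s
    rw [hclampdef]
    exact ⟨le_max_left _ _, max_le hΛ.le (min_le_right _ _)⟩
  have hclampid : ∀ s ∈ Set.Icc (0:ℝ) Λ, clamp s = s := by
    intro s hs
    rw [hclampdef]
    simp only [min_eq_left hs.2, max_eq_right hs.1]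
  set ε₀ : ℝ := 1/(64*M^2) with hε₀def
  have hM0 : (0:ℝ) < M := lt_of_lt_of_le one_pos hM1
  have hε₀pos : 0 < ε₀ := by rw [hε₀def]; positivity
  -- the master pointwise estimate
  have EST : ∀ (σ s : ℝ), s ∈ Set.Icc (0:ℝ) Λ → ∀ ε : ℝ, 0 < ε → ε ≤ ε₀ →
      ε^2/2 ≤ ‖(ε * x1 s) • e₂ σ + (ε * y1 s) • e₃ σ‖^2
          * ‖c1 σ + (ε * x s) • e₂1 σ + (ε * y s) • e₃1 σ‖^2
        - ⟪(ε * x1 s) • e₂ σ + (ε * y1 s) • e₃ σ,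
            c1 σ + (ε * x s) • e₂1 σ + (ε * y s) • e₃1 σ⟫^2 ∧
      |tubeVal ((ε * x1 s) • e₂ σ + (ε * y1 s) • e₃ σ)
          (c1 σ + (ε * x s) • e₂1 σ + (ε * y s) • e₃1 σ)
          ((ε * x2 s) • e₂ σ + (ε * y2 s) • e₃ σ)
          ((ε * x1 s) • e₂1 σ + (ε * y1 s) • e₃1 σ)
          (c2 σ + (ε * x s) • e₂2 σ + (ε * y s) • e₃2 σ)
        - Real.sqrt ((x2 s)^2 + (y2 s)^2)| ≤ 1000*M^3*ε := by
    intro σ s hs ε hε hεle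
    exact tubeVal_est (c1 σ) (c2 σ) (e₂ σ) (e₂1 σ) (e₂2 σ) (e₃ σ) (e₃1 σ) (e₃2 σ)
      (x s) (x1 s) (x2 s) (y s) (y1 s) (y2 s) M ε hM1 (hcunit σ) (he₂unit σ) (he₃unit σ)
      (h12 σ) (h13 σ) (h23 σ) (hMc2 σ) (hMe₂1 σ) (hMe₃1 σ) (hMe₂2 σ) (hMe₃2 σ)
      (hXb s hs) (hYb s hs) (hMx2 s hs) (hMy2 s hs) (hunit s hs) (hppIcc s hs) hε
      (by rwa [hε₀def] at hεle)
  -- the explicit continuous integrand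
  set Gc : ℝ → ℝ → ℝ → ℝ := fun ε σ s =>
    tubeVal ((ε * x1 (clamp s)) • e₂ σ + (ε * y1 (clamp s)) • e₃ σ)
      (c1 σ + (ε * x (clamp s)) • e₂1 σ + (ε * y (clamp s)) • e₃1 σ)
      ((ε * x2 (clamp s)) • e₂ σ + (ε * y2 (clamp s)) • e₃ σ)
      ((ε * x1 (clamp s)) • e₂1 σ + (ε * y1 (clamp s)) • e₃1 σ)
      (c2 σ + (ε * x (clamp s)) • e₂2 σ + (ε * y (clamp s)) • e₃2 σ) with hGcdef
  have hGclamp : ∀ (ε σ s : ℝ), s ∈ Set.Icc (0:ℝ) Λ →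
      Gc ε σ s = tubeVal ((ε * x1 s) • e₂ σ + (ε * y1 s) • e₃ σ)
        (c1 σ + (ε * x s) • e₂1 σ + (ε * y s) • e₃1 σ)
        ((ε * x2 s) • e₂ σ + (ε * y2 s) • e₃ σ)
        ((ε * x1 s) • e₂1 σ + (ε * y1 s) • e₃1 σ)
        (c2 σ + (ε * x s) • e₂2 σ + (ε * y s) • e₃2 σ) := by
    intro ε σ s hs
    simp only [hGcdef]
    rw [hclampid s hs]
  -- derivative computations
  have e1 : ∀ (ε σ' t : ℝ),
      deriv (fun s' : ℝ => c σ' + (ε * x s') • e₂ σ' + (ε * y s') • e₃ σ') t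
        = (ε * x1 t) • e₂ σ' + (ε * y1 t) • e₃ σ' := by
    intro ε σ' t
    rw [show (ε * x1 t) • e₂ σ' = deriv (fun s' => ε * x s') t • e₂ σ' by
        rw [deriv_const_mul ε (hxd t), ← hx1def],
      show (ε * y1 t) • e₃ σ' = deriv (fun s' => ε * y s') t • e₃ σ' by
        rw [deriv_const_mul ε (hyd t), ← hy1def]]
    exact deriv_aux1 (c σ') (e₂ σ') (e₃ σ') _ _ (hxd.const_mul ε) (hyd.const_mul ε) t
  have e2 : ∀ (a b τ : ℝ),
      deriv (fun σ' : ℝ => c σ' + a • e₂ σ' + b • e₃ σ') τ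
        = c1 τ + a • e₂1 τ + b • e₃1 τ := by
    intro a b τ
    rw [hc1def, he₂1def, he₃1def]
    exact deriv_aux2 c e₂ e₃ a b hcd he₂d he₃d τ
  have eA11 : ∀ (ε σ' t : ℝ),
      deriv (deriv (fun s' : ℝ => c σ' + (ε * x s') • e₂ σ' + (ε * y s') • e₃ σ')) t
        = (ε * x2 t) • e₂ σ' + (ε * y2 t) • e₃ σ' := by
    intro ε σ' t
    have hfn : deriv (fun s' : ℝ => c σ' + (ε * x s') • e₂ σ' + (ε * y s') • e₃ σ')
        = fun t' => (ε * x1 t') • e₂ σ' + (ε * y1 t') • e₃ σ' := funext fun t' => e1 ε σ' t'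
    rw [hfn,
      show (ε * x2 t) • e₂ σ' = deriv (fun t' => ε * x1 t') t • e₂ σ' by
        rw [deriv_const_mul ε (hx1d t), ← hx2def],
      show (ε * y2 t) • e₃ σ' = deriv (fun t' => ε * y1 t') t • e₃ σ' by
        rw [deriv_const_mul ε (hy1d t), ← hy2def]]
    exact deriv_aux0 (e₂ σ') (e₃ σ') _ _ (hx1d.const_mul ε) (hy1d.const_mul ε) t
  have eA12 : ∀ (ε t τ : ℝ),
      deriv (fun σ' : ℝ =>
          deriv (fun s' : ℝ => c σ' + (ε * x s') • e₂ σ' + (ε * y s') • e₃ σ') t) τ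
        = (ε * x1 t) • e₂1 τ + (ε * y1 t) • e₃1 τ := by
    intro ε t τ
    have hfn : (fun σ' : ℝ =>
        deriv (fun s' : ℝ => c σ' + (ε * x s') • e₂ σ' + (ε * y s') • e₃ σ') t)
        = fun σ' => (ε * x1 t) • e₂ σ' + (ε * y1 t) • e₃ σ' := funext fun σ' => e1 ε σ' t
    rw [hfn, he₂1def, he₃1def]
    exact deriv_aux2b e₂ e₃ _ _ he₂d he₃d τ
  have eA22 : ∀ (a b τ : ℝ),
      deriv (deriv (fun σ' : ℝ => c σ' + a • e₂ σ' + b • e₃ σ')) τ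
        = c2 τ + a • e₂2 τ + b • e₃2 τ := by
    intro a b τ
    have hfn : deriv (fun σ' : ℝ => c σ' + a • e₂ σ' + b • e₃ σ')
        = fun τ' => c1 τ' + a • e₂1 τ' + b • e₃1 τ' := funext fun τ' => e2 a b τ'
    rw [hfn, hc2def, he₂2def, he₃2def]
    exact deriv_aux2 c1 e₂1 e₃1 a b hc1d he₂1d he₃1d τ
  -- pointwise identification of the integrand
  have h_eq : ∀ ε : ℝ, 0 < ε → ε ≤ ε₀ → ∀ σ s : ℝ, s ∈ Set.Icc (0:ℝ) Λ →
      (let S₁ := deriv (fun s' : ℝ => c σ + (ε * x s') • e₂ σ + (ε * y s') • e₃ σ) s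
       let S₂ := deriv (fun σ' : ℝ => c σ' + (ε * x s) • e₂ σ' + (ε * y s) • e₃ σ') σ
       let P : EuclideanSpace ℝ (Fin n) → EuclideanSpace ℝ (Fin n) :=
         fun v => (Submodule.orthogonalProjectionOnto (Submodule.span ℝ {S₁, S₂})ᗮ v :
           EuclideanSpace ℝ (Fin n))
       let A₁₁ := P (deriv
         (deriv (fun s' : ℝ => c σ + (ε * x s') • e₂ σ + (ε * y s') • e₃ σ)) s)
       let A₁₂ := P (deriv (fun σ' : ℝ =>
         deriv (fun s' : ℝ => c σ' + (ε * x s') • e₂ σ' + (ε * y s') • e₃ σ') s) σ)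
       let A₂₂ := P (deriv
         (deriv (fun σ' : ℝ => c σ' + (ε * x s) • e₂ σ' + (ε * y s) • e₃ σ')) σ)
       let g₁₁ := ‖S₁‖ ^ 2
       let g₁₂ := ⟪S₁, S₂⟫
       let g₂₂ := ‖S₂‖ ^ 2
       let detg := g₁₁ * g₂₂ - g₁₂ ^ 2
       ‖(g₂₂ / detg) • A₁₁ + (2 * (-(g₁₂ / detg))) • A₁₂
           + (g₁₁ / detg) • A₂₂‖ * Real.sqrt detg)
      = Gc ε σ s := by
    intro ε hε hεle σ s hs
    have hne := ne_of_gt (lt_of_lt_of_le (div_pos (pow_pos hε 2) two_pos)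
      (EST σ s hs ε hε hεle).1)
    rw [hGclamp ε σ s hs]
    exact integrand_eq _ _ _ _ _ hne _ _ _ _ _ (e1 ε σ s).symm
      (e2 (ε * x s) (ε * y s) σ).symm (eA11 ε σ s).symm (eA12 ε s σ).symm
      (eA22 (ε * x s) (ε * y s) σ).symm
  -- continuity of the explicit integrand
  have hGccont : ∀ ε : ℝ, 0 < ε → ε ≤ ε₀ → Continuous (fun p : ℝ × ℝ => Gc ε p.1 p.2) := by
    intro ε hε hεle
    simp only [hGcdef]
    apply tubeVal_continuous
    · exact ((continuous_const.mul (hx1s.continuous.comp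
        (hclampc.comp continuous_snd))).smul (he₂0.continuous.comp continuous_fst)).add
        ((continuous_const.mul (hy1s.continuous.comp
        (hclampc.comp continuous_snd))).smul (he₃0.continuous.comp continuous_fst))
    · exact ((hc1s.continuous.comp continuous_fst).add
        ((continuous_const.mul (hx0.continuous.comp
        (hclampc.comp continuous_snd))).smul (he₂1s.continuous.comp continuous_fst))).add
        ((continuous_const.mul (hy0.continuous.comp
        (hclampc.comp continuous_snd))).smul (he₃1s.continuous.comp continuous_fst))
    · exact ((continuous_const.mul (hx2s.continuous.comp
        (hclampc.comp continuous_snd))).smul (he₂0.continuous.comp continuous_fst)).add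
        ((continuous_const.mul (hy2s.continuous.comp
        (hclampc.comp continuous_snd))).smul (he₃0.continuous.comp continuous_fst))
    · exact ((continuous_const.mul (hx1s.continuous.comp
        (hclampc.comp continuous_snd))).smul (he₂1s.continuous.comp continuous_fst)).add
        ((continuous_const.mul (hy1s.continuous.comp
        (hclampc.comp continuous_snd))).smul (he₃1s.continuous.comp continuous_fst))
    · exact ((hc2s.continuous.comp continuous_fst).add
        ((continuous_const.mul (hx0.continuous.comp
        (hclampc.comp continuous_snd))).smul (he₂2s.continuous.comp continuous_fst))).add
        ((continuous_const.mul (hy0.continuous.comp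
        (hclampc.comp continuous_snd))).smul (he₃2s.continuous.comp continuous_fst))
    · intro p
      exact ne_of_gt (lt_of_lt_of_le (div_pos (pow_pos hε 2) two_pos)
        (EST p.1 (clamp p.2) (hclampmem p.2) ε hε hεle).1)
  set J := ∫ s in (0:ℝ)..Λ, |x1 s * y2 s - y1 s * x2 s| with hJdef
  have hκcont : Continuous fun s => |x1 s * y2 s - y1 s * x2 s| :=
    (((hx1s.continuous).mul (hy2s.continuous)).sub
      ((hy1s.continuous).mul (hx2s.continuous))).abs
  -- the key quantitative bound
  have key : ∀ ε : ℝ, 0 < ε → ε ≤ ε₀ →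
      |((1:ℝ)/2) * (∫ σ in (0:ℝ)..L, ∫ s in (0:ℝ)..Λ, Gc ε σ s) - (L/2)*J|
        ≤ (500*M^3*Λ*L)*ε := by
    intro ε hε hεle
    have hGcc := hGccont ε hε hεle
    have hIcont : Continuous (fun σ => ∫ s in (0:ℝ)..Λ, Gc ε σ s) :=
      intervalIntegral.continuous_parametric_intervalIntegral_of_continuous'
        (f := Gc ε) hGcc 0 Λ
    have hIεsub : ∀ σ : ℝ, |(∫ s in (0:ℝ)..Λ, Gc ε σ s) - J| ≤ (1000*M^3*ε)*Λ := by
      intro σ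
      have hGint : IntervalIntegrable (fun s => Gc ε σ s) MeasureTheory.volume 0 Λ :=
        (hGcc.comp (Continuous.prodMk_right σ)).intervalIntegrable 0 Λ
      have hκint : IntervalIntegrable (fun s => |x1 s * y2 s - y1 s * x2 s|)
          MeasureTheory.volume 0 Λ := hκcont.intervalIntegrable 0 Λ
      have hsub : (∫ s in (0:ℝ)..Λ, Gc ε σ s) - J
          = ∫ s in (0:ℝ)..Λ, (Gc ε σ s - |x1 s * y2 s - y1 s * x2 s|) := by
        rw [hJdef, intervalIntegral.integral_sub hGint hκint]
      rw [hsub]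
      have hbnd : ∀ s ∈ Set.uIoc (0:ℝ) Λ,
          ‖Gc ε σ s - |x1 s * y2 s - y1 s * x2 s|‖ ≤ 1000*M^3*ε := by
        intro s hs
        have hsIcc : s ∈ Set.Icc (0:ℝ) Λ := by
          rw [Set.uIoc_of_le hΛ.le] at hs; exact Set.Ioc_subset_Icc_self hs
        rw [Real.norm_eq_abs, hGclamp ε σ s hsIcc,
          ← curv_eq (x1 s) (x2 s) (y1 s) (y2 s) (hunit s hsIcc) (hppIcc s hsIcc)]
        exact (EST σ s hsIcc ε hε hεle).2
      have h5 := intervalIntegral.norm_integral_le_of_norm_le_const hbnd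
      rw [Real.norm_eq_abs, sub_zero, abs_of_pos hΛ] at h5
      exact h5
    have hIint : IntervalIntegrable (fun σ => ∫ s in (0:ℝ)..Λ, Gc ε σ s)
        MeasureTheory.volume 0 L := hIcont.intervalIntegrable 0 L
    have hJint : IntervalIntegrable (fun _ : ℝ => J) MeasureTheory.volume 0 L :=
      intervalIntegrable_const
    have hconst : (∫ _ in (0:ℝ)..L, J) = L * J := by
      rw [intervalIntegral.integral_const, sub_zero, smul_eq_mul]
    have hsub2 : (∫ σ in (0:ℝ)..L, ∫ s in (0:ℝ)..Λ, Gc ε σ s) - L*J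
        = ∫ σ in (0:ℝ)..L, ((∫ s in (0:ℝ)..Λ, Gc ε σ s) - J) := by
      rw [intervalIntegral.integral_sub hIint hJint, hconst]
    have hbnd2 : ∀ σ ∈ Set.uIoc (0:ℝ) L,
        ‖(∫ s in (0:ℝ)..Λ, Gc ε σ s) - J‖ ≤ (1000*M^3*ε)*Λ := by
      intro σ _
      rw [Real.norm_eq_abs]; exact hIεsub σ
    have h6 := intervalIntegral.norm_integral_le_of_norm_le_const hbnd2
    rw [Real.norm_eq_abs, sub_zero, abs_of_pos hL] at h6
    rw [show ((1:ℝ)/2) * (∫ σ in (0:ℝ)..L, ∫ s in (0:ℝ)..Λ, Gc ε σ s) - (L/2)*J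
        = (1/2) * ((∫ σ in (0:ℝ)..L, ∫ s in (0:ℝ)..Λ, Gc ε σ s) - L*J) by ring,
      hsub2, abs_mul, show |(1:ℝ)/2| = 1/2 by norm_num]
    rw [← hsub2]
    calc (1/2) * |(∫ σ in (0:ℝ)..L, ∫ s in (0:ℝ)..Λ, Gc ε σ s) - L*J|
        ≤ (1/2) * ((1000*M^3*ε)*Λ*L) := by
          rw [hsub2]
          apply mul_le_mul_of_nonneg_left h6 (by norm_num)
      _ = (500*M^3*Λ*L)*ε := by ring
  -- conclusion
  have hev : ∀ᶠ ε in 𝓝[>](0:ℝ),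
      ‖(1/2) * (∫ σ in (0:ℝ)..L, ∫ s in (0:ℝ)..Λ,
          (let S₁ := deriv (fun s' : ℝ => c σ + (ε * x s') • e₂ σ + (ε * y s') • e₃ σ) s
           let S₂ := deriv (fun σ' : ℝ => c σ' + (ε * x s) • e₂ σ' + (ε * y s) • e₃ σ') σ
           let P : EuclideanSpace ℝ (Fin n) → EuclideanSpace ℝ (Fin n) :=
             fun v => (Submodule.orthogonalProjectionOnto (Submodule.span ℝ {S₁, S₂})ᗮ v :
               EuclideanSpace ℝ (Fin n))
           let A₁₁ := P (deriv
             (deriv (fun s' : ℝ => c σ + (ε * x s') • e₂ σ + (ε * y s') • e₃ σ)) s)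
           let A₁₂ := P (deriv (fun σ' : ℝ =>
             deriv (fun s' : ℝ => c σ' + (ε * x s') • e₂ σ' + (ε * y s') • e₃ σ') s) σ)
           let A₂₂ := P (deriv
             (deriv (fun σ' : ℝ => c σ' + (ε * x s) • e₂ σ' + (ε * y s) • e₃ σ')) σ)
           let g₁₁ := ‖S₁‖ ^ 2
           let g₁₂ := ⟪S₁, S₂⟫
           let g₂₂ := ‖S₂‖ ^ 2
           let detg := g₁₁ * g₂₂ - g₁₂ ^ 2
           ‖(g₂₂ / detg) • A₁₁ + (2 * (-(g₁₂ / detg))) • A₁₂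
               + (g₁₁ / detg) • A₂₂‖ * Real.sqrt detg)) - (L/2)*J‖
        ≤ (500*M^3*Λ*L)*ε := by
    filter_upwards [Ioo_mem_nhdsGT_of_mem (Set.mem_Ico.mpr ⟨le_refl (0:ℝ), hε₀pos⟩)]
      with ε hεmem
    have hrw : (∫ σ in (0:ℝ)..L, ∫ s in (0:ℝ)..Λ,
        (let S₁ := deriv (fun s' : ℝ => c σ + (ε * x s') • e₂ σ + (ε * y s') • e₃ σ) s
         let S₂ := deriv (fun σ' : ℝ => c σ' + (ε * x s) • e₂ σ' + (ε * y s) • e₃ σ') σ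
         let P : EuclideanSpace ℝ (Fin n) → EuclideanSpace ℝ (Fin n) :=
           fun v => (Submodule.orthogonalProjectionOnto (Submodule.span ℝ {S₁, S₂})ᗮ v :
             EuclideanSpace ℝ (Fin n))
         let A₁₁ := P (deriv
           (deriv (fun s' : ℝ => c σ + (ε * x s') • e₂ σ + (ε * y s') • e₃ σ)) s)
         let A₁₂ := P (deriv (fun σ' : ℝ =>
           deriv (fun s' : ℝ => c σ' + (ε * x s') • e₂ σ' + (ε * y s') • e₃ σ') s) σ)
         let A₂₂ := P (deriv
           (deriv (fun σ' : ℝ => c σ' + (ε * x s) • e₂ σ' + (ε * y s) • e₃ σ')) σ)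
         let g₁₁ := ‖S₁‖ ^ 2
         let g₁₂ := ⟪S₁, S₂⟫
         let g₂₂ := ‖S₂‖ ^ 2
         let detg := g₁₁ * g₂₂ - g₁₂ ^ 2
         ‖(g₂₂ / detg) • A₁₁ + (2 * (-(g₁₂ / detg))) • A₁₂
             + (g₁₁ / detg) • A₂₂‖ * Real.sqrt detg))
        = ∫ σ in (0:ℝ)..L, ∫ s in (0:ℝ)..Λ, Gc ε σ s := by
      apply intervalIntegral.integral_congr
      intro σ _
      apply intervalIntegral.integral_congr
      intro s hs
      have hsIcc : s ∈ Set.Icc (0:ℝ) Λ := by rwa [Set.uIcc_of_le hΛ.le] at hs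
      exact h_eq ε hεmem.1 hεmem.2.le σ s hsIcc
    rw [hrw, Real.norm_eq_abs]
    exact key ε hεmem.1 hεmem.2.le
  have h0 : Filter.Tendsto (fun ε : ℝ => (500*M^3*Λ*L)*ε) (𝓝[>](0:ℝ)) (𝓝 0) := by
    have h1 : Filter.Tendsto (fun ε : ℝ => (500*M^3*Λ*L)*ε) (𝓝 (0:ℝ))
        (𝓝 ((500*M^3*Λ*L)*0)) := (continuous_const.mul continuous_id).tendsto 0
    rw [mul_zero] at h1
    exact h1.mono_left nhdsWithin_le_nhds
  have h1 := squeeze_zero_norm' hev h0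
  have h2 := h1.add_const ((L/2)*J)
  rw [zero_add] at h2
  refine h2.congr (fun ε => ?_)
  ring
end est
end

section
/- Let R > 0 and let V : (0, R] → ℝ be nonnegative, continuous, and locally Lipschitz, with V(r)/r² → π as r → 0⁺, and suppose that for almost every r ∈ (0, R] one has V'(r) + (π/2)·r − 2√π·√(V(r)) ≥ 0. Then V(r) > (π/4)·r² for every r ∈ (0, R]. -/
/-!
Compare `V` with `v r = (π/4) r²` through `W = V - v`. Since `V r / r² → π > π/4`, `W` is positive
near `0`. Wherever `W ≥ 0` we have `√V ≥ (√π/2) r`, so the differential inequality gives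
`W' = V' - (π/2) r ≥ 2√π √V - π r ≥ 0` almost everywhere. If `W ≤ 0` somewhere in `(0, R]`, then on the
interval `[s, c]` from a point where `W > 0` to the first point where `W ≤ 0`, `W` is Lipschitz,
hence absolutely continuous, and integrating `W' ≥ 0` would give `W c ≥ W s > 0`.
-/

open Real MeasureTheory Filter Set Topology

theorem AbsolutelyContinuousOnInterval.le_of_ae_deriv_nonneg {f : ℝ → ℝ} {a b : ℝ}
    (hf : AbsolutelyContinuousOnInterval f a b) (hab : a ≤ b)
    (hf' : ∀ᵐ x ∂volume.restrict (Ioo a b), 0 ≤ deriv f x) : f a ≤ f b := by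
  rw [← sub_nonneg, ← hf.integral_deriv_eq_sub]
  refine intervalIntegral.integral_nonneg_of_ae_restrict hab ?_
  rwa [Measure.restrict_congr_set Ioo_ae_eq_Icc] at hf'

theorem LocallyLipschitzOn.absolutelyContinuousOnInterval {X : Type*} [PseudoMetricSpace X]
    {f : ℝ → X} {s : Set ℝ} {a b : ℝ} (hf : LocallyLipschitzOn s f) (hs : uIcc a b ⊆ s) :
    AbsolutelyContinuousOnInterval f a b :=
  ((hf.mono hs).exists_lipschitzOnWith_of_compact isCompact_uIcc).choose_spec
    |>.absolutelyContinuousOnInterval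

theorem ContinuousOn.exists_first_nonpos {f : ℝ → ℝ} {a b : ℝ}
    (hf : ContinuousOn f (Icc a b)) (hab : a ≤ b) (ha : 0 < f a) (hb : f b ≤ 0) :
    ∃ c ∈ Ioc a b, f c ≤ 0 ∧ ∀ x ∈ Ico a c, 0 < f x := by
  set S := Icc a b ∩ f ⁻¹' Iic 0
  have hS : IsClosed S := hf.preimage_isClosed_of_isClosed isClosed_Icc isClosed_Iic
  have hbS : b ∈ S := ⟨⟨hab, le_rfl⟩, hb⟩
  have hSbdd : BddBelow S := ⟨a, fun x hx => hx.1.1⟩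
  obtain ⟨⟨hac, hcb⟩, hc⟩ : sInf S ∈ S := hS.csInf_mem ⟨b, hbS⟩ hSbdd
  refine ⟨sInf S, ⟨lt_of_le_of_ne hac ?_, hcb⟩, hc, fun x hx => ?_⟩
  · intro hac
    exact (not_le.mpr ha) (hac ▸ hc)
  · by_contra! hfx
    exact (not_le.mpr hx.2) (csInf_le hSbdd ⟨⟨hx.1, hx.2.le.trans hcb⟩, hfx⟩)

theorem mul_le_two_mul_sqrt_mul_sqrt {c r v : ℝ} (hc : 0 ≤ c) (hr : 0 ≤ r)
    (hv : c / 4 * r ^ 2 ≤ v) : c * r ≤ 2 * √c * √v := by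
  have hroot : √c / 2 * r ≤ √v := by
    calc √c / 2 * r = √(c / 4 * r ^ 2) := by
          rw [Real.sqrt_mul (by positivity), Real.sqrt_div hc, Real.sqrt_sq hr,
            show (4 : ℝ) = 2 ^ 2 by norm_num, Real.sqrt_sq zero_le_two]
      _ ≤ √v := Real.sqrt_le_sqrt hv
  calc c * r = 2 * √c * (√c / 2 * r) := by linear_combination (-r) * Real.mul_self_sqrt hc
    _ ≤ 2 * √c * √v := by gcongr

theorem deriv_sub_quarter_pi_mul_sq_nonneg {V : ℝ → ℝ} {x : ℝ} (hx : 0 ≤ x)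
    (hVx : DifferentiableAt ℝ V x) (hineq : 0 ≤ deriv V x + π / 2 * x - 2 * √π * √(V x))
    (hVge : π / 4 * x ^ 2 ≤ V x) : 0 ≤ deriv (fun t => V t - π / 4 * t ^ 2) x := by
  have hderiv : HasDerivAt (fun t => V t - π / 4 * t ^ 2) (deriv V x - π / 2 * x) x :=
    (hVx.hasDerivAt.sub ((hasDerivAt_pow 2 x).const_mul (π / 4))).congr_deriv (by ring)
  rw [hderiv.deriv]
  linarith [mul_le_two_mul_sqrt_mul_sqrt pi_pos.le hx hVge]

theorem stmt_10_general (R : ℝ) (V : ℝ → ℝ)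
    (hVlip : LocallyLipschitzOn (Set.Ioc 0 R) V)
    (hlim : Filter.Tendsto (fun r : ℝ => V r / r ^ 2)
      (nhdsWithin 0 (Set.Ioi 0)) (nhds π))
    (hineq : ∀ᵐ r ∂(volume.restrict (Set.Ioc (0:ℝ) R)),
      DifferentiableAt ℝ V r ∧
        0 ≤ deriv V r + (π / 2) * r - 2 * Real.sqrt π * Real.sqrt (V r)) :
    ∀ r ∈ Set.Ioc (0:ℝ) R, (π / 4) * r ^ 2 < V r := by
  intro r hr
  by_contra! hVr
  set W : ℝ → ℝ := fun t => V t - π / 4 * t ^ 2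
  obtain ⟨s, hsW, hs0, hsr⟩ : ∃ s, π / 4 * s ^ 2 < V s ∧ 0 < s ∧ s < r := by
    have hquarter : ∀ᶠ t in 𝓝[>] 0, π / 4 < V t / t ^ 2 :=
      hlim.eventually (lt_mem_nhds (by linarith [pi_pos]))
    obtain ⟨s, hs, hs0, hsr⟩ := (hquarter.and (Ioo_mem_nhdsGT hr.1)).exists
    exact ⟨s, (lt_div_iff₀ (by positivity)).1 hs, hs0, hsr⟩
  have hsub : Icc s r ⊆ Ioc 0 R := fun t ht => ⟨hs0.trans_le ht.1, ht.2.trans hr.2⟩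
  have hWcont : ContinuousOn W (Icc s r) :=
    (hVlip.continuousOn.mono hsub).sub (by fun_prop)
  obtain ⟨c, ⟨hsc, hcr⟩, hWc, hWpos⟩ :=
    hWcont.exists_first_nonpos hsr.le (sub_pos.2 hsW) (sub_nonpos.2 hVr)
  have hWac : AbsolutelyContinuousOnInterval W s c := by
    refine (hVlip.absolutelyContinuousOnInterval ?_).sub ?_
    · rw [uIcc_of_le hsc.le]
      exact (Icc_subset_Icc_right hcr).trans hsub
    · exact (by fun_prop : ContDiff ℝ 1 fun t : ℝ => π / 4 * t ^ 2).contDiffOn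
        |>.absolutelyContinuousOnInterval
  have hW' : ∀ᵐ x ∂volume.restrict (Ioo s c), 0 ≤ deriv W x := by
    have hIoo : Ioo s c ⊆ Ioc 0 R := fun t ht => hsub ⟨ht.1.le, ht.2.le.trans hcr⟩
    filter_upwards [ae_restrict_of_ae_restrict_of_subset hIoo hineq,
      ae_restrict_mem measurableSet_Ioo] with x ⟨hVx, hx⟩ hxsc
    exact deriv_sub_quarter_pi_mul_sq_nonneg (hs0.trans hxsc.1).le hVx hx
      (sub_pos.1 (hWpos x ⟨hxsc.1.le, hxsc.2⟩)).le
  exact (hWac.le_of_ae_deriv_nonneg hsc.le hW').not_gt (hWc.trans_lt (sub_pos.2 hsW))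

/-- ODE comparison lemma (Topping's argument with Brendle's sharp constant):
if `V : (0, R] → ℝ` is nonnegative, continuous, locally Lipschitz, `V(r)/r² → π`
as `r → 0⁺`, and `V' + (π/2) r - 2√π √V ≥ 0` a.e., then `V(r) > (π/4) r²` on `(0, R]`. -/
theorem stmt_10 (R : ℝ) (hR : 0 < R) (V : ℝ → ℝ)
    (hV0 : ∀ r ∈ Set.Ioc (0:ℝ) R, 0 ≤ V r)
    (hVcont : ContinuousOn V (Set.Ioc 0 R))
    (hVlip : LocallyLipschitzOn (Set.Ioc 0 R) V)
    (hlim : Filter.Tendsto (fun r : ℝ => V r / r ^ 2)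
      (nhdsWithin 0 (Set.Ioi 0)) (nhds π))
    (hineq : ∀ᵐ r ∂(volume.restrict (Set.Ioc (0:ℝ) R)),
      DifferentiableAt ℝ V r ∧
        0 ≤ deriv V r + (π / 2) * r - 2 * Real.sqrt π * Real.sqrt (V r)) :
    ∀ r ∈ Set.Ioc (0:ℝ) R, (π / 4) * r ^ 2 < V r :=
  stmt_10_general R V hVlip hlim hineq
end

section
/- There exist constants C > 0 and ε₀ ∈ (0, 1) such that the following holds for every ε ∈ (0, ε₀). Let X ⊂ S² be a finite set such that ‖x − x'‖ ≥ ε for all distinct x, x' ∈ X and every point of S² lies within distance ε of X, and let Γ := ⋃_{x ∈ X} C(x, ε^{5/2}). Then μH¹(Γ) ≥ ε^{1/2}/C, and for every partition X = X₁ ⊔ X₂ into two nonempty sets, the corresponding parts Γ_i := ⋃_{x ∈ X_i} C(x, ε^{5/2}) satisfy dist(Γ₁, Γ₂) ≤ C·ε; consequently dist(Γ₁, Γ₂) ≤ C²·ε^{1/2}·μH¹(Γ), so the ratio dist(Γ₁, Γ₂)/μH¹(Γ) tends to 0 with ε (White's criterion fails for every decomposition). -/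
/-!
Circles of chordal radius `δ = ε^{5/2}` about distinct points of an `ε`-separated set are
disjoint, and each has length at least `δ` (it projects onto an interval of length about
`2δ`). An `ε`-net of `S²` has at least `c ε⁻²` points, since distinct points of a `3ε`-grid
on a hemisphere need distinct net points, so `μH¹(Γ) ≳ ε⁻² δ = ε^{1/2}`. On the other hand
`S²` is connected, so for any splitting `X = X₁ ⊔ X₂` the functions `dist(·, X₁)` and
`dist(·, X₂)` agree at some `p ∈ S²`, where both are at most `ε`; the circles about the two
nearest points are then `O(ε)` apart.
-/

open MeasureTheory Metric Module Set
open scoped ENNReal RealInnerProductSpace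

lemma card_le_card_of_forall_exists_dist_le {α ι : Type*} [PseudoMetricSpace α] [Fintype ι]
    {ε : ℝ} {g : ι → α} (hg : Pairwise fun i j => 2 * ε < dist (g i) (g j)) {X : Finset α}
    (hX : ∀ i, ∃ x ∈ X, dist (g i) x ≤ ε) : Fintype.card ι ≤ X.card := by
  choose φ hφX hφ using hX
  refine Finset.card_le_card_of_injOn φ (fun i _ => hφX i) fun i _ j _ hij => ?_
  by_contra hne
  have hi := hφ i
  rw [hij] at hi
  linarith [hg hne, dist_triangle_right (g i) (g j) (φ j), hφ j]

/-- On a preconnected set there is a point equidistant from `X₁` and `X₂`; covering it places a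
point of each part within `ε` of it. -/
lemma exists_dist_le_two_mul_of_isPreconnected {α : Type*} [PseudoMetricSpace α]
    [DecidableEq α] {S : Set α} (hS : IsPreconnected S) {X₁ X₂ : Finset α} {a₁ a₂ : α}
    (ha₁ : a₁ ∈ X₁) (ha₁S : a₁ ∈ S) (ha₂ : a₂ ∈ X₂) (ha₂S : a₂ ∈ S) {ε : ℝ}
    (hcov : ∀ p ∈ S, ∃ x ∈ X₁ ∪ X₂, dist p x ≤ ε) :
    ∃ x₁ ∈ X₁, ∃ x₂ ∈ X₂, dist x₁ x₂ ≤ 2 * ε := by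
  obtain ⟨p, hpS, hp⟩ := hS.intermediate_value₂ ha₁S ha₂S
    (continuous_infDist_pt (X₁ : Set α)).continuousOn
    (continuous_infDist_pt (X₂ : Set α)).continuousOn
    (by rw [infDist_zero_of_mem (Finset.mem_coe.2 ha₁)]; exact infDist_nonneg)
    (by rw [infDist_zero_of_mem (Finset.mem_coe.2 ha₂)]; exact infDist_nonneg)
  have hle : infDist p (X₁ : Set α) ≤ ε ∧ infDist p (X₂ : Set α) ≤ ε := by
    obtain ⟨x, hx, hpx⟩ := hcov p hpS
    rcases Finset.mem_union.1 hx with hx | hx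
    · have := (infDist_le_dist_of_mem (Finset.mem_coe.2 hx)).trans hpx
      exact ⟨this, hp ▸ this⟩
    · have := (infDist_le_dist_of_mem (Finset.mem_coe.2 hx)).trans hpx
      exact ⟨hp.symm ▸ this, this⟩
  obtain ⟨x₁, hx₁, hpx₁⟩ := X₁.finite_toSet.isCompact.exists_infDist_eq_dist ⟨a₁, ha₁⟩ p
  obtain ⟨x₂, hx₂, hpx₂⟩ := X₂.finite_toSet.isCompact.exists_infDist_eq_dist ⟨a₂, ha₂⟩ p
  refine ⟨x₁, hx₁, x₂, hx₂, ?_⟩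
  linarith [dist_triangle_left x₁ x₂ p]

def sphereCircle {V : Type*} [NormedAddCommGroup V] (x : V) (δ : ℝ) : Set V :=
  {y | ‖y‖ = 1 ∧ ‖y - x‖ = δ}

section SphereCircle

variable {V : Type*} [NormedAddCommGroup V]

lemma dist_eq_of_mem_sphereCircle {x y : V} {δ : ℝ} (hy : y ∈ sphereCircle x δ) :
    dist y x = δ := by
  rw [dist_eq_norm]; exact hy.2

lemma isClosed_sphereCircle (x : V) (δ : ℝ) : IsClosed (sphereCircle x δ) :=
  (isClosed_eq continuous_norm continuous_const).inter
    (isClosed_eq (continuous_id.sub continuous_const).norm continuous_const)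

lemma disjoint_sphereCircle {x x' : V} {δ : ℝ} (h : 2 * δ < ‖x - x'‖) :
    Disjoint (sphereCircle x δ) (sphereCircle x' δ) := by
  refine Set.disjoint_left.2 fun y hy hy' => h.not_ge ?_
  calc ‖x - x'‖ ≤ dist y x + dist y x' := by
        rw [← dist_eq_norm]; exact dist_triangle_left x x' y
    _ = 2 * δ := by rw [dist_eq_of_mem_sphereCircle hy, dist_eq_of_mem_sphereCircle hy']; ring

variable [InnerProductSpace ℝ V]

lemma norm_smul_add_smul_add_smul_sq {x u v : V} (h : Orthonormal ℝ ![x, u, v]) (a b c : ℝ) :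
    ‖a • x + b • u + c • v‖ ^ 2 = a ^ 2 + b ^ 2 + c ^ 2 := by
  have h' := orthonormal_iff_ite.mp h
  have hxx : ⟪x, x⟫ = 1 := by simpa using h' 0 0
  have huu : ⟪u, u⟫ = 1 := by simpa using h' 1 1
  have hvv : ⟪v, v⟫ = 1 := by simpa using h' 2 2
  have hxu : ⟪x, u⟫ = 0 := by simpa using h' 0 1
  have hxv : ⟪x, v⟫ = 0 := by simpa using h' 0 2
  have huv : ⟪u, v⟫ = 0 := by simpa using h' 1 2
  rw [← real_inner_self_eq_norm_sq]
  simp only [inner_add_left, inner_add_right, real_inner_smul_left, real_inner_smul_right,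
    real_inner_comm x u, real_inner_comm x v, real_inner_comm u v, hxx, huu, hvv, hxu, hxv, huv]
  ring

/-- `C(x, δ)` is the circle `{(1 - δ²/2) x + t u + s v : t² + s² = r²}`, `r² = δ² - δ⁴/4`. -/
lemma Icc_subset_image_inner_sphereCircle {x u v : V} (h : Orthonormal ℝ ![x, u, v]) {δ : ℝ}
    (hδ₀ : 0 ≤ δ) (hδ₂ : δ ≤ 2) :
    Icc (-√(δ ^ 2 - δ ^ 4 / 4)) √(δ ^ 2 - δ ^ 4 / 4) ⊆ (⟪u, ·⟫) '' sphereCircle x δ := by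
  set r := √(δ ^ 2 - δ ^ 4 / 4)
  have hr : r ^ 2 = δ ^ 2 - δ ^ 4 / 4 :=
    Real.sq_sqrt (by nlinarith [mul_nonneg (sq_nonneg δ) (by nlinarith : 0 ≤ 4 - δ ^ 2)])
  rintro t ⟨ht₁, ht₂⟩
  have hs : √(r ^ 2 - t ^ 2) ^ 2 = r ^ 2 - t ^ 2 := Real.sq_sqrt (by nlinarith)
  have hu : ⟪u, u⟫ = 1 := by simpa using (orthonormal_iff_ite.mp h) 1 1
  have hux : ⟪u, x⟫ = 0 := by simpa using (orthonormal_iff_ite.mp h) 1 0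
  have huv : ⟪u, v⟫ = 0 := by simpa using (orthonormal_iff_ite.mp h) 1 2
  refine ⟨(1 - δ ^ 2 / 2) • x + t • u + √(r ^ 2 - t ^ 2) • v, ⟨?_, ?_⟩, ?_⟩
  · rw [← sq_eq_sq₀ (norm_nonneg _) zero_le_one, norm_smul_add_smul_add_smul_sq h, hs, hr]
    ring
  · rw [← sq_eq_sq₀ (norm_nonneg _) hδ₀,
      show (1 - δ ^ 2 / 2) • x + t • u + √(r ^ 2 - t ^ 2) • v - x
        = (-(δ ^ 2 / 2)) • x + t • u + √(r ^ 2 - t ^ 2) • v by module,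
      norm_smul_add_smul_add_smul_sq h, hs, hr]
    ring
  · simp only [inner_add_right, real_inner_smul_right, hu, hux, huv]
    ring

lemma exists_orthonormal_triple [FiniteDimensional ℝ V] (hV : 3 ≤ finrank ℝ V) {x : V}
    (hx : ‖x‖ = 1) : ∃ u v : V, Orthonormal ℝ ![x, u, v] := by
  have hx0 : x ≠ 0 := by rintro rfl; simp at hx
  have hK : 2 ≤ finrank ℝ (ℝ ∙ x)ᗮ := by
    have := (ℝ ∙ x).finrank_add_finrank_orthogonal
    rw [finrank_span_singleton hx0] at this
    omega
  set b := stdOrthonormalBasis ℝ (ℝ ∙ x)ᗮ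
  have hb := b.orthonormal
  refine ⟨b ⟨0, by omega⟩, b ⟨1, by omega⟩, orthonormal_iff_ite.mpr ?_⟩
  have hxb : ∀ i, ⟪x, (b i : V)⟫ = 0 := fun i =>
    Submodule.inner_right_of_mem_orthogonal (Submodule.mem_span_singleton_self x) (b i).2
  have hbb : ∀ i j, ⟪(b i : V), (b j : V)⟫ = if i = j then 1 else 0 := fun i j => by
    rw [← Submodule.coe_inner]; exact orthonormal_iff_ite.mp hb i j
  have hbn : ∀ i, ‖(b i : V)‖ = 1 := fun i => hb.1 i
  intro i j
  fin_cases i <;> fin_cases j <;> simp [hx, hbn, hxb, hbb, real_inner_comm x]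

lemma sphereCircle_nonempty [FiniteDimensional ℝ V] (hV : 3 ≤ finrank ℝ V) {x : V}
    (hx : ‖x‖ = 1) {δ : ℝ} (hδ₀ : 0 ≤ δ) (hδ₂ : δ ≤ 2) : (sphereCircle x δ).Nonempty := by
  obtain ⟨u, v, h⟩ := exists_orthonormal_triple hV hx
  exact image_nonempty.1 ⟨0, Icc_subset_image_inner_sphereCircle h hδ₀ hδ₂
    ⟨neg_nonpos.2 (Real.sqrt_nonneg _), Real.sqrt_nonneg _⟩⟩

lemma iInf_edist_biUnion_sphereCircle_le [DecidableEq V] [FiniteDimensional ℝ V]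
    (hV : 3 ≤ finrank ℝ V) {X₁ X₂ : Finset V} (hX : ∀ x ∈ X₁ ∪ X₂, ‖x‖ = 1)
    (hX₁ : X₁.Nonempty) (hX₂ : X₂.Nonempty) {ε : ℝ}
    (hcov : ∀ p : V, ‖p‖ = 1 → ∃ x ∈ X₁ ∪ X₂, ‖p - x‖ ≤ ε) {δ : ℝ} (hδ₀ : 0 ≤ δ)
    (hδ₂ : δ ≤ 2) :
    (⨅ p ∈ ⋃ x ∈ X₁, sphereCircle x δ, ⨅ q ∈ ⋃ x ∈ X₂, sphereCircle x δ, edist p q)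
      ≤ ENNReal.ofReal (2 * ε + 2 * δ) := by
  obtain ⟨a₁, ha₁⟩ := hX₁
  obtain ⟨a₂, ha₂⟩ := hX₂
  have hunit₁ : ∀ x ∈ X₁, ‖x‖ = 1 := fun x hx => hX x (Finset.mem_union_left _ hx)
  have hunit₂ : ∀ x ∈ X₂, ‖x‖ = 1 := fun x hx => hX x (Finset.mem_union_right _ hx)
  have hS : IsPreconnected (sphere (0 : V) 1) :=
    (isConnected_sphere (one_lt_rank_of_one_lt_finrank (by omega)) 0 zero_le_one).isPreconnected
  obtain ⟨x₁, hx₁, x₂, hx₂, hx₁₂⟩ := exists_dist_le_two_mul_of_isPreconnected hS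
    ha₁ (mem_sphere_zero_iff_norm.2 (hunit₁ a₁ ha₁))
    ha₂ (mem_sphere_zero_iff_norm.2 (hunit₂ a₂ ha₂))
    fun p hp => by simpa [dist_eq_norm] using hcov p (mem_sphere_zero_iff_norm.1 hp)
  obtain ⟨p₁, hp₁⟩ := sphereCircle_nonempty hV (hunit₁ x₁ hx₁) hδ₀ hδ₂
  obtain ⟨p₂, hp₂⟩ := sphereCircle_nonempty hV (hunit₂ x₂ hx₂) hδ₀ hδ₂
  refine (iInf₂_le p₁ (mem_biUnion hx₁ hp₁)).trans <|
    (iInf₂_le p₂ (mem_biUnion hx₂ hp₂)).trans ?_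
  rw [edist_dist]
  refine ENNReal.ofReal_le_ofReal ?_
  have := dist_triangle4 p₁ x₁ x₂ p₂
  rw [dist_eq_of_mem_sphereCircle hp₁, dist_comm x₂, dist_eq_of_mem_sphereCircle hp₂] at this
  linarith

variable [MeasurableSpace V] [BorelSpace V]

/-- Projecting onto a unit vector orthogonal to `x` is `1`-Lipschitz and maps `C(x, δ)` onto an
interval of length `2√(δ² - δ⁴/4) ≥ δ`. -/
lemma ofReal_le_hausdorffMeasure_sphereCircle [FiniteDimensional ℝ V] (hV : 3 ≤ finrank ℝ V)
    {x : V} (hx : ‖x‖ = 1) {δ : ℝ} (hδ₀ : 0 ≤ δ) (hδ₁ : δ ≤ 1) :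
    ENNReal.ofReal δ ≤ μH[1] (sphereCircle x δ) := by
  obtain ⟨u, v, h⟩ := exists_orthonormal_triple hV hx
  have hu : ‖u‖ = 1 := by simpa using h.1 1
  have hlip : LipschitzWith 1 (⟪u, ·⟫) := by
    have h1 : ‖innerSL ℝ u‖₊ = 1 := by ext; simp [hu]
    simpa [h1] using (innerSL ℝ u).lipschitz
  have hr : δ / 2 ≤ √(δ ^ 2 - δ ^ 4 / 4) :=
    Real.le_sqrt_of_sq_le (by nlinarith [mul_nonneg (sq_nonneg δ) (by nlinarith : 0 ≤ 1 - δ ^ 2)])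
  calc ENNReal.ofReal δ
      ≤ μH[1] (Icc (-√(δ ^ 2 - δ ^ 4 / 4)) √(δ ^ 2 - δ ^ 4 / 4)) := by
        rw [hausdorffMeasure_real, Real.volume_Icc]
        exact ENNReal.ofReal_le_ofReal (by linarith)
    _ ≤ μH[1] ((⟪u, ·⟫) '' sphereCircle x δ) :=
        measure_mono (Icc_subset_image_inner_sphereCircle h hδ₀ (by linarith))
    _ ≤ μH[1] (sphereCircle x δ) := by
        simpa using hlip.hausdorffMeasure_image_le zero_le_one (sphereCircle x δ)

lemma card_mul_le_hausdorffMeasure_biUnion_sphereCircle [FiniteDimensional ℝ V]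
    (hV : 3 ≤ finrank ℝ V) {X : Finset V} (hX : ∀ x ∈ X, ‖x‖ = 1) {δ : ℝ}
    (hsep : (X : Set V).Pairwise fun x x' => 2 * δ < ‖x - x'‖) (hδ₀ : 0 ≤ δ) (hδ₁ : δ ≤ 1) :
    ENNReal.ofReal (X.card * δ) ≤ μH[1] (⋃ x ∈ X, sphereCircle x δ) := by
  rw [measure_biUnion_finset (fun x hx x' hx' hne => disjoint_sphereCircle (hsep hx hx' hne))
    fun x _ => (isClosed_sphereCircle x δ).measurableSet, ENNReal.ofReal_mul (by positivity),
    ENNReal.ofReal_natCast, ← nsmul_eq_mul, ← Finset.sum_const]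
  exact Finset.sum_le_sum fun x hx => ofReal_le_hausdorffMeasure_sphereCircle hV (hX x hx) hδ₀ hδ₁

end SphereCircle

noncomputable def hemispherePoint (a b : ℝ) : EuclideanSpace ℝ (Fin 3) :=
  !₂[a, b, √(1 - a ^ 2 - b ^ 2)]

lemma norm_hemispherePoint {a b : ℝ} (h : a ^ 2 + b ^ 2 ≤ 1) : ‖hemispherePoint a b‖ = 1 := by
  rw [EuclideanSpace.norm_eq, Real.sqrt_eq_one, Fin.sum_univ_three]
  simp [hemispherePoint, Real.sq_sqrt (by linarith : 0 ≤ 1 - a ^ 2 - b ^ 2)]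

lemma max_abs_sub_le_dist_hemispherePoint (a b a' b' : ℝ) :
    max |a - a'| |b - b'| ≤ dist (hemispherePoint a b) (hemispherePoint a' b') := by
  rw [← Real.dist_eq, ← Real.dist_eq]
  have h := PiLp.dist_apply_le (hemispherePoint a b) (hemispherePoint a' b')
  exact max_le (by simpa [hemispherePoint] using h 0) (by simpa [hemispherePoint] using h 1)

/-- A grid of spacing `3ε` on the upper hemisphere is `2ε`-separated, so it needs distinct
points of any `ε`-cover of the sphere. -/
lemma natFloor_sq_le_card_of_sphere_cover {ε : ℝ} (hε : 0 < ε)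
    {X : Finset (EuclideanSpace ℝ (Fin 3))}
    (hX : ∀ p : EuclideanSpace ℝ (Fin 3), ‖p‖ = 1 → ∃ x ∈ X, ‖p - x‖ ≤ ε) :
    ⌊1 / (6 * ε)⌋₊ ^ 2 ≤ X.card := by
  set n := ⌊1 / (6 * ε)⌋₊
  have hn : (n : ℝ) * (6 * ε) ≤ 1 :=
    (le_div_iff₀ (by positivity)).1 (Nat.floor_le (by positivity))
  have hcoord : ∀ i : Fin n, 0 ≤ 3 * ε * i ∧ 3 * ε * i ≤ 1 / 2 := fun i => by
    have : (i : ℝ) + 1 ≤ n := mod_cast i.isLt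
    constructor <;> nlinarith
  set g : Fin n × Fin n → EuclideanSpace ℝ (Fin 3) :=
    fun k => hemispherePoint (3 * ε * k.1) (3 * ε * k.2)
  have hunit : ∀ k, ‖g k‖ = 1 := fun k =>
    norm_hemispherePoint (by nlinarith [hcoord k.1, hcoord k.2])
  have hspacing : ∀ i j : Fin n, i ≠ j → 3 * ε ≤ |3 * ε * i - 3 * ε * j| := fun i j hij => by
    rw [← mul_sub, abs_mul, abs_of_pos (by positivity), ← Real.dist_eq, Nat.dist_cast_real]
    exact le_mul_of_one_le_right (by positivity)
      (Nat.pairwise_one_le_dist (Fin.val_injective.ne hij))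
  have hsep : Pairwise fun k l => 2 * ε < dist (g k) (g l) := by
    intro k l hkl
    have hd := max_abs_sub_le_dist_hemispherePoint (3 * ε * k.1) (3 * ε * k.2) (3 * ε * l.1)
      (3 * ε * l.2)
    have : 3 * ε ≤ max |3 * ε * k.1 - 3 * ε * l.1| |3 * ε * k.2 - 3 * ε * l.2| := by
      by_cases h : k.1 = l.1
      · exact le_max_of_le_right (hspacing _ _ fun h' => hkl (Prod.ext h h'))
      · exact le_max_of_le_left (hspacing _ _ h)
    linarith
  simpa [sq] using card_le_card_of_forall_exists_dist_le hsep fun k => by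
    simpa [dist_eq_norm] using hX _ (hunit k)

lemma one_le_mul_card_of_sphere_cover {ε : ℝ} (hε : 0 < ε) (hε' : ε ≤ 1 / 12)
    {X : Finset (EuclideanSpace ℝ (Fin 3))}
    (hX : ∀ p : EuclideanSpace ℝ (Fin 3), ‖p‖ = 1 → ∃ x ∈ X, ‖p - x‖ ≤ ε) :
    1 ≤ 144 * ε ^ 2 * X.card := by
  have hcard : (⌊1 / (6 * ε)⌋₊ : ℝ) ^ 2 ≤ X.card :=
    mod_cast natFloor_sq_le_card_of_sphere_cover hε hX
  have hfloor := Nat.sub_one_lt_floor (1 / (6 * ε))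
  have h6 : 6 * ε * (1 / (6 * ε)) = 1 := by field_simp
  have h12 : 1 ≤ 12 * ε * ⌊1 / (6 * ε)⌋₊ := by nlinarith
  nlinarith

lemma ofReal_div_le_hausdorffMeasure_biUnion_sphereCircle {ε δ : ℝ} (hε : 0 < ε)
    (hε' : ε ≤ 1 / 12) {X : Finset (EuclideanSpace ℝ (Fin 3))} (hX : ∀ x ∈ X, ‖x‖ = 1)
    (hsep : (X : Set (EuclideanSpace ℝ (Fin 3))).Pairwise fun x x' => 2 * δ < ‖x - x'‖)
    (hcov : ∀ p : EuclideanSpace ℝ (Fin 3), ‖p‖ = 1 → ∃ x ∈ X, ‖p - x‖ ≤ ε)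
    (hδ₀ : 0 ≤ δ) (hδ₁ : δ ≤ 1) :
    ENNReal.ofReal (δ / (144 * ε ^ 2)) ≤ μH[1] (⋃ x ∈ X, sphereCircle x δ) := by
  refine (ENNReal.ofReal_le_ofReal ?_).trans
    (card_mul_le_hausdorffMeasure_biUnion_sphereCircle (by simp) hX hsep hδ₀ hδ₁)
  rw [div_le_iff₀ (by positivity)]
  nlinarith [one_le_mul_card_of_sphere_cover hε hε' hcov]

/-- Small circles with increasing centers (an `ε`-net of `S²`, circles of radius
`ε^{5/2}`): the total length is at least `ε^{1/2}/C`, while for every decomposition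
of the contour into two nonempty parts the distance between them is at most `Cε`;
consequently `dist(Γ₁, Γ₂) ≤ C² ε^{1/2} μH¹(Γ)`, so White's criterion fails. -/
theorem stmt_18 :
    ∃ C : ℝ, 0 < C ∧ ∃ ε₀ : ℝ, 0 < ε₀ ∧ ε₀ < 1 ∧
      ∀ ε : ℝ, 0 < ε → ε < ε₀ →
      ∀ X : Finset (EuclideanSpace ℝ (Fin 3)),
        (∀ x ∈ X, ‖x‖ = 1) →
        (∀ x ∈ X, ∀ x' ∈ X, x ≠ x' → ε ≤ ‖x - x'‖) →
        (∀ p : EuclideanSpace ℝ (Fin 3), ‖p‖ = 1 → ∃ x ∈ X, ‖p - x‖ ≤ ε) →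
        (let Γ := ⋃ x ∈ X,
            {y : EuclideanSpace ℝ (Fin 3) | ‖y‖ = 1 ∧ ‖y - x‖ = ε ^ ((5:ℝ)/2)}
         ENNReal.ofReal (ε ^ ((1:ℝ)/2) / C) ≤ μH[1] Γ ∧
         ∀ X₁ X₂ : Finset (EuclideanSpace ℝ (Fin 3)),
           X₁ ∪ X₂ = X → Disjoint X₁ X₂ → X₁.Nonempty → X₂.Nonempty →
           (let Γ₁ := ⋃ x ∈ X₁,
               {y : EuclideanSpace ℝ (Fin 3) | ‖y‖ = 1 ∧ ‖y - x‖ = ε ^ ((5:ℝ)/2)}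
            let Γ₂ := ⋃ x ∈ X₂,
               {y : EuclideanSpace ℝ (Fin 3) | ‖y‖ = 1 ∧ ‖y - x‖ = ε ^ ((5:ℝ)/2)}
            (⨅ p ∈ Γ₁, ⨅ q ∈ Γ₂, edist p q) ≤ ENNReal.ofReal (C * ε) ∧
            (⨅ p ∈ Γ₁, ⨅ q ∈ Γ₂, edist p q)
              ≤ ENNReal.ofReal (C ^ 2 * ε ^ ((1:ℝ)/2)) * μH[1] Γ)) := by
  refine ⟨144, by norm_num, 1 / 100, by norm_num, by norm_num, ?_⟩
  intro ε hε hε₀ X hunit hsep hcov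
  set δ := ε ^ ((5:ℝ)/2) with hδ_def
  have hsqrt : ε ^ ((1:ℝ)/2) * ε ^ ((1:ℝ)/2) = ε := by rw [← Real.rpow_add hε]; norm_num
  have hδ : δ = ε ^ ((1:ℝ)/2) * ε ^ 2 := by
    rw [hδ_def, ← Real.rpow_natCast, ← Real.rpow_add hε]; norm_num
  have hδ₀ : 0 < δ := by positivity
  have hδε : δ ≤ ε ^ 2 := hδ ▸
    mul_le_of_le_one_left (by positivity) (Real.rpow_le_one hε.le (by linarith) (by norm_num))
  have hlen : ENNReal.ofReal (ε ^ ((1:ℝ)/2) / 144) ≤ μH[1] (⋃ x ∈ X, sphereCircle x δ) := by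
    convert ofReal_div_le_hausdorffMeasure_biUnion_sphereCircle hε (by linarith) hunit
      (fun x hx x' hx' hne => by nlinarith [hsep x hx x' hx' hne]) hcov hδ₀.le (by nlinarith)
      using 2
    rw [hδ]; field_simp
  refine ⟨hlen, fun X₁ X₂ hunion _ hX₁ hX₂ => ?_⟩
  subst hunion
  have hgap := (iInf_edist_biUnion_sphereCircle_le (by simp) hunit hX₁ hX₂ hcov hδ₀.le
    (by nlinarith)).trans (ENNReal.ofReal_le_ofReal (by nlinarith : 2 * ε + 2 * δ ≤ 144 * ε))
  refine ⟨hgap, hgap.trans ?_⟩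
  calc ENNReal.ofReal (144 * ε)
      = ENNReal.ofReal (144 ^ 2 * ε ^ ((1:ℝ)/2)) * ENNReal.ofReal (ε ^ ((1:ℝ)/2) / 144) := by
        rw [← ENNReal.ofReal_mul (by positivity)]
        congr 1
        linear_combination -144 * hsqrt
    _ ≤ _ := by gcongr; exact hlen
end
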